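/- arXiv:1009.0780 — 4 statements merged into one kernel-verified Lean document; each statement's English description precedes it below -/
import Mathlib

section
/- If f : ℕ → ℝ is a Benford sequence (with f(n) ≠ 0 for all n) and c is a nonzero real number, then the sequence n ↦ c·f(n) is Benford. -/
open Filter Topology

/-- `|x|` begins with the base-`k` digit string of `d`:
there is an integer `m ≥ 0` with `d·k^m ≤ |x| < (d+1)·k^m`. -/
def BeginsWith (k d : ℕ) (x : ℝ) : Prop :=
  ∃ m : ℕ, (d : ℝ) * (k : ℝ) ^ m ≤ |x| ∧ |x| < ((d : ℝ) + 1) * (k : ℝ) ^ m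

open scoped Classical in
/-- The set `S ⊆ ℕ` has natural density `r`. -/
def HasNatDensity (S : Set ℕ) (r : ℝ) : Prop :=
  Tendsto (fun N : ℕ => (((Finset.range N).filter (fun n => n ∈ S)).card : ℝ) / N)
    atTop (𝓝 r)

/-- The sequence `a` is Benford. -/
def IsBenford (a : ℕ → ℝ) : Prop :=
  ∀ k : ℕ, 2 ≤ k → ∀ d : ℕ, 0 < d →
    HasNatDensity {n | BeginsWith k d (a n)} (Real.logb k (d + 1) - Real.logb k d)

open scoped Classical in
/-- The real sequence `x` is uniformly distributed modulo 1. -/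
def UnifDistMod1 (x : ℕ → ℝ) : Prop :=
  ∀ a b : ℝ, 0 ≤ a → a < b → b ≤ 1 →
    Tendsto (fun N : ℕ =>
        (((Finset.Icc 1 N).filter (fun n => Int.fract (x n) ∈ Set.Ico a b)).card : ℝ) / N)
      atTop (𝓝 (b - a))

/-!
Taking base-`k` logarithms, `|x|` begins with the digit string `d` exactly when `|x| ≥ d` and
`Int.fract (logb k |x|)` lies in an interval of length `logb k (d + 1) - logb k d`. For a Benford
sequence the strings of a fixed length have densities summing to `1`, so `|f n|` is large outside
a set of density zero, and refining the digit intervals shows that `Int.fract (logb k |f n|)` is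
equidistributed in `[0, 1)`. Multiplying by `c` rotates this fractional part by `logb k |c|`, which
preserves equidistribution, and reading the digit intervals back shows that `n ↦ c * f n` is Benford.
-/

open Real Set

section NatDensity

open scoped Classical

noncomputable def natCount (S : Set ℕ) (N : ℕ) : ℝ :=
  (((Finset.range N).filter (· ∈ S)).card : ℝ)

variable {S T Z : Set ℕ} {r s : ℝ}

lemma hasNatDensity_iff_natCount :
    HasNatDensity S r ↔ Tendsto (fun N : ℕ => natCount S N / N) atTop (𝓝 r) := Iff.rfl

lemma natCount_mono (h : S ⊆ T) (N : ℕ) : natCount S N ≤ natCount T N := by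
  unfold natCount
  exact_mod_cast Finset.card_le_card (Finset.monotone_filter_right _ fun n _ hn => h hn)

lemma natCount_union_le (S T : Set ℕ) (N : ℕ) :
    natCount (S ∪ T) N ≤ natCount S N + natCount T N := by
  unfold natCount
  exact_mod_cast (Finset.card_le_card fun n hn => by simp_all [and_or_left]).trans
    (Finset.card_union_le _ _)

lemma natCount_union (h : Disjoint S T) (N : ℕ) :
    natCount (S ∪ T) N = natCount S N + natCount T N := by
  unfold natCount
  rw [← Nat.cast_add, ← Finset.card_union_of_disjoint
    (Finset.disjoint_filter.mpr fun _ _ hS hT => Set.disjoint_left.mp h hS hT)]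
  congr 2
  ext n
  simp [and_or_left]

lemma hasNatDensity_empty : HasNatDensity ∅ 0 := by
  simp [HasNatDensity]

lemma hasNatDensity_univ : HasNatDensity univ 1 := by
  refine tendsto_const_nhds.congr' ?_
  filter_upwards [eventually_ne_atTop 0] with N hN
  simp [hN]

namespace HasNatDensity

lemma union (hS : HasNatDensity S r) (hT : HasNatDensity T s) (h : Disjoint S T) :
    HasNatDensity (S ∪ T) (r + s) := by
  rw [hasNatDensity_iff_natCount] at *
  exact (hS.add hT).congr fun N => by rw [natCount_union h, add_div]

lemma diff (hT : HasNatDensity T s) (hS : HasNatDensity S r) (h : S ⊆ T) :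
    HasNatDensity (T \ S) (s - r) := by
  rw [hasNatDensity_iff_natCount] at *
  refine (hT.sub hS).congr fun N => ?_
  have hsplit := natCount_union (disjoint_sdiff_right (s := S) (t := T)) N
  rw [union_sdiff_cancel h] at hsplit
  rw [hsplit, add_div, add_sub_cancel_left]

lemma biUnion {ι : Type*} {s : Finset ι} {S : ι → Set ℕ} {r : ι → ℝ}
    (hS : ∀ i ∈ s, HasNatDensity (S i) (r i)) (hdisj : (s : Set ι).PairwiseDisjoint S) :
    HasNatDensity (⋃ i ∈ s, S i) (∑ i ∈ s, r i) := by
  induction s using Finset.induction_on with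
  | empty => simpa using hasNatDensity_empty
  | insert i s hi ih =>
    rw [Finset.set_biUnion_insert, Finset.sum_insert hi]
    refine (hS i (s.mem_insert_self i)).union
      (ih (fun j hj => hS j (Finset.mem_insert_of_mem hj)) (hdisj.subset (by simp))) ?_
    refine Set.disjoint_iUnion₂_right.mpr fun j hj => hdisj (by simp) (by simp [hj]) ?_
    rintro rfl
    exact hi hj

lemma of_subset_null (hZ : HasNatDensity Z 0) (h : T ⊆ Z) : HasNatDensity T 0 :=
  squeeze_zero (fun _ => div_nonneg (Nat.cast_nonneg _) (Nat.cast_nonneg _))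
    (fun N => div_le_div_of_nonneg_right (natCount_mono h N) (Nat.cast_nonneg _)) hZ

lemma congr_null (hS : HasNatDensity S r) (hZ : HasNatDensity Z 0)
    (hST : S ⊆ T ∪ Z) (hTS : T ⊆ S ∪ Z) : HasNatDensity T r := by
  rw [hasNatDensity_iff_natCount] at *
  have lower := (hS.sub hZ).congr fun N => (sub_div _ _ _).symm
  have upper := (hS.add hZ).congr fun N => (add_div _ _ _).symm
  rw [sub_zero] at lower
  rw [add_zero] at upper
  refine tendsto_of_tendsto_of_tendsto_of_le_of_le lower upper (fun N => ?_) (fun N => ?_)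
  · gcongr
    linarith [(natCount_mono hST N).trans (natCount_union_le T Z N)]
  · gcongr
    exact (natCount_mono hTS N).trans (natCount_union_le S Z N)

lemma of_forall_approx
    (h : ∀ ε > 0, ∃ (S₁ S₂ : Set ℕ) (r₁ r₂ : ℝ), S₁ ⊆ S ∧ S ⊆ S₂ ∧
      HasNatDensity S₁ r₁ ∧ HasNatDensity S₂ r₂ ∧ r - ε ≤ r₁ ∧ r₂ ≤ r + ε) :
    HasNatDensity S r := by
  rw [hasNatDensity_iff_natCount, Metric.tendsto_atTop]
  intro ε hε
  obtain ⟨S₁, S₂, r₁, r₂, h₁, h₂, hS₁, hS₂, hr₁, hr₂⟩ := h (ε / 2) (by positivity)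
  rw [hasNatDensity_iff_natCount] at hS₁ hS₂
  obtain ⟨N₁, hN₁⟩ := Metric.tendsto_atTop.mp hS₁ (ε / 2) (by positivity)
  obtain ⟨N₂, hN₂⟩ := Metric.tendsto_atTop.mp hS₂ (ε / 2) (by positivity)
  refine ⟨max N₁ N₂, fun N hN => ?_⟩
  have e₁ := hN₁ N (le_of_max_le_left hN)
  have e₂ := hN₂ N (le_of_max_le_right hN)
  have c₁ : natCount S₁ N / N ≤ natCount S N / N := by gcongr; exact natCount_mono h₁ N
  have c₂ : natCount S N / N ≤ natCount S₂ N / N := by gcongr; exact natCount_mono h₂ N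
  rw [Real.dist_eq, abs_lt] at e₁ e₂ ⊢
  constructor <;> linarith

end HasNatDensity

lemma hasNatDensity_preimage_Ico_of_monotone {g t : ℕ → ℝ} (ht : Monotone t) {p q : ℕ}
    (hpq : p ≤ q)
    (h : ∀ i, p ≤ i → i < q → HasNatDensity (g ⁻¹' Ico (t i) (t (i + 1))) (t (i + 1) - t i)) :
    HasNatDensity (g ⁻¹' Ico (t p) (t q)) (t q - t p) := by
  induction q, hpq using Nat.le_induction with
  | base => simpa using hasNatDensity_empty
  | succ q hpq ih =>
    rw [← Ico_union_Ico_eq_Ico (ht hpq) (ht q.le_succ), preimage_union,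
      show t (q + 1) - t p = (t q - t p) + (t (q + 1) - t q) by ring]
    exact (ih fun i hpi hiq => h i hpi (by omega)).union (h q hpq q.lt_succ_self)
      (Ico_disjoint_Ico_same.preimage g)

end NatDensity

lemma logb_natCast_monotone {b : ℝ} (hb : 1 < b) : Monotone fun n : ℕ => logb b n := by
  intro m n hmn
  rcases Nat.eq_zero_or_pos m with rfl | hm
  · simpa [logb] using div_nonneg (log_natCast_nonneg n) (log_nonneg hb.le)
  · exact logb_le_logb_of_le hb (by exact_mod_cast hm) (by exact_mod_cast hmn)

lemma logb_add_one_sub_logb_le {b x : ℝ} (hb : 1 < b) (hx : 0 < x) :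
    logb b (x + 1) - logb b x ≤ 1 / (x * log b) := by
  have hlogb : 0 < log b := log_pos hb
  calc logb b (x + 1) - logb b x = log ((x + 1) / x) / log b := by
        rw [← logb_div (by positivity) hx.ne']; rfl
    _ ≤ ((x + 1) / x - 1) / log b := by
        gcongr
        exact log_le_sub_one_of_pos (by positivity)
    _ = 1 / (x * log b) := by field_simp; ring

lemma logb_add_one_le_natLog_add_one {k : ℕ} (hk : 1 < k) (d : ℕ) :
    logb k ((d : ℝ) + 1) ≤ Nat.log k d + 1 := by
  have hk' : (1 : ℝ) < k := by exact_mod_cast hk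
  have hpow : (d : ℝ) + 1 ≤ (k : ℝ) ^ (Nat.log k d + 1) := by
    exact_mod_cast Nat.lt_pow_succ_log_self hk d
  calc logb k ((d : ℝ) + 1) ≤ logb k ((k : ℝ) ^ (Nat.log k d + 1)) :=
        logb_le_logb_of_le hk' (by positivity) hpow
    _ = Nat.log k d + 1 := by rw [logb_pow, logb_self_eq_one hk']; push_cast; ring

lemma exists_nat_mem_Ico_add_iff {a b L : ℝ} {j : ℕ} (hja : (j : ℝ) ≤ a) (hbj : b ≤ j + 1) :
    (∃ m : ℕ, L ∈ Ico (a + m) (b + m)) ↔ a ≤ L ∧ Int.fract L ∈ Ico (a - j) (b - j) := by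
  simp only [mem_Ico, ← Int.self_sub_floor]
  constructor
  · rintro ⟨m, hlo, hhi⟩
    have hfloor : ⌊L⌋ = ((j + m : ℕ) : ℤ) := by
      rw [Int.floor_eq_iff]; push_cast; constructor <;> linarith
    rw [hfloor]
    push_cast
    refine ⟨?_, ?_, ?_⟩ <;> linarith [(Nat.cast_nonneg m : (0 : ℝ) ≤ m)]
  · rintro ⟨haL, hlo, hhi⟩
    have hjL : (j : ℤ) ≤ ⌊L⌋ := Int.le_floor.mpr (by push_cast; linarith)
    obtain ⟨m, hm⟩ : ∃ m : ℕ, ⌊L⌋ = ((j + m : ℕ) : ℤ) := ⟨(⌊L⌋ - j).toNat, by omega⟩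
    rw [hm] at hlo hhi
    push_cast at hlo hhi
    exact ⟨m, by linarith, by linarith⟩

lemma beginsWith_iff_exists_logb {k d : ℕ} {x : ℝ} (hk : 1 < k) (hd : 0 < d) (hx : x ≠ 0) :
    BeginsWith k d x ↔ ∃ m : ℕ, logb k |x| ∈ Ico (logb k d + m) (logb k ((d : ℝ) + 1) + m) := by
  have hk' : (1 : ℝ) < k := by exact_mod_cast hk
  have hpow (y : ℝ) (hy : 0 < y) (m : ℕ) : (k : ℝ) ^ (logb k y + m) = y * (k : ℝ) ^ m := by
    rw [rpow_add (by positivity), rpow_logb (by positivity) hk'.ne' hy, rpow_natCast]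
  refine exists_congr fun m => ?_
  rw [mem_Ico, le_logb_iff_rpow_le hk' (abs_pos.mpr hx), logb_lt_iff_lt_rpow hk' (abs_pos.mpr hx),
    hpow _ (by exact_mod_cast hd), hpow _ (by positivity)]

/-- The possible values of `Int.fract (logb k |x|)` for the numbers `x` whose base-`k` expansion
begins with the digits of `d`. -/
noncomputable def digitInterval (k d : ℕ) : Set ℝ :=
  Ico (logb k d - Nat.log k d) (logb k ((d : ℝ) + 1) - Nat.log k d)

lemma beginsWith_iff_mem_digitInterval {k d : ℕ} {x : ℝ} (hk : 1 < k) (hd : 0 < d)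
    (hx : x ≠ 0) :
    BeginsWith k d x ↔ (d : ℝ) ≤ |x| ∧ Int.fract (logb k |x|) ∈ digitInterval k d := by
  rw [beginsWith_iff_exists_logb hk hd hx,
    exists_nat_mem_Ico_add_iff (natLog_le_logb d k) (logb_add_one_le_natLog_add_one hk d),
    logb_le_logb (by exact_mod_cast hk) (by exact_mod_cast hd) (abs_pos.mpr hx)]
  rfl

lemma digitInterval_of_mem_Ico {k d j : ℕ} (hd : d ∈ Finset.Ico (k ^ j) (k ^ (j + 1))) :
    digitInterval k d = Ico (logb k d - j) (logb k ((d + 1 : ℕ) : ℝ) - j) := by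
  rw [Finset.mem_Ico] at hd
  rw [digitInterval, Nat.log_eq_of_pow_le_of_lt_pow hd.1 hd.2]
  push_cast
  rfl

lemma pairwiseDisjoint_digitInterval {k : ℕ} (hk : 1 < k) (j : ℕ) :
    (Finset.Ico (k ^ j) (k ^ (j + 1)) : Set ℕ).PairwiseDisjoint (digitInterval k) := by
  intro d hd d' hd' hne
  rw [Function.onFun, digitInterval_of_mem_Ico hd, digitInterval_of_mem_Ico hd']
  have hmono : Monotone fun i : ℕ => logb k i - j :=
    fun _ _ h => sub_le_sub_right (logb_natCast_monotone (by exact_mod_cast hk) h) _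
  exact hmono.pairwise_disjoint_on_Ico_succ hne

lemma hasNatDensity_beginsWith_iff {a : ℕ → ℝ} {k d : ℕ} {r : ℝ} (hk : 1 < k) (hd : 0 < d)
    (ha : ∀ n, a n ≠ 0) (hsmall : HasNatDensity {n | |a n| < d} 0) :
    HasNatDensity {n | BeginsWith k d (a n)} r ↔
      HasNatDensity {n | Int.fract (logb k |a n|) ∈ digitInterval k d} r := by
  have hsub : {n | BeginsWith k d (a n)} ⊆ {n | Int.fract (logb k |a n|) ∈ digitInterval k d} ∪
      {n | |a n| < d} := fun n hn =>
    Or.inl ((beginsWith_iff_mem_digitInterval hk hd (ha n)).mp hn).2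
  have hsup : {n | Int.fract (logb k |a n|) ∈ digitInterval k d} ⊆ {n | BeginsWith k d (a n)} ∪
      {n | |a n| < d} := by
    intro n hn
    by_cases hlt : |a n| < d
    · exact Or.inr hlt
    · exact Or.inl ((beginsWith_iff_mem_digitInterval hk hd (ha n)).mpr ⟨not_lt.mp hlt, hn⟩)
  exact ⟨fun h => h.congr_null hsmall hsub hsup, fun h => h.congr_null hsmall hsup hsub⟩

lemma fract_add_eq_of_mem_Ico {u β : ℝ} (hu : u ∈ Ico 0 1) (hβ : β ∈ Ico 0 1) :
    (u + β < 1 ∧ Int.fract (u + β) = u + β) ∨ (1 ≤ u + β ∧ Int.fract (u + β) = u + β - 1) := by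
  rcases lt_or_ge (u + β) 1 with hlt | hge
  · exact Or.inl ⟨hlt, Int.fract_eq_self.mpr ⟨by linarith [hu.1, hβ.1], hlt⟩⟩
  · exact Or.inr ⟨hge, Int.fract_eq_iff.mpr ⟨by linarith, by linarith [hu.2, hβ.2], 1, by simp⟩⟩

/-- Equidistribution modulo `1`, measured by `HasNatDensity` (which counts over `range N`,
whereas `UnifDistMod1` counts over `Icc 1 N`). -/
def UniformFractDensity (x : ℕ → ℝ) : Prop :=
  ∀ a b : ℝ, 0 ≤ a → a ≤ b → b ≤ 1 →
    HasNatDensity ((fun n => Int.fract (x n)) ⁻¹' Ico a b) (b - a)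

namespace UniformFractDensity

variable {x : ℕ → ℝ}

lemma of_Ico_zero
    (h : ∀ b, 0 ≤ b → b ≤ 1 → HasNatDensity ((fun n => Int.fract (x n)) ⁻¹' Ico 0 b) b) :
    UniformFractDensity x := by
  intro a b ha hab hb
  have hdiff := (h b (ha.trans hab) hb).diff (h a ha (hab.trans hb))
    (preimage_mono (Ico_subset_Ico_right hab))
  have hIco : Ico 0 b \ Ico 0 a = Ico a b := by
    ext y
    simp only [Set.mem_sdiff, mem_Ico]
    grind
  rwa [← preimage_sdiff, hIco] at hdiff

lemma add_const (h : UniformFractDensity x) (γ : ℝ) : UniformFractDensity fun n => x n + γ := by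
  refine of_Ico_zero fun b hb0 hb1 => ?_
  set β := Int.fract γ
  have hβ : β ∈ Ico 0 1 := ⟨Int.fract_nonneg γ, Int.fract_lt_one γ⟩
  have hfract (n : ℕ) : Int.fract (x n + γ) = Int.fract (Int.fract (x n) + β) :=
    Int.fract_eq_fract.mpr ⟨⌊x n⌋ + ⌊γ⌋, by simp only [β, ← Int.self_sub_floor]; push_cast; ring⟩
  have hu (n : ℕ) : Int.fract (x n) ∈ Ico 0 1 := ⟨Int.fract_nonneg _, Int.fract_lt_one _⟩
  rcases le_or_gt b β with hbβ | hβb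
  · have hwrap := h (1 - β) (1 - β + b) (by linarith [hβ.2]) (by linarith) (by linarith)
    rw [add_sub_cancel_left] at hwrap
    convert hwrap using 1
    ext n
    simp only [mem_preimage, hfract]
    rcases fract_add_eq_of_mem_Ico (hu n) hβ with ⟨_, e⟩ | ⟨_, e⟩ <;> rw [e] <;>
      simp only [mem_Ico] at * <;> grind
  · have hsplit := (h 0 (b - β) le_rfl (by linarith) (by linarith [hβ.1])).union
      (h (1 - β) 1 (by linarith [hβ.2]) (by linarith [hβ.1]) le_rfl)
      ((Ico_disjoint_Ico_same.mono_left (Ico_subset_Ico_right (by linarith))).preimage _)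
    rw [show b - β - 0 + (1 - (1 - β)) = b by ring, ← preimage_union] at hsplit
    convert hsplit using 1
    ext n
    simp only [mem_preimage, hfract]
    rcases fract_add_eq_of_mem_Ico (hu n) hβ with ⟨_, e⟩ | ⟨_, e⟩ <;> rw [e] <;>
      simp only [mem_Ico, mem_union] at * <;> grind

lemma hasNatDensity_digitInterval (h : UniformFractDensity x) {k d : ℕ} (hk : 1 < k) (hd : 0 < d) :
    HasNatDensity {n | Int.fract (x n) ∈ digitInterval k d}
      (logb k ((d : ℝ) + 1) - logb k d) := by
  have hk' : (1 : ℝ) < k := by exact_mod_cast hk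
  have hd' : (0 : ℝ) < d := by exact_mod_cast hd
  have hdensity := h (logb k d - Nat.log k d) (logb k ((d : ℝ) + 1) - Nat.log k d)
    (sub_nonneg.mpr (natLog_le_logb d k))
    (sub_le_sub_right (logb_le_logb_of_le hk' hd' (by linarith)) _)
    (by linarith [logb_add_one_le_natLog_add_one hk d])
  rwa [sub_sub_sub_cancel_right] at hdensity

end UniformFractDensity

section Benford

variable {f : ℕ → ℝ} {k : ℕ}

lemma IsBenford.hasNatDensity_biUnion_beginsWith (hB : IsBenford f) (hf : ∀ n, f n ≠ 0)
    (hk : 2 ≤ k) (j : ℕ) :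
    HasNatDensity (⋃ d ∈ Finset.Ico (k ^ j) (k ^ (j + 1)), {n | BeginsWith k d (f n)}) 1 := by
  have hk' : (1 : ℝ) < k := by exact_mod_cast hk
  have hpos {d : ℕ} (hd : d ∈ Finset.Ico (k ^ j) (k ^ (j + 1))) : 0 < d :=
    (pow_pos (by omega) j).trans_le (Finset.mem_Ico.mp hd).1
  have hsub {d : ℕ} (hd : d ∈ Finset.Ico (k ^ j) (k ^ (j + 1))) :
      {n | BeginsWith k d (f n)} ⊆ (fun n => Int.fract (logb k |f n|)) ⁻¹' digitInterval k d :=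
    fun n hn => ((beginsWith_iff_mem_digitInterval hk (hpos hd) (hf n)).mp hn).2
  have hdisj : (Finset.Ico (k ^ j) (k ^ (j + 1)) : Set ℕ).PairwiseDisjoint
      fun d => {n | BeginsWith k d (f n)} := fun d hd d' hd' hne =>
    ((pairwiseDisjoint_digitInterval hk j hd hd' hne).preimage _).mono (hsub hd) (hsub hd')
  have hsum : ∑ d ∈ Finset.Ico (k ^ j) (k ^ (j + 1)), (logb k ((d : ℝ) + 1) - logb k d) = 1 := by
    have htelescope := Finset.sum_Ico_sub (fun i : ℕ => logb k (i : ℝ))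
      (Nat.pow_le_pow_right (by omega : 0 < k) j.le_succ)
    push_cast at htelescope
    rw [htelescope, logb_pow, logb_pow, logb_self_eq_one hk']
    push_cast; ring
  exact hsum ▸ HasNatDensity.biUnion (fun d hd => hB k hk d (hpos hd)) hdisj

lemma IsBenford.hasNatDensity_abs_lt (hB : IsBenford f) (hf : ∀ n, f n ≠ 0) (hk : 2 ≤ k)
    (M : ℝ) : HasNatDensity {n | |f n| < M} 0 := by
  obtain ⟨j, hj⟩ := pow_unbounded_of_one_lt M (by exact_mod_cast hk : (1 : ℝ) < k)
  have hcompl := hasNatDensity_univ.diff (hB.hasNatDensity_biUnion_beginsWith hf hk j)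
    (subset_univ _)
  rw [sub_self] at hcompl
  refine hcompl.of_subset_null fun n hn => ⟨trivial, fun hmem => ?_⟩
  obtain ⟨d, hd, hbegins⟩ := mem_iUnion₂.mp hmem
  have hjd := (Finset.mem_Ico.mp hd).1
  have hdle := ((beginsWith_iff_mem_digitInterval hk ((pow_pos (by omega) j).trans_le hjd)
    (hf n)).mp hbegins).1
  have hjd' : (k : ℝ) ^ j ≤ d := by exact_mod_cast hjd
  exact absurd hn (not_lt.mpr (hj.le.trans (hjd'.trans hdle)))

lemma IsBenford.hasNatDensity_fract_logb_Ico_zero (hB : IsBenford f) (hf : ∀ n, f n ≠ 0)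
    (hk : 2 ≤ k) {j d : ℕ} (hjd : k ^ j ≤ d) (hdj : d ≤ k ^ (j + 1)) :
    HasNatDensity ((fun n => Int.fract (logb k |f n|)) ⁻¹' Ico 0 (logb k d - j))
      (logb k d - j) := by
  have hk' : (1 : ℝ) < k := by exact_mod_cast hk
  have hmono : Monotone fun i : ℕ => logb k i - j :=
    fun _ _ h => sub_le_sub_right (logb_natCast_monotone hk' h) _
  have hbase : logb k ((k ^ j : ℕ) : ℝ) - j = 0 := by
    rw [Nat.cast_pow, logb_pow, logb_self_eq_one hk', mul_one, sub_self]
  have htelescope := hasNatDensity_preimage_Ico_of_monotone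
    (g := fun n => Int.fract (logb k |f n|)) hmono hjd fun i hji hid => by
      have hi : 0 < i := (pow_pos (by omega) j).trans_le hji
      rw [← digitInterval_of_mem_Ico (Finset.mem_Ico.mpr ⟨hji, hid.trans_le hdj⟩),
        sub_sub_sub_cancel_right, Nat.cast_succ]
      exact (hasNatDensity_beginsWith_iff hk hi hf (hB.hasNatDensity_abs_lt hf hk i)).mp
        (hB k hk i hi)
  rwa [hbase, sub_zero] at htelescope

lemma IsBenford.uniformFractDensity_logb (hB : IsBenford f) (hf : ∀ n, f n ≠ 0) (hk : 2 ≤ k) :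
    UniformFractDensity fun n => logb k |f n| := by
  have hk' : (1 : ℝ) < k := by exact_mod_cast hk
  refine UniformFractDensity.of_Ico_zero fun b hb0 hb1 => ?_
  rcases hb1.lt_or_eq with hb1 | rfl
  swap
  · have huniv : (fun n => Int.fract (logb k |f n|)) ⁻¹' Ico 0 1 = univ :=
      eq_univ_of_forall fun n => ⟨Int.fract_nonneg _, Int.fract_lt_one _⟩
    exact huniv ▸ hasNatDensity_univ
  refine HasNatDensity.of_forall_approx fun ε hε => ?_
  obtain ⟨j, hj⟩ := pow_unbounded_of_one_lt (1 / (ε * log k)) hk'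
  -- the `(j + 1)`-digit string `d` with `logb k d ≤ j + b < logb k (d + 1)`
  set d := ⌊(k : ℝ) ^ ((j : ℝ) + b)⌋₊
  have hjd : k ^ j ≤ d := Nat.le_floor <| by
    rw [Nat.cast_pow, ← rpow_natCast]
    exact rpow_le_rpow_of_exponent_le hk'.le (by linarith)
  have hdj : d < k ^ (j + 1) := (Nat.floor_lt (by positivity)).mpr <| by
    rw [Nat.cast_pow, ← rpow_natCast]
    exact rpow_lt_rpow_of_exponent_lt hk' (by push_cast; linarith)
  have hkj : (k : ℝ) ^ j ≤ d := by exact_mod_cast hjd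
  have hd0 : (0 : ℝ) < d := (pow_pos (by positivity) j).trans_le hkj
  have hlo : logb k d ≤ j + b := (logb_le_iff_le_rpow hk' hd0).mpr (Nat.floor_le (by positivity))
  have hhi : j + b < logb k ((d : ℝ) + 1) :=
    (lt_logb_iff_rpow_lt hk' (by positivity)).mpr (Nat.lt_floor_add_one _)
  have hgap : logb k ((d : ℝ) + 1) - logb k d < ε := by
    refine (logb_add_one_sub_logb_le hk' hd0).trans_lt ?_
    have hlog : 0 < log k := log_pos hk'
    rw [div_lt_iff₀ (by positivity)] at hj ⊢
    nlinarith [mul_le_mul_of_nonneg_right hkj (by positivity : (0 : ℝ) ≤ ε * log k)]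
  have hupper := hB.hasNatDensity_fract_logb_Ico_zero hf hk (hjd.trans d.le_succ) hdj
  push_cast at hupper
  exact ⟨_, _, _, _, preimage_mono (Ico_subset_Ico_right (by linarith)),
    preimage_mono (Ico_subset_Ico_right (by linarith)),
    hB.hasNatDensity_fract_logb_Ico_zero hf hk hjd hdj.le, hupper, by linarith, by linarith⟩

end Benford

/-- If `f` is Benford and `c ≠ 0`, then `n ↦ c·f(n)` is Benford. -/
theorem isBenford_const_mul (f : ℕ → ℝ) (hf : ∀ n, f n ≠ 0)
    (c : ℝ) (hc : c ≠ 0) (hB : IsBenford f) :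
    IsBenford (fun n => c * f n) := by
  intro k hk d hd
  have hcf (n : ℕ) : c * f n ≠ 0 := mul_ne_zero hc (hf n)
  have hsmall : HasNatDensity {n | |c * f n| < d} 0 := by
    simpa only [abs_mul, ← lt_div_iff₀' (abs_pos.mpr hc)] using
      hB.hasNatDensity_abs_lt hf hk (d / |c|)
  have hshift : UniformFractDensity fun n => logb k |c * f n| := by
    simpa only [abs_mul, logb_mul (abs_ne_zero.mpr hc) (abs_ne_zero.mpr (hf _)), add_comm] using
      (hB.uniformFractDensity_logb hf hk).add_const (logb k |c|)
  exact (hasNatDensity_beginsWith_iff hk hd hcf hsmall).mpr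
    (hshift.hasNatDensity_digitInterval hk hd)
end

section
/- Let f, g : ℕ → ℝ be sequences with f(n) ≠ 0 and g(n) ≠ 0 for all n, and suppose f(n) ~ g(n), i.e., lim_{n→∞} f(n)/g(n) = 1. If f is Benford, then g is Benford. -/
open Filter Topology

/-!
If `x` begins with a digit string `d'` lying well inside the block `[d k^j, (d+1) k^j)`, then
every `y` with `x / y` close enough to `1` begins with `d`. Summing the Benford frequencies of
these `d'` shows that the `d`-set of `g` has lower density at least nearly
`log_k (d+1) - log_k d`. The matching upper bound is free: the digit strings of one length give
disjoint sets whose Benford frequencies add up to `1`, so lower bounds for all of them force each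
density.
-/

open Finset

open scoped Classical in
noncomputable def partialDensity (S : Set ℕ) (N : ℕ) : ℝ :=
  (((Finset.range N).filter (fun n => n ∈ S)).card : ℝ) / N

theorem partialDensity_le_one (S : Set ℕ) (N : ℕ) : partialDensity S N ≤ 1 := by
  classical
  refine div_le_one_of_le₀ ?_ N.cast_nonneg
  exact_mod_cast (card_filter_le _ _).trans (card_range N).le

theorem partialDensity_le_add_of_forall_ge {S T : Set ℕ} {n₀ : ℕ}
    (hST : ∀ n, n₀ ≤ n → n ∈ S → n ∈ T) (N : ℕ) :
    partialDensity S N ≤ partialDensity T N + n₀ / N := by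
  classical
  unfold partialDensity
  rw [← add_div]
  gcongr
  have hsub : (range N).filter (· ∈ S) ⊆ (range N).filter (· ∈ T) ∪ range n₀ := by
    intro n
    simp only [mem_filter, mem_union, mem_range]
    intro ⟨hn, hnS⟩
    by_cases h : n < n₀
    · exact Or.inr h
    · exact Or.inl ⟨hn, hST n (not_lt.1 h) hnS⟩
  exact_mod_cast (card_le_card hsub).trans ((card_union_le _ _).trans_eq (by rw [card_range]))

theorem partialDensity_biUnion {ι : Type*} {s : Finset ι} {S : ι → Set ℕ}
    (hS : (s : Set ι).PairwiseDisjoint S) (N : ℕ) :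
    partialDensity (⋃ i ∈ s, S i) N = ∑ i ∈ s, partialDensity (S i) N := by
  classical
  unfold partialDensity
  rw [← sum_div]
  congr 1
  have hunion : (range N).filter (· ∈ ⋃ i ∈ s, S i) =
      s.biUnion fun i => (range N).filter (· ∈ S i) := by
    ext n
    simp only [mem_filter, mem_range, Set.mem_iUnion, mem_biUnion, exists_prop]
    aesop
  rw [hunion, card_biUnion]
  · push_cast
    rfl
  · intro i hi j hj hij
    exact disjoint_filter_filter' _ _ (hS hi hj hij)

theorem HasNatDensity.biUnion_s4 {ι : Type*} {s : Finset ι} {S : ι → Set ℕ} {r : ι → ℝ}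
    (hS : (s : Set ι).PairwiseDisjoint S) (h : ∀ i ∈ s, HasNatDensity (S i) (r i)) :
    HasNatDensity (⋃ i ∈ s, S i) (∑ i ∈ s, r i) := by
  change Tendsto (partialDensity _) atTop _
  simp_rw [funext (partialDensity_biUnion hS)]
  exact tendsto_finsetSum s h

theorem HasNatDensity.eventually_lt_partialDensity {S T : Set ℕ} {r r' : ℝ}
    (hS : HasNatDensity S r) (hST : ∀ᶠ n in atTop, n ∈ S → n ∈ T) (hr : r' < r) :
    ∀ᶠ N in atTop, r' < partialDensity T N := by
  obtain ⟨n₀, hn₀⟩ := eventually_atTop.1 hST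
  have hS' : Tendsto (fun N : ℕ => partialDensity S N - n₀ / N) atTop (𝓝 r) := by
    have h : Tendsto (partialDensity S) atTop (𝓝 r) := hS
    simpa only [sub_zero] using h.sub (tendsto_const_div_atTop_nhds_zero_nat (n₀ : ℝ))
  filter_upwards [hS'.eventually (lt_mem_nhds hr)] with N hN
  linarith [partialDensity_le_add_of_forall_ge hn₀ N]

theorem tendsto_of_forall_lt_eventually_lt_of_sum_le {α ι : Type*} {l : Filter α}
    {s : Finset ι} {u : ι → α → ℝ} {r : ι → ℝ}
    (hsum : ∀ᶠ x in l, ∑ i ∈ s, u i x ≤ ∑ i ∈ s, r i)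
    (hlow : ∀ i ∈ s, ∀ r' < r i, ∀ᶠ x in l, r' < u i x) {i : ι} (hi : i ∈ s) :
    Tendsto (u i) l (𝓝 (r i)) := by
  classical
  refine tendsto_order.2 ⟨hlow i hi, fun a ha => ?_⟩
  -- once every other `u j` exceeds `r j - ε`, at most `r i + (#s - 1) ε` is left for `u i`
  set ε := (a - r i) / #s
  have hs : (0 : ℝ) < #s := by exact_mod_cast card_pos.2 ⟨i, hi⟩
  have hε : 0 < ε := div_pos (sub_pos.2 ha) hs
  have hall : ∀ᶠ x in l, ∀ j ∈ s.erase i, r j - ε < u j x :=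
    (eventually_all_finset _).2 fun j hj => hlow j (mem_of_mem_erase hj) _ (sub_lt_self _ hε)
  filter_upwards [hsum, hall] with x hx hxall
  have hrest : ∑ j ∈ s.erase i, (r j - ε) ≤ ∑ j ∈ s.erase i, u j x :=
    sum_le_sum fun j hj => (hxall j hj).le
  rw [sum_sub_distrib, sum_const, card_erase_of_mem hi, nsmul_eq_mul] at hrest
  rw [← add_sum_erase s _ hi, ← add_sum_erase s _ hi] at hx
  have hcard : ((#s - 1 : ℕ) : ℝ) = #s - 1 := by
    rw [Nat.cast_sub (card_pos.2 ⟨i, hi⟩), Nat.cast_one]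
  have haε : #s * ε = a - r i := mul_div_cancel₀ _ hs.ne'
  rw [hcard] at hrest
  linarith

theorem pow_le_abs_and_abs_lt_pow {k d t m : ℕ} {x : ℝ} (hd : d ∈ Ico (k ^ t) (k ^ (t + 1)))
    (hl : (d : ℝ) * (k : ℝ) ^ m ≤ |x|) (hu : |x| < ((d : ℝ) + 1) * (k : ℝ) ^ m) :
    (k : ℝ) ^ (t + m) ≤ |x| ∧ |x| < (k : ℝ) ^ (t + m + 1) := by
  rw [mem_Ico] at hd
  have ht₁ : ((k ^ t : ℕ) : ℝ) ≤ d := by exact_mod_cast hd.1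
  have ht₂ : (d : ℝ) + 1 ≤ ((k ^ (t + 1) : ℕ) : ℝ) := by exact_mod_cast hd.2
  push_cast at ht₁ ht₂
  constructor
  · calc (k : ℝ) ^ (t + m) = (k : ℝ) ^ t * (k : ℝ) ^ m := pow_add _ _ _
      _ ≤ d * (k : ℝ) ^ m := by gcongr
      _ ≤ |x| := hl
  · calc |x| < ((d : ℝ) + 1) * (k : ℝ) ^ m := hu
      _ ≤ (k : ℝ) ^ (t + 1) * (k : ℝ) ^ m := by gcongr
      _ = (k : ℝ) ^ (t + m + 1) := by ring

theorem BeginsWith.eq_of_mem_Ico {k t d₁ d₂ : ℕ} {x : ℝ} (hk : 1 < k)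
    (h₁ : d₁ ∈ Ico (k ^ t) (k ^ (t + 1))) (h₂ : d₂ ∈ Ico (k ^ t) (k ^ (t + 1)))
    (hx₁ : BeginsWith k d₁ x) (hx₂ : BeginsWith k d₂ x) : d₁ = d₂ := by
  obtain ⟨m₁, hl₁, hu₁⟩ := hx₁
  obtain ⟨m₂, hl₂, hu₂⟩ := hx₂
  obtain ⟨hp₁, hq₁⟩ := pow_le_abs_and_abs_lt_pow h₁ hl₁ hu₁
  obtain ⟨hp₂, hq₂⟩ := pow_le_abs_and_abs_lt_pow h₂ hl₂ hu₂
  have hk' : (1 : ℝ) < k := by exact_mod_cast hk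
  have hm₁ := (pow_lt_pow_iff_right₀ hk').1 (hp₁.trans_lt hq₂)
  have hm₂ := (pow_lt_pow_iff_right₀ hk').1 (hp₂.trans_lt hq₁)
  obtain rfl : m₁ = m₂ := by omega
  have hkm : (0 : ℝ) < (k : ℝ) ^ m₁ := by positivity
  have hd₁ : (d₁ : ℝ) < d₂ + 1 := lt_of_mul_lt_mul_right (hl₁.trans_lt hu₂) hkm.le
  have hd₂ : (d₂ : ℝ) < d₁ + 1 := lt_of_mul_lt_mul_right (hl₂.trans_lt hu₁) hkm.le
  norm_cast at hd₁ hd₂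
  omega

theorem pairwiseDisjoint_beginsWith {k : ℕ} (hk : 1 < k) (a : ℕ → ℝ) (t : ℕ) :
    ((Ico (k ^ t) (k ^ (t + 1)) : Finset ℕ) : Set ℕ).PairwiseDisjoint
      fun d => {n | BeginsWith k d (a n)} :=
  fun _ h₁ _ h₂ hne =>
    Set.disjoint_left.2 fun _ hx₁ hx₂ => hne (hx₁.eq_of_mem_Ico hk h₁ h₂ hx₂)

theorem BeginsWith.of_abs_div_sub_one_lt {k d d' j : ℕ} {δ x y : ℝ}
    (hlo : (1 + δ) * (d * (k : ℝ) ^ j) ≤ d')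
    (hhi : (d' : ℝ) + 1 ≤ (1 - δ) * ((d + 1) * (k : ℝ) ^ j))
    (hx : BeginsWith k d' x) (hxy : |x / y - 1| < δ) : BeginsWith k d y := by
  obtain ⟨m, hl, hu⟩ := hx
  obtain ⟨hq₁, hq₂⟩ := abs_sub_lt_iff.1 hxy
  have hδ : 0 < 1 - δ := by
    by_contra h
    have := mul_nonpos_of_nonpos_of_nonneg (not_lt.1 h)
      (by positivity : (0 : ℝ) ≤ (d + 1) * (k : ℝ) ^ j)
    linarith [d'.cast_nonneg (α := ℝ)]
  have hpos : 0 < x / y := by linarith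
  have hy : y ≠ 0 := by
    rintro rfl
    simp at hpos
  have hxy' : |x| = x / y * |y| := by
    rw [← abs_of_pos hpos, ← abs_mul, div_mul_cancel₀ _ hy]
  have hkm : (0 : ℝ) ≤ (k : ℝ) ^ m := by positivity
  refine ⟨j + m, le_of_mul_le_mul_left ?_ (by linarith : 0 < 1 + δ),
    lt_of_mul_lt_mul_left ?_ hδ.le⟩
  · calc (1 + δ) * (d * (k : ℝ) ^ (j + m))
          = (1 + δ) * (d * (k : ℝ) ^ j) * (k : ℝ) ^ m := by ring
      _ ≤ d' * (k : ℝ) ^ m := by gcongr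
      _ ≤ x / y * |y| := hxy' ▸ hl
      _ ≤ (1 + δ) * |y| := by gcongr; linarith
  · calc (1 - δ) * |y| < x / y * |y| :=
          mul_lt_mul_of_pos_right (by linarith) (abs_pos.2 hy)
      _ < (d' + 1) * (k : ℝ) ^ m := hxy' ▸ hu
      _ ≤ (1 - δ) * ((d + 1) * (k : ℝ) ^ j) * (k : ℝ) ^ m := by gcongr
      _ = (1 - δ) * ((d + 1) * (k : ℝ) ^ (j + m)) := by ring

theorem sum_Ico_logb_succ_sub_logb (b : ℝ) {m n : ℕ} (h : m ≤ n) :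
    ∑ d ∈ Ico m n, (Real.logb b ((d : ℝ) + 1) - Real.logb b d) =
      Real.logb b n - Real.logb b m := by
  simpa only [Nat.cast_add, Nat.cast_one] using sum_Ico_sub (fun i : ℕ => Real.logb b i) h

theorem tendsto_logb_sub_logb {k d : ℕ} (hk : 1 < k) (hd : 0 < d) :
    Tendsto (fun j : ℕ =>
        Real.logb k (((d + 1) * k ^ j - 1 : ℕ) : ℝ) - Real.logb k ((d * k ^ j + 1 : ℕ) : ℝ))
      atTop (𝓝 (Real.logb k ((d : ℝ) + 1) - Real.logb k d)) := by
  have hk' : (1 : ℝ) < k := by exact_mod_cast hk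
  have hinv : Tendsto (fun j : ℕ => ((k : ℝ) ^ j)⁻¹) atTop (𝓝 0) :=
    tendsto_inv_atTop_zero.comp (tendsto_pow_atTop_atTop_of_one_lt hk')
  have htop := (tendsto_const_nhds (x := (d : ℝ) + 1)).sub hinv |>.logb (b := k)
    (by rw [sub_zero]; positivity)
  have hbot := (tendsto_const_nhds (x := (d : ℝ))).add hinv |>.logb (b := k)
    (by rw [add_zero]; exact_mod_cast hd.ne')
  rw [sub_zero] at htop
  rw [add_zero] at hbot
  -- dividing both arguments by `k ^ j` does not change the difference of logarithms
  refine (htop.sub hbot).congr fun j => ?_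
  have hkj : (0 : ℝ) < (k : ℝ) ^ j := by positivity
  have hkj₁ : 1 ≤ (d + 1) * k ^ j := Nat.one_le_iff_ne_zero.2 (by positivity)
  have hA₀ : (((d + 1) * k ^ j - 1 : ℕ) : ℝ) ≠ 0 := by
    have : 2 * 1 ≤ (d + 1) * k ^ j := Nat.mul_le_mul (by omega) (Nat.one_le_pow _ _ (by omega))
    exact_mod_cast (by omega : (d + 1) * k ^ j - 1 ≠ 0)
  have e₁ : (d : ℝ) + 1 - ((k : ℝ) ^ j)⁻¹ =
      (((d + 1) * k ^ j - 1 : ℕ) : ℝ) / (k : ℝ) ^ j := by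
    rw [Nat.cast_sub hkj₁]
    push_cast
    field_simp
  have e₂ : (d : ℝ) + ((k : ℝ) ^ j)⁻¹ = ((d * k ^ j + 1 : ℕ) : ℝ) / (k : ℝ) ^ j := by
    push_cast
    field_simp
  rw [e₁, e₂, Real.logb_div hA₀ hkj.ne', Real.logb_div (by positivity) hkj.ne']
  ring

theorem BeginsWith.of_mem_Ico_of_abs_div_sub_one_lt {k d j d' : ℕ} {x y : ℝ} (hk : 0 < k)
    (hd' : d' ∈ Ico (d * k ^ j + 1) ((d + 1) * k ^ j - 1)) (hx : BeginsWith k d' x)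
    (hxy : |x / y - 1| < 1 / ((d + 1) * (k : ℝ) ^ j)) : BeginsWith k d y := by
  rw [mem_Ico] at hd'
  have hkj : (0 : ℝ) < (d + 1) * (k : ℝ) ^ j := by positivity
  have hlo : (d * k ^ j + 1 : ℕ) ≤ (d' : ℝ) := by exact_mod_cast hd'.1
  have hhi : (d' : ℝ) + 1 + 1 ≤ ((d + 1) * k ^ j : ℕ) := by
    exact_mod_cast (by omega : d' + 1 + 1 ≤ (d + 1) * k ^ j)
  push_cast at hlo hhi
  refine hx.of_abs_div_sub_one_lt (j := j) ?_ ?_ hxy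
  · have : 1 / ((d + 1) * (k : ℝ) ^ j) * (d * (k : ℝ) ^ j) ≤ 1 := by
      rw [div_mul_eq_mul_div, one_mul, div_le_one hkj]
      nlinarith
    linarith
  · rw [sub_mul, one_div_mul_cancel hkj.ne']
    linarith

theorem IsBenford.eventually_lt_partialDensity_of_tendsto_div {f g : ℕ → ℝ} (hB : IsBenford f)
    (hfg : Tendsto (fun n => f n / g n) atTop (𝓝 1)) {k d : ℕ} (hk : 2 ≤ k) (hd : 0 < d)
    {r : ℝ} (hr : r < Real.logb k ((d : ℝ) + 1) - Real.logb k d) :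
    ∀ᶠ N in atTop, r < partialDensity {n | BeginsWith k d (g n)} N := by
  obtain ⟨j, hj, hj₁⟩ := ((tendsto_logb_sub_logb hk hd).eventually (lt_mem_nhds hr)
    |>.and (eventually_ge_atTop 1)).exists
  set t := Nat.log k d
  have hkj : k ≤ k ^ j := Nat.le_self_pow (by omega) k
  have hdt : k ^ t ≤ d := Nat.pow_log_le_self k hd.ne'
  have hdt' : d + 1 ≤ k ^ (t + 1) := Nat.lt_pow_succ_log_self (by omega) d
  have hlevel :
      Ico (d * k ^ j + 1) ((d + 1) * k ^ j - 1) ⊆ Ico (k ^ (t + j)) (k ^ (t + j + 1)) := by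
    intro d' hd'
    rw [mem_Ico] at hd' ⊢
    have h₁ : k ^ (t + j) ≤ d * k ^ j := by rw [pow_add]; gcongr
    have h₂ : (d + 1) * k ^ j ≤ k ^ (t + j + 1) := by
      rw [show t + j + 1 = t + 1 + j by ring, pow_add]; gcongr
    omega
  have hdens : HasNatDensity
      (⋃ d' ∈ Ico (d * k ^ j + 1) ((d + 1) * k ^ j - 1), {n | BeginsWith k d' (f n)})
      (Real.logb k (((d + 1) * k ^ j - 1 : ℕ) : ℝ) -
        Real.logb k ((d * k ^ j + 1 : ℕ) : ℝ)) := by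
    have : (d + 1) * k ^ j = d * k ^ j + k ^ j := by ring
    rw [← sum_Ico_logb_succ_sub_logb _ (by omega)]
    exact HasNatDensity.biUnion_s4 ((pairwiseDisjoint_beginsWith hk f _).subset hlevel)
      fun d' hd' => hB k hk d' (by rw [mem_Ico] at hd'; omega)
  refine hdens.eventually_lt_partialDensity ?_ hj
  have hδ : (0 : ℝ) < 1 / ((d + 1) * (k : ℝ) ^ j) := by positivity
  filter_upwards [Metric.tendsto_nhds.1 hfg _ hδ] with n hn hmem
  simp only [Set.mem_iUnion, exists_prop] at hmem
  obtain ⟨d', hd', hbeg⟩ := hmem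
  exact hbeg.of_mem_Ico_of_abs_div_sub_one_lt (by omega) hd' hn

theorem isBenford_of_asymp_general (f g : ℕ → ℝ)
    (hasymp : Tendsto (fun n => f n / g n) atTop (𝓝 1))
    (hB : IsBenford f) : IsBenford g := by
  intro k hk d hd
  set t := Nat.log k d
  have hdt : d ∈ Ico (k ^ t) (k ^ (t + 1)) :=
    mem_Ico.2 ⟨Nat.pow_log_le_self k hd.ne', Nat.lt_pow_succ_log_self (by omega) d⟩
  refine tendsto_of_forall_lt_eventually_lt_of_sum_le (s := Ico (k ^ t) (k ^ (t + 1)))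
    (u := fun d' => partialDensity {n | BeginsWith k d' (g n)}) ?_
    (fun d' hd' _ hr => hB.eventually_lt_partialDensity_of_tendsto_div hasymp hk
      ((Nat.pow_pos (by omega)).trans_le (mem_Ico.1 hd').1) hr) hdt
  have hk' : (1 : ℝ) < k := by exact_mod_cast hk
  refine Eventually.of_forall fun N => ?_
  rw [← partialDensity_biUnion (pairwiseDisjoint_beginsWith hk _ t),
    sum_Ico_logb_succ_sub_logb _ (Nat.pow_le_pow_right (by omega) t.le_succ)]
  push_cast
  rw [Real.logb_pow, Real.logb_pow, Real.logb_self_eq_one hk']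
  simpa using partialDensity_le_one _ N

/-- If `f ~ g` and `f` is Benford, then `g` is Benford. -/
theorem isBenford_of_asymp (f g : ℕ → ℝ) (hf : ∀ n, f n ≠ 0) (hg : ∀ n, g n ≠ 0)
    (hasymp : Tendsto (fun n => f n / g n) atTop (𝓝 1))
    (hB : IsBenford f) : IsBenford g :=
  isBenford_of_asymp_general f g hasymp hB
end

section
/- Let a : ℕ → ℤ be a sequence of nonzero integers, and suppose there exist real constants K > 0, α > 0, and β such that |a(n)| ~ K·n^β·e^{α√n} (i.e., lim_{n→∞} |a(n)|/(K n^β e^{α√n}) = 1). Then a is Benford. -/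
open Filter Topology

/-!
Write `log_k |a n| = g n + o(1)` with `g n = c √n + b log n + C`, `c > 0`. Leading digits of `|x|`
in base `k` are read off from `log_k |x|` modulo 1, and equidistribution modulo 1 survives `o(1)`
perturbations, so it suffices that `g` is equidistributed modulo 1.

Let `ν T` be the first `n` with `T ≤ g n`. For `ν (s + j) ≤ n < ν (s + j + 1)` the fractional part
of `g n - s` is `g n - s - j`, so the `n` of this block with `fract (g n - s) < ℓ` are exactly those
below `ν (s + j + ℓ)`. Since `g (ν T) = T + o(1)`, i.e. `c √(ν T) + 2 b log √(ν T) = T - C + o(1)`,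
we get `√(ν (T + h)) - √(ν T) → h / c`, so the proportion of such `n` in the `j`-th block tends
to `ℓ`. Stolz–Cesàro gives density `ℓ` along `N = ν (s + j)`, and since
`ν (s + j + 1) / ν (s + j) → 1`, along all `N`.
-/

open Real Finset Asymptotics

section Density

variable {S : Set ℕ} {r : ℝ}

open scoped Classical in
theorem hasNatDensity_iff_tendsto_count :
    HasNatDensity S r ↔ Tendsto (fun N => (Nat.count (· ∈ S) N : ℝ) / N) atTop (𝓝 r) := by
  simp only [HasNatDensity, Nat.count_eq_card_filter_range]

theorem Nat.count_le_count_add_of_imp {p q : ℕ → Prop} [DecidablePred p] [DecidablePred q]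
    {n₁ : ℕ} (h : ∀ n, n₁ ≤ n → p n → q n) (N : ℕ) : Nat.count p N ≤ Nat.count q N + n₁ := by
  simp only [Nat.count_eq_card_filter_range]
  calc #{n ∈ range N | p n} ≤ #({n ∈ range N | q n} ∪ range n₁) := by
        refine card_le_card fun n hn => ?_
        simp only [mem_filter, mem_range, mem_union] at hn ⊢
        by_cases hn₁ : n₁ ≤ n
        · exact Or.inl ⟨hn.1, h n hn₁ hn.2⟩
        · exact Or.inr (not_le.1 hn₁)
    _ ≤ #{n ∈ range N | q n} + n₁ := (card_union_le _ _).trans (by rw [card_range])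

open scoped Classical in
theorem HasNatDensity.tendsto_count_add_div (h : HasNatDensity S r) (c : ℝ) :
    Tendsto (fun N => ((Nat.count (· ∈ S) N : ℝ) + c) / N) atTop (𝓝 r) := by
  have hc : Tendsto (fun N : ℕ => c / N) atTop (𝓝 0) :=
    tendsto_const_nhds.div_atTop tendsto_natCast_atTop_atTop
  simpa [add_div] using (hasNatDensity_iff_tendsto_count.1 h).add hc

open scoped Classical in
theorem HasNatDensity.of_squeeze
    (h : ∀ ε > 0, ∃ L U : Set ℕ, ∃ l u : ℝ, HasNatDensity L l ∧ HasNatDensity U u ∧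
      r - ε ≤ l ∧ u ≤ r + ε ∧ (∀ᶠ n in atTop, n ∈ L → n ∈ S) ∧
      (∀ᶠ n in atTop, n ∈ S → n ∈ U)) :
    HasNatDensity S r := by
  rw [hasNatDensity_iff_tendsto_count]
  refine tendsto_order.2 ⟨fun a ha => ?_, fun b hb => ?_⟩
  · obtain ⟨L, -, l, -, hL, -, hl, -, hLS, -⟩ := h ((r - a) / 2) (by linarith)
    obtain ⟨n₁, hn₁⟩ := eventually_atTop.1 hLS
    filter_upwards [(hL.tendsto_count_add_div (-n₁)).eventually_const_lt (by linarith : a < l)]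
      with N hN
    refine hN.trans_le (div_le_div_of_nonneg_right ?_ N.cast_nonneg)
    have : (Nat.count (· ∈ L) N : ℝ) ≤ Nat.count (· ∈ S) N + n₁ := by
      exact_mod_cast Nat.count_le_count_add_of_imp hn₁ N
    linarith
  · obtain ⟨-, U, -, u, -, hU, -, hu, -, hSU⟩ := h ((b - r) / 2) (by linarith)
    obtain ⟨n₂, hn₂⟩ := eventually_atTop.1 hSU
    filter_upwards [(hU.tendsto_count_add_div n₂).eventually_lt_const (by linarith : u < b)]
      with N hN
    refine (div_le_div_of_nonneg_right ?_ N.cast_nonneg).trans_lt hN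
    exact_mod_cast Nat.count_le_count_add_of_imp hn₂ N

open scoped Classical in
theorem hasNatDensity_univ_s9 : HasNatDensity Set.univ 1 := by
  rw [hasNatDensity_iff_tendsto_count]
  refine tendsto_const_nhds.congr' ?_
  filter_upwards [eventually_gt_atTop 0] with N hN
  simp [Nat.count_eq_card_filter_range, (Nat.cast_pos.2 hN).ne']

theorem HasNatDensity.congr_eventually {T : Set ℕ} (h : HasNatDensity S r)
    (hST : ∀ᶠ n in atTop, n ∈ S ↔ n ∈ T) : HasNatDensity T r :=
  HasNatDensity.of_squeeze fun _ _ => ⟨S, S, r, r, h, h, by linarith, by linarith,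
    hST.mono fun _ hn => hn.1, hST.mono fun _ hn => hn.2⟩

end Density

section Limits

variable {r : ℝ}

theorem tendsto_div_of_tendsto_sub_div_sub {A B : ℕ → ℝ} (hB : Monotone B)
    (hBtop : Tendsto B atTop atTop) (hBlt : ∀ᶠ j in atTop, B j < B (j + 1))
    (h : Tendsto (fun j => (A (j + 1) - A j) / (B (j + 1) - B j)) atTop (𝓝 r)) :
    Tendsto (fun j => A j / B j) atTop (𝓝 r) := by
  have hinc : (fun j => A (j + 1) - A j - r * (B (j + 1) - B j)) =o[atTop]
      fun j => B (j + 1) - B j := by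
    rw [isLittleO_iff_tendsto' (hBlt.mono fun j hj h0 => absurd h0 (sub_ne_zero.2 hj.ne'))]
    refine (h.sub_const r).congr' ?_ |>.trans (by rw [sub_self])
    filter_upwards [hBlt] with j hj
    field_simp [(sub_pos.2 hj).ne']
  have hsum := hinc.sum_range (fun j => sub_nonneg.2 (hB j.le_succ))
    (by simpa only [sum_range_sub, ← sub_eq_add_neg] using
      tendsto_atTop_add_const_right _ (-B 0) hBtop)
  simp only [sum_sub_distrib (f := fun i => A (i + 1) - A i), ← mul_sum, sum_range_sub] at hsum
  have hBpos : ∀ᶠ j in atTop, B 0 < B j := hBtop.eventually_gt_atTop _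
  have hquot : Tendsto (fun j => (A j - A 0 - r * (B j - B 0)) / (B j - B 0)) atTop (𝓝 0) :=
    (isLittleO_iff_tendsto' (hBpos.mono fun j hj h0 => absurd h0 (sub_ne_zero.2 hj.ne'))).1 hsum
  have hfrac : Tendsto (fun j => (B j - B 0) / B j) atTop (𝓝 1) := by
    have hlim := (tendsto_const_nhds (x := (1 : ℝ))).sub
      ((tendsto_const_nhds (x := B 0)).div_atTop hBtop)
    rw [sub_zero] at hlim
    refine hlim.congr' ?_
    filter_upwards [hBtop.eventually_gt_atTop 0] with j hj
    field_simp
  have hconst : Tendsto (fun j => (A 0 - r * B 0) / B j) atTop (𝓝 0) :=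
    tendsto_const_nhds.div_atTop hBtop
  have hlim := ((hquot.mul hfrac).add hconst).const_add r
  rw [zero_mul, zero_add, add_zero] at hlim
  refine hlim.congr' ?_
  filter_upwards [hBpos, hBtop.eventually_gt_atTop 0] with j h1 h2
  field_simp [(sub_pos.2 h1).ne']
  ring

theorem Monotone.tendsto_div_of_tendsto_comp_div {F : ℕ → ℝ} (hF : Monotone F)
    (hF0 : ∀ n, 0 ≤ F n) {x : ℕ → ℕ} (hx : Monotone x) (hxtop : Tendsto x atTop atTop)
    (hratio : Tendsto (fun j => (x (j + 1) : ℝ) / x j) atTop (𝓝 1))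
    (h : Tendsto (fun j => F (x j) / x j) atTop (𝓝 r)) :
    Tendsto (fun N => F N / N) atTop (𝓝 r) := by
  have hex : ∀ N, ∃ j, N < x (j + 1) := fun N =>
    ((hxtop.comp (tendsto_add_atTop_nat 1)).eventually_gt_atTop N).exists
  set i : ℕ → ℕ := fun N => Nat.find (hex N)
  have hi_lt (N : ℕ) : N < x (i N + 1) := Nat.find_spec (hex N)
  have hi_le (N : ℕ) (hN : x 0 ≤ N) : x (i N) ≤ N := by
    rcases Nat.eq_zero_or_pos (i N) with hi | hi
    · rwa [hi]
    · have hmin : ¬N < x (i N - 1 + 1) := Nat.find_min (hex N) (Nat.sub_lt hi one_pos)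
      rwa [Nat.sub_add_cancel hi, not_lt] at hmin
  have hitop : Tendsto i atTop atTop :=
    Filter.tendsto_atTop_atTop.2 fun J => ⟨x J, fun N hN =>
      (Nat.le_find_iff _ _).2 fun j hj => not_lt.2 ((hx hj).trans hN)⟩
  have hxpos : ∀ᶠ j in atTop, (0 : ℝ) < x j := by
    simpa using hxtop.eventually_gt_atTop 0
  have hlo : Tendsto (fun j => F (x j) / x (j + 1)) atTop (𝓝 r) := by
    have hlim := h.mul (hratio.inv₀ one_ne_zero)
    rw [inv_one, mul_one] at hlim
    refine hlim.congr' ?_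
    filter_upwards [hxpos] with j hj
    rw [inv_div, div_mul_div_cancel₀ hj.ne']
  have hhi : Tendsto (fun j => F (x (j + 1)) / x j) atTop (𝓝 r) := by
    have hlim := (h.comp (tendsto_add_atTop_nat 1)).mul hratio
    rw [mul_one] at hlim
    refine hlim.congr' ?_
    filter_upwards [hxpos.filter_mono (tendsto_add_atTop_nat 1)] with j hj
    exact div_mul_div_cancel₀ hj.ne'
  refine tendsto_of_tendsto_of_tendsto_of_le_of_le' (hlo.comp hitop) (hhi.comp hitop) ?_ ?_
  · filter_upwards [eventually_ge_atTop (x 0), hitop.eventually hxpos] with N hN hpos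
    exact div_le_div₀ (hF0 _) (hF (hi_le N hN)) (hpos.trans_le (by exact_mod_cast hi_le N hN))
      (by exact_mod_cast (hi_lt N).le)
  · filter_upwards [eventually_ge_atTop (x 0), hitop.eventually hxpos] with N hN hpos
    exact div_le_div₀ (hF0 _) (hF (hi_lt N).le) hpos (by exact_mod_cast hi_le N hN)

section

variable {α : Type*} {l : Filter α} {u v w : α → ℝ} {p q : ℝ}

theorem tendsto_div_of_tendsto_sub (hu : Tendsto u l atTop)
    (hw : Tendsto (fun j => w j - u j) l (𝓝 q)) :
    Tendsto (fun j => w j / u j) l (𝓝 1) := by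
  have hlim := (hw.div_atTop hu).const_add 1
  rw [add_zero] at hlim
  refine hlim.congr' ?_
  filter_upwards [hu.eventually_gt_atTop 0] with j hj
  field_simp
  ring

theorem tendsto_sq_sub_sq_div_sq_sub_sq (hu : Tendsto u l atTop)
    (hv : Tendsto (fun j => v j - u j) l (𝓝 p))
    (hw : Tendsto (fun j => w j - u j) l (𝓝 q)) (hq : q ≠ 0) :
    Tendsto (fun j => (v j ^ 2 - u j ^ 2) / (w j ^ 2 - u j ^ 2)) l (𝓝 (p / q)) := by
  have hlim := (hv.div hw hq).mul (((tendsto_div_of_tendsto_sub hu hv).const_add 1).div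
    ((tendsto_div_of_tendsto_sub hu hw).const_add 1) (by norm_num))
  rw [div_self (by norm_num), mul_one] at hlim
  refine hlim.congr' ?_
  have hwtop : Tendsto w l atTop := (hw.add_atTop hu).congr fun j => sub_add_cancel _ _
  filter_upwards [hu.eventually_gt_atTop 0, hwtop.eventually_gt_atTop 0, hw.eventually_ne hq]
    with j hu0 hw0 hwu
  have : w j + u j ≠ 0 := by positivity
  simp only [Pi.div_apply]
  rw [show w j ^ 2 - u j ^ 2 = (w j - u j) * (w j + u j) by ring]
  field_simp
  ring

end

end Limits

section ModOne

/-- Equidistribution modulo 1, tested on the arcs `[s, s + ℓ)` of `ℝ / ℤ`, including those that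
wrap around `0` (which `UnifDistMod1` does not see). -/
def IsEquidistribModOne (x : ℕ → ℝ) : Prop :=
  ∀ s ℓ : ℝ, 0 < ℓ → ℓ ≤ 1 → HasNatDensity {n | Int.fract (x n - s) < ℓ} ℓ

theorem Int.fract_sub_lt_iff {R : Type*} [Field R] [LinearOrder R] [IsStrictOrderedRing R]
    [FloorRing R] {x s ℓ : R} (hℓ : ℓ ≤ 1) :
    Int.fract (x - s) < ℓ ↔ ∃ m : ℤ, (m : R) + s ≤ x ∧ x < m + s + ℓ := by
  constructor
  · intro h
    refine ⟨⌊x - s⌋, ?_, ?_⟩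
    · linarith [Int.floor_le (x - s)]
    · linarith [Int.self_sub_floor (x - s)]
  · rintro ⟨m, h1, h2⟩
    have : Int.fract (x - s) = x - s - m :=
      Int.fract_eq_iff.2 ⟨by linarith, by linarith, m, by ring⟩
    linarith

theorem IsEquidistribModOne.of_tendsto_sub {x y : ℕ → ℝ} (hy : IsEquidistribModOne y)
    (hxy : Tendsto (fun n => x n - y n) atTop (𝓝 0)) : IsEquidistribModOne x := by
  intro s ℓ hℓ hℓ1
  refine HasNatDensity.of_squeeze fun ε hε => ?_
  obtain ⟨δ, hδ0, hδε, hδℓ⟩ : ∃ δ > 0, 2 * δ ≤ ε ∧ 2 * δ < ℓ :=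
    ⟨min ε ℓ / 4, by positivity, by linarith [min_le_left ε ℓ],
      by linarith [min_le_right ε ℓ, lt_min hε hℓ]⟩
  have hclose : ∀ᶠ n in atTop, |x n - y n| < δ := by
    simpa [Real.dist_eq] using Metric.tendsto_nhds.1 hxy δ hδ0
  have hlower : ∀ᶠ n in atTop, n ∈ {n | Int.fract (y n - (s + δ)) < ℓ - 2 * δ} →
      n ∈ {n | Int.fract (x n - s) < ℓ} := by
    filter_upwards [hclose] with n hn
    simp only [Int.fract_sub_lt_iff (by linarith : ℓ - 2 * δ ≤ 1),
      Int.fract_sub_lt_iff hℓ1]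
    rintro ⟨m, h1, h2⟩
    exact ⟨m, by linarith [abs_lt.1 hn], by linarith [abs_lt.1 hn]⟩
  have hlowerDensity := hy (s + δ) (ℓ - 2 * δ) (by linarith) (by linarith)
  by_cases hfit : ℓ + 2 * δ ≤ 1
  · refine ⟨_, _, _, _, hlowerDensity, hy (s - δ) (ℓ + 2 * δ) (by linarith) hfit,
      by linarith, by linarith, hlower, ?_⟩
    filter_upwards [hclose] with n hn
    simp only [Int.fract_sub_lt_iff hfit, Int.fract_sub_lt_iff hℓ1]
    rintro ⟨m, h1, h2⟩
    exact ⟨m, by linarith [abs_lt.1 hn], by linarith [abs_lt.1 hn]⟩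
  · exact ⟨_, _, _, _, hlowerDensity, hasNatDensity_univ_s9, by linarith, by linarith, hlower,
      Eventually.of_forall fun _ _ => trivial⟩

end ModOne

section Benford

variable {k d : ℕ}

theorem logb_mul_pow_self {b c : ℝ} (hb : 1 < b) (hc : 0 < c) (m : ℕ) :
    logb b (c * b ^ m) = m + logb b c := by
  rw [logb_mul hc.ne' (by positivity), logb_pow, logb_self_eq_one hb, mul_one, add_comm]

theorem logb_add_one_le_logb_add_one (hk : 2 ≤ k) (hd : 0 < d) :
    logb k (d + 1) ≤ logb k d + 1 := by
  have hk1 : (1 : ℝ) < k := by exact_mod_cast hk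
  have hd1 : (1 : ℝ) ≤ d := by exact_mod_cast hd
  have hk2 : (2 : ℝ) ≤ k := by exact_mod_cast hk
  have h := logb_le_logb_of_le hk1 (by positivity : (0 : ℝ) < d + 1)
    (show (d : ℝ) + 1 ≤ d * (k : ℝ) ^ 1 by nlinarith)
  rw [logb_mul_pow_self hk1 (by positivity), Nat.cast_one] at h
  linarith

theorem beginsWith_iff_fract_logb_lt (hk : 2 ≤ k) (hd : 0 < d) {x : ℝ} (hx : (d : ℝ) ≤ |x|) :
    BeginsWith k d x ↔ Int.fract (logb k |x| - logb k d) < logb k (d + 1) - logb k d := by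
  have hk1 : (1 : ℝ) < k := by exact_mod_cast hk
  have hd0 : (0 : ℝ) < d := by exact_mod_cast hd
  have hx0 : 0 < |x| := hd0.trans_le hx
  have hgap := logb_add_one_le_logb_add_one hk hd
  have hs : logb k d ≤ logb k |x| := logb_le_logb_of_le hk1 hd0 hx
  rw [Int.fract_sub_lt_iff (by linarith), BeginsWith]
  constructor
  · rintro ⟨m, h1, h2⟩
    have h1' := logb_le_logb_of_le hk1 (by positivity) h1
    have h2' := logb_lt_logb hk1 hx0 h2
    rw [logb_mul_pow_self hk1 hd0] at h1'
    rw [logb_mul_pow_self hk1 (by positivity)] at h2'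
    exact ⟨m, by push_cast; linarith, by push_cast; linarith⟩
  · rintro ⟨m, h1, h2⟩
    have hm : (-1 : ℝ) < m := by linarith
    lift m to ℕ using by exact_mod_cast hm
    refine ⟨m, (logb_le_logb hk1 (by positivity) hx0).1 ?_,
      (logb_lt_logb_iff hk1 hx0 (by positivity)).1 ?_⟩
    · rw [logb_mul_pow_self hk1 hd0]
      push_cast at h1
      linarith
    · rw [logb_mul_pow_self hk1 (by positivity)]
      push_cast at h2
      linarith

theorem isBenford_of_isEquidistribModOne {x : ℕ → ℝ}
    (hx : Tendsto (fun n => |x n|) atTop atTop)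
    (h : ∀ k : ℕ, 2 ≤ k → IsEquidistribModOne fun n => logb k |x n|) : IsBenford x := by
  intro k hk d hd
  have hpos : logb k d < logb k (d + 1) :=
    logb_lt_logb (by exact_mod_cast hk) (by exact_mod_cast hd) (by linarith)
  refine (h k hk (logb k d) _ (by linarith)
    (by linarith [logb_add_one_le_logb_add_one hk hd])).congr_eventually ?_
  filter_upwards [hx.eventually_ge_atTop d] with n hn
  exact (beginsWith_iff_fract_logb_lt hk hd hn).symm

end Benford

theorem Nat.count_eq_count_add_sub {p : ℕ → Prop} [DecidablePred p] {a b c : ℕ} (hac : a ≤ c)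
    (hcb : c ≤ b) (htrue : ∀ n, a ≤ n → n < c → p n) (hfalse : ∀ n, c ≤ n → n < b → ¬p n) :
    Nat.count p b = Nat.count p a + (c - a) := by
  obtain ⟨c, rfl⟩ := Nat.exists_eq_add_of_le hac
  obtain ⟨b, rfl⟩ := Nat.exists_eq_add_of_le hcb
  have hall : Nat.count (fun k => p (a + k)) c = c :=
    Nat.count_iff_forall.2 fun n hn => htrue _ (by omega) (by omega)
  have hnone : Nat.count (fun k => p (a + c + k)) b = 0 :=
    Nat.count_iff_forall_not.2 fun n hn => hfalse _ (by omega) (by omega)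
  rw [Nat.count_add, Nat.count_add, Nat.add_sub_cancel_left, hall, hnone, add_zero]

section HitTime

variable {g : ℕ → ℝ} {T : ℝ}

/-- Junk value `0` if `g` never reaches `T`. -/
noncomputable def hitTime (g : ℕ → ℝ) (T : ℝ) : ℕ := sInf {n | T ≤ g n}

theorem le_apply_hitTime (htop : Tendsto g atTop atTop) (T : ℝ) : T ≤ g (hitTime g T) :=
  Nat.sInf_mem (htop.eventually_ge_atTop T).exists

theorem lt_hitTime_iff (hg : Monotone g) (htop : Tendsto g atTop atTop) {n : ℕ} :
    n < hitTime g T ↔ g n < T := by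
  refine ⟨fun h => not_le.1 (Nat.notMem_of_lt_sInf h), fun h => ?_⟩
  by_contra hle
  exact (le_apply_hitTime htop T).not_gt ((hg (not_lt.1 hle)).trans_lt h)

theorem hitTime_mono (htop : Tendsto g atTop atTop) : Monotone (hitTime g) := fun _ U hTU =>
  Nat.sInf_le (hTU.trans (le_apply_hitTime htop U))

theorem tendsto_hitTime_atTop (hg : Monotone g) (htop : Tendsto g atTop atTop) :
    Tendsto (hitTime g) atTop atTop :=
  Filter.tendsto_atTop_atTop.2 fun n => ⟨g n + 1, fun _ hT =>
    ((lt_hitTime_iff hg htop).2 (by linarith)).le⟩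

theorem tendsto_apply_hitTime_sub (hg : Monotone g) (htop : Tendsto g atTop atTop)
    (hinc : Tendsto (fun n => g (n + 1) - g n) atTop (𝓝 0)) :
    Tendsto (fun T => g (hitTime g T) - T) atTop (𝓝 0) := by
  have hprev := hinc.comp ((tendsto_sub_atTop_nat 1).comp (tendsto_hitTime_atTop hg htop))
  refine tendsto_of_tendsto_of_tendsto_of_le_of_le' tendsto_const_nhds hprev
    (Eventually.of_forall fun T => sub_nonneg.2 (le_apply_hitTime htop T)) ?_
  filter_upwards [(tendsto_hitTime_atTop hg htop).eventually_gt_atTop 0] with T hT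
  have hbefore : g (hitTime g T - 1) < T := (lt_hitTime_iff hg htop).1 (by omega)
  simp only [Function.comp_apply, Nat.sub_add_cancel hT]
  linarith

open scoped Classical in
theorem count_hitTime_add_one (hg : Monotone g) (htop : Tendsto g atTop atTop) (s : ℝ)
    {ℓ : ℝ} (hℓ : 0 ≤ ℓ) (hℓ1 : ℓ ≤ 1) (j : ℕ) :
    Nat.count (· ∈ {n | Int.fract (g n - s) < ℓ}) (hitTime g (s + (j + 1))) =
      Nat.count (· ∈ {n | Int.fract (g n - s) < ℓ}) (hitTime g (s + j)) +
        (hitTime g (s + j + ℓ) - hitTime g (s + j)) := by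
  have hfract {n : ℕ} (hlo : hitTime g (s + j) ≤ n) (hhi : n < hitTime g (s + (j + 1))) :
      Int.fract (g n - s) = g n - s - j := by
    have h1 := (lt_hitTime_iff hg htop).1 hhi
    have h2 := not_lt.1 ((lt_hitTime_iff (T := s + j) hg htop).not.1 (not_lt.2 hlo))
    exact Int.fract_eq_iff.2 ⟨by linarith, by linarith, j, by push_cast; ring⟩
  refine Nat.count_eq_count_add_sub (hitTime_mono htop (by linarith))
    (hitTime_mono htop (by linarith)) (fun n hlo hhi => ?_) (fun n hlo hhi => ?_)
  · have := (lt_hitTime_iff hg htop).1 hhi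
    simp only [Set.mem_ofPred_eq, hfract hlo
      (hhi.trans_le (hitTime_mono htop (by linarith)))]
    linarith
  · have := not_lt.1 ((lt_hitTime_iff hg htop).not.1 (not_lt.2 hlo))
    simp only [Set.mem_ofPred_eq, hfract ((hitTime_mono htop (by linarith)).trans hlo) hhi]
    linarith

open scoped Classical in
theorem isEquidistribModOne_of_tendsto_sqrt_hitTime_sub {g : ℕ → ℝ} {c : ℝ} (hc : 0 < c)
    (hg : Monotone g) (htop : Tendsto g atTop atTop)
    (hν : ∀ h, 0 < h →
      Tendsto (fun T => √(hitTime g (T + h)) - √(hitTime g T)) atTop (𝓝 (h / c))) :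
    IsEquidistribModOne g := by
  intro s ℓ hℓ hℓ1
  set x : ℕ → ℕ := fun j => hitTime g (s + j)
  set y : ℕ → ℕ := fun j => hitTime g (s + j + ℓ)
  have hsj : Tendsto (fun j : ℕ => s + j) atTop atTop :=
    tendsto_atTop_add_const_left _ s tendsto_natCast_atTop_atTop
  have hx : Monotone x := fun i j hij => hitTime_mono htop (by gcongr)
  have hxtop : Tendsto x atTop atTop := (tendsto_hitTime_atTop hg htop).comp hsj
  have hu : Tendsto (fun j => √(x j : ℝ)) atTop atTop :=
    tendsto_sqrt_atTop.comp (tendsto_natCast_atTop_atTop.comp hxtop)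
  have hyx : Tendsto (fun j => √(y j : ℝ) - √(x j : ℝ)) atTop (𝓝 (ℓ / c)) :=
    (hν ℓ hℓ).comp hsj
  have hxx : Tendsto (fun j => √(x (j + 1) : ℝ) - √(x j : ℝ)) atTop (𝓝 (1 / c)) :=
    ((hν 1 one_pos).comp hsj).congr fun j => by simp [x, add_assoc]
  have hsq (n : ℕ) : (n : ℝ) = √(n : ℝ) ^ 2 := (sq_sqrt n.cast_nonneg).symm
  rw [hasNatDensity_iff_tendsto_count]
  refine Monotone.tendsto_div_of_tendsto_comp_div
    (fun _ _ h => by exact_mod_cast Nat.count_monotone _ h) (fun _ => Nat.cast_nonneg _)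
    hx hxtop ?_ ?_
  · have hlim := (tendsto_div_of_tendsto_sub hu hxx).pow 2
    rw [one_pow] at hlim
    exact hlim.congr fun j => by rw [div_pow, ← hsq, ← hsq]
  · refine tendsto_div_of_tendsto_sub_div_sub (fun _ _ h => by exact_mod_cast hx h)
      (tendsto_natCast_atTop_atTop.comp hxtop) ?_ ?_
    · filter_upwards [hxx.eventually_const_lt (by positivity : (0 : ℝ) < 1 / c)] with j hj
      exact (Real.sqrt_lt_sqrt_iff (Nat.cast_nonneg _)).1 (sub_pos.1 hj)
    · have hlim := tendsto_sq_sub_sq_div_sq_sub_sq hu hyx hxx (by positivity)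
      rw [div_div_div_cancel_right₀ hc.ne', div_one] at hlim
      refine hlim.congr fun j => ?_
      have hblock := count_hitTime_add_one hg htop s hℓ.le hℓ1 j
      rw [← Nat.cast_succ] at hblock
      simp only [← hsq, x, y, hblock]
      push_cast [Nat.cast_sub (hitTime_mono htop (by linarith : s + j ≤ s + j + ℓ))]
      ring

end HitTime

section LinearPlusLog

variable {c : ℝ}

theorem tendsto_mul_add_mul_log_atTop (hc : 0 < c) (b C : ℝ) :
    Tendsto (fun y => c * y + b * log y + C) atTop atTop := by
  have hlog : Tendsto (fun y => log y / y) atTop (𝓝 0) :=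
    isLittleO_log_id_atTop.tendsto_div_nhds_zero
  have hlim : Tendsto (fun y : ℝ => c + b * (log y / y) + C / y) atTop (𝓝 c) := by
    simpa using ((hlog.const_mul b).const_add c).add (tendsto_const_nhds.div_atTop tendsto_id)
  refine (tendsto_id.atTop_mul_pos hc hlim).congr' ?_
  filter_upwards [eventually_gt_atTop 0] with y hy
  field_simp
  simp

theorem strictMonoOn_mul_add_mul_log (hc : 0 < c) (b C : ℝ) :
    StrictMonoOn (fun y => c * y + b * log y + C) (Set.Ioi (|b| / c)) := by
  have hpos (y : ℝ) (hy : y ∈ Set.Ioi (|b| / c)) : 0 < y := by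
    have : 0 ≤ |b| / c := by positivity
    exact this.trans_lt hy
  have hderiv (y : ℝ) (hy : y ∈ Set.Ioi (|b| / c)) :
      HasDerivAt (fun y => c * y + b * log y + C) (c + b / y) y := by
    simpa [div_eq_mul_inv] using (((hasDerivAt_id y).const_mul c).add
      ((hasDerivAt_log (hpos y hy).ne').const_mul b)).add_const C
  refine strictMonoOn_of_deriv_pos (convex_Ioi _)
    (fun y hy => (hderiv y hy).continuousAt.continuousWithinAt) fun y hy => ?_
  rw [interior_Ioi] at hy
  rw [(hderiv y hy).deriv]
  have hy0 := hpos y hy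
  rw [Set.mem_Ioi, div_lt_iff₀ hc] at hy
  have : 0 < c * y + b := by linarith [neg_abs_le b]
  calc (0 : ℝ) < (c * y + b) / y := by positivity
    _ = c + b / y := by field_simp

theorem tendsto_self_div_of_tendsto_mul_add_mul_log_sub {b C : ℝ} {w : ℝ → ℝ}
    (hw : Tendsto w atTop atTop)
    (hrel : Tendsto (fun T => c * w T + b * log (w T) - T) atTop (𝓝 C)) :
    Tendsto (fun T => T / w T) atTop (𝓝 c) := by
  have hlog : Tendsto (fun T => log (w T) / w T) atTop (𝓝 0) :=
    isLittleO_log_id_atTop.tendsto_div_nhds_zero.comp hw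
  have hlim := ((hlog.const_mul b).const_add c).sub (hrel.div_atTop hw)
  rw [mul_zero, add_zero, sub_zero] at hlim
  refine hlim.congr' ?_
  filter_upwards [hw.eventually_gt_atTop 0] with T hT
  field_simp
  ring

theorem tendsto_sub_of_tendsto_mul_add_mul_log_sub {b C : ℝ} {w : ℝ → ℝ} (hc : 0 < c)
    (hw : Tendsto w atTop atTop)
    (hrel : Tendsto (fun T => c * w T + b * log (w T) - T) atTop (𝓝 C)) (h : ℝ) :
    Tendsto (fun T => w (T + h) - w T) atTop (𝓝 (h / c)) := by
  have hwpos : ∀ᶠ T in atTop, 0 < w T := hw.eventually_gt_atTop 0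
  have hshift : Tendsto (fun T : ℝ => T + h) atTop atTop :=
    tendsto_atTop_add_const_right _ h tendsto_id
  have hTw := tendsto_self_div_of_tendsto_mul_add_mul_log_sub hw hrel
  have hratio : Tendsto (fun T => w (T + h) / w T) atTop (𝓝 1) := by
    have hlim := ((hTw.comp hshift).inv₀ hc.ne').mul
      ((tendsto_div_of_tendsto_sub (w := (· + h)) tendsto_id
        (tendsto_const_nhds.congr fun T => (add_sub_cancel_left T h).symm)).mul hTw)
    rw [one_mul, inv_mul_cancel₀ hc.ne'] at hlim
    refine hlim.congr' ?_
    filter_upwards [hwpos, hwpos.filter_mono hshift, eventually_gt_atTop 0,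
      hshift.eventually_gt_atTop 0] with T h1 h2 h3 h4
    simp only [Function.comp_apply, id]
    field_simp
  have hlog : Tendsto (fun T => log (w (T + h)) - log (w T)) atTop (𝓝 0) := by
    have hlim := hratio.log one_ne_zero
    rw [log_one] at hlim
    refine hlim.congr' ?_
    filter_upwards [hwpos, hwpos.filter_mono hshift] with T h1 h2
    exact log_div h2.ne' h1.ne'
  have hlim := ((((hrel.comp hshift).sub hrel).add_const h).sub (hlog.const_mul b)).div_const c
  rw [sub_self, zero_add, mul_zero, sub_zero] at hlim
  refine hlim.congr fun T => ?_
  simp only [Function.comp_apply]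
  field_simp
  ring

theorem tendsto_sqrt_add_one_sub_sqrt :
    Tendsto (fun n : ℕ => √((n : ℝ) + 1) - √(n : ℝ)) atTop (𝓝 0) := by
  have hsum : Tendsto (fun n : ℕ => √((n : ℝ) + 1) + √(n : ℝ)) atTop atTop :=
    (tendsto_sqrt_atTop.comp (tendsto_atTop_add_const_right _ 1
      tendsto_natCast_atTop_atTop)).atTop_add_nonneg fun _ => sqrt_nonneg _
  refine (tendsto_inv_atTop_zero.comp hsum).congr fun n => ?_
  refine (eq_inv_of_mul_eq_one_left ?_).symm
  beta_reduce
  rw [mul_comm, ← sq_sub_sq, sq_sqrt (by positivity), sq_sqrt n.cast_nonneg]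
  ring

theorem tendsto_mul_sqrt_add_mul_log_atTop (hc : 0 < c) (b C : ℝ) :
    Tendsto (fun n : ℕ => c * √n + b * log n + C) atTop atTop :=
  ((tendsto_mul_add_mul_log_atTop hc (2 * b) C).comp
    (tendsto_sqrt_atTop.comp tendsto_natCast_atTop_atTop)).congr fun n => by
      simp only [Function.comp_apply, log_sqrt n.cast_nonneg]
      ring

theorem isEquidistribModOne_mul_sqrt_add_mul_log (hc : 0 < c) (b C : ℝ) :
    IsEquidistribModOne fun n : ℕ => c * √n + b * log n + C := by
  set F : ℝ → ℝ := fun y => c * y + 2 * b * log y + C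
  have hF (n : ℕ) : F √n = c * √n + b * log n + C := by
    simp only [F, log_sqrt n.cast_nonneg]
    ring
  obtain ⟨n₀, hn₀⟩ := exists_nat_gt ((|2 * b| / c) ^ 2)
  -- Frozen before `n₀`, past which it increases, the sequence becomes monotone; this changes
  -- only finitely many terms.
  set g : ℕ → ℝ := fun n => F √(max n n₀ : ℕ)
  have hdom (n : ℕ) : √(max n n₀ : ℕ) ∈ Set.Ioi (|2 * b| / c) :=
    (lt_sqrt (by positivity)).2 (hn₀.trans_le (by exact_mod_cast le_max_right n n₀))
  have hg : Monotone g := fun m n hmn =>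
    (strictMonoOn_mul_add_mul_log hc (2 * b) C).monotoneOn (hdom m) (hdom n)
      (sqrt_le_sqrt (by exact_mod_cast max_le_max hmn le_rfl))
  have hgn : ∀ᶠ n in atTop, g n = c * √n + b * log n + C := by
    filter_upwards [eventually_ge_atTop n₀] with n hn
    simp only [g, max_eq_left hn, hF]
  have hgtop : Tendsto g atTop atTop :=
    (tendsto_mul_sqrt_add_mul_log_atTop hc b C).congr' (hgn.mono fun _ hn => hn.symm)
  have hinc : Tendsto (fun n => g (n + 1) - g n) atTop (𝓝 0) := by
    have hlim := (tendsto_sqrt_add_one_sub_sqrt.const_mul c).add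
      (tendsto_log_nat_add_one_sub_log.const_mul b)
    rw [mul_zero, mul_zero, add_zero] at hlim
    refine hlim.congr' ?_
    filter_upwards [hgn, hgn.filter_mono (tendsto_add_atTop_nat 1)] with n h1 h2
    rw [h1, h2]
    push_cast
    ring
  refine (isEquidistribModOne_of_tendsto_sqrt_hitTime_sub hc hg hgtop fun h _ => ?_).of_tendsto_sub
    (tendsto_const_nhds.congr' (hgn.mono fun n hn => by simp only [hn, sub_self]))
  have hν := tendsto_hitTime_atTop hg hgtop
  refine tendsto_sub_of_tendsto_mul_add_mul_log_sub (b := 2 * b) (C := -C) hc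
    (tendsto_sqrt_atTop.comp (tendsto_natCast_atTop_atTop.comp hν)) ?_ h
  have hlim := (tendsto_apply_hitTime_sub hg hgtop hinc).sub_const C
  rw [zero_sub] at hlim
  refine hlim.congr' ?_
  filter_upwards [hν.eventually_ge_atTop n₀] with T hT
  simp only [Function.comp_apply, g, F, max_eq_left hT]
  ring

end LinearPlusLog

theorem isBenford_of_tendsto_log_abs_sub {x : ℕ → ℝ} (hx : ∀ n, x n ≠ 0) {α β C : ℝ}
    (hα : 0 < α) (h : Tendsto (fun n => log |x n| - (α * √n + β * log n + C)) atTop (𝓝 0)) :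
    IsBenford x := by
  have htop : Tendsto (fun n => |x n|) atTop atTop := by
    refine (tendsto_exp_atTop.comp (h.add_atTop
      (tendsto_mul_sqrt_add_mul_log_atTop hα β C))).congr fun n => ?_
    simp only [Function.comp_apply, sub_add_cancel, exp_log (abs_pos.2 (hx n))]
  refine isBenford_of_isEquidistribModOne htop fun k hk => ?_
  have hlogk : 0 < log k := log_pos (by exact_mod_cast hk)
  refine (isEquidistribModOne_mul_sqrt_add_mul_log (div_pos hα hlogk) (β / log k)
    (C / log k)).of_tendsto_sub ?_
  have hlim := h.div_const (log k)
  rw [zero_div] at hlim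
  refine hlim.congr fun n => ?_
  simp only [logb]
  ring

/-- If `|a(n)| ~ K·n^β·e^{α√n}` with `K, α > 0`, then `a` is Benford. -/
theorem isBenford_of_bessel_asymp (a : ℕ → ℤ) (ha : ∀ n, a n ≠ 0)
    (K α β : ℝ) (hK : 0 < K) (hα : 0 < α)
    (hasymp : Tendsto
      (fun n : ℕ =>
        |(a n : ℝ)| / (K * (n : ℝ) ^ β * Real.exp (α * Real.sqrt n)))
      atTop (𝓝 1)) :
    IsBenford (fun n => (a n : ℝ)) := by
  have ha' (n : ℕ) : (a n : ℝ) ≠ 0 := Int.cast_ne_zero.2 (ha n)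
  refine isBenford_of_tendsto_log_abs_sub ha' (β := β) (C := log K) hα ?_
  have hlim := hasymp.log one_ne_zero
  rw [log_one] at hlim
  refine hlim.congr' ?_
  filter_upwards [eventually_gt_atTop 0] with n hn
  have hn' : (0 : ℝ) < n := Nat.cast_pos.2 hn
  rw [log_div (abs_pos.2 (ha' n)).ne' (by positivity), log_mul (by positivity) (by positivity),
    log_mul hK.ne' (by positivity), log_rpow hn', log_exp]
  ring
end

section
/- For a ∈ {0, 1}, the Rogers–Ramanujan identity ∑_{n=0}^∞ q^{n²+an} / ((1−q)(1−q²)···(1−q^n)) = ∏_{n=0}^∞ 1/((1 − q^{5n+a+1})(1 − q^{5n+4−a})) holds as an identity of formal power series over ℚ; equivalently, (∑_{n=0}^∞ q^{n²+an} / (q;q)_n) · ∏_{n=0}^∞ (1 − q^{5n+a+1})(1 − q^{5n+4−a}) = 1, where (q;q)_n := ∏_{i=1}^{n} (1 − q^i). -/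
open PowerSeries

/-- `F N → L` in the `q`-adic topology of `ℚ⟦q⟧`: every coefficient of `F N`
eventually agrees with that of `L`. -/
def PSTendstoQ (F : ℕ → PowerSeries ℚ) (L : PowerSeries ℚ) : Prop :=
  ∀ n : ℕ, ∀ᶠ N in Filter.atTop, PowerSeries.coeff n (F N) = PowerSeries.coeff n L

/-- The `q`-Pochhammer symbol `(q;q)_n = ∏_{i=1}^n (1 − qⁱ)` in `ℚ⟦q⟧`. -/
noncomputable def qPoch (n : ℕ) : PowerSeries ℚ :=
  ∏ i ∈ Finset.Icc 1 n, (1 - (X : PowerSeries ℚ) ^ i)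

namespace RR

abbrev PS := PowerSeries ℚ

/-- `(q^c; q^c)_n` -/
noncomputable def pc (c n : ℕ) : PS := ∏ i ∈ Finset.range n, (1 - (X : PS) ^ (c * i + c))

lemma pc_zero (c : ℕ) : pc c 0 = 1 := by simp [pc]

lemma pc_succ (c n : ℕ) : pc c (n + 1) = pc c n * (1 - (X : PS) ^ (c * n + c)) :=
  Finset.prod_range_succ _ _

lemma pc_one_eq (n : ℕ) : pc 1 n = qPoch n := by
  induction n with
  | zero => simp [pc, qPoch]
  | succ n ih =>
    rw [pc_succ, ih, qPoch, qPoch, Finset.prod_Icc_succ_top (Nat.le_add_left 1 n)]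
    norm_num

lemma constCoeff_pc (c n : ℕ) (hc : c ≠ 0) : constantCoeff (pc c n) = 1 := by
  rw [pc, map_prod]
  apply Finset.prod_eq_one
  intro i _
  have : c * i + c ≠ 0 := by positivity
  simp [this, hc]

lemma pc_ne_zero (c n : ℕ) (hc : c ≠ 0) : constantCoeff (pc c n) ≠ 0 := by
  rw [constCoeff_pc c n hc]; exact one_ne_zero

lemma pc_mul_inv (c n : ℕ) (hc : c ≠ 0) : pc c n * (pc c n)⁻¹ = 1 :=
  PowerSeries.mul_inv_cancel _ (pc_ne_zero c n hc)

/-- cancellation by a series with nonzero constant coefficient -/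
lemma cancel {A B u : PS} (hu : constantCoeff u ≠ 0) (h : A * u = B * u) : A = B := by
  have hu' : u ≠ 0 := fun h0 => hu (by simp [h0])
  exact mul_right_cancel₀ hu' h

/-- Gaussian binomial in `ℚ⟦q⟧`, base `q^c`; intended for `k ≤ n`. -/
noncomputable def gb (c n k : ℕ) : PS := pc c n * (pc c k)⁻¹ * (pc c (n - k))⁻¹

lemma gb_mul (c n k : ℕ) (hc : c ≠ 0) :
    gb c n k * pc c k * pc c (n - k) = pc c n := by
  have h1 := pc_mul_inv c k hc
  have h2 := pc_mul_inv c (n - k) hc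
  calc gb c n k * pc c k * pc c (n - k)
      = pc c n * (pc c k * (pc c k)⁻¹) * (pc c (n-k) * (pc c (n-k))⁻¹) := by
        rw [gb]; ring
    _ = pc c n := by rw [h1, h2]; ring

lemma gb_zero (c n : ℕ) (hc : c ≠ 0) : gb c n 0 = 1 := by
  apply cancel (u := pc c 0 * pc c (n - 0)) (by simp [pc_zero, pc_ne_zero c n hc])
  have h := gb_mul c n 0 hc
  rw [one_mul, ← mul_assoc, h, pc_zero, Nat.sub_zero, one_mul]

lemma gb_self (c n : ℕ) (hc : c ≠ 0) : gb c n n = 1 := by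
  apply cancel (u := pc c n * pc c (n - n)) (by simp [pc_zero, pc_ne_zero c n hc])
  have h := gb_mul c n n hc
  rw [one_mul, ← mul_assoc, h, Nat.sub_self, pc_zero, mul_one]

lemma gb_symm (c n k : ℕ) (hk : k ≤ n) : gb c n (n - k) = gb c n k := by
  rw [gb, gb, Nat.sub_sub_self hk]; ring

/-- Pascal rule 1 for `1 ≤ m ≤ n`. -/
lemma gb_pascal1 (c n m : ℕ) (hc : c ≠ 0) (h1 : 1 ≤ m) (h2 : m ≤ n) :
    gb c (n+1) m = gb c n m + (X : PS) ^ (c * (n + 1 - m)) * gb c n (m-1) := by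
  have hE : c * (n - m) + c = c * (n + 1 - m) := by
    rw [show n + 1 - m = (n - m) + 1 by omega, Nat.mul_succ]
  have hEm : c * (m - 1) + c = c * m := by
    rw [show m = (m - 1) + 1 by omega, Nat.mul_succ, show m - 1 + 1 - 1 = m - 1 by omega]
  have hEn : c * n + c = (c * (n - m) + c) + c * m := by
    rw [show (c*(n-m)+c)+c*m = c*((n-m)+1+m) by ring, show (n-m)+1+m = n+1 by omega,
      Nat.mul_succ]
  apply cancel (u := pc c m * pc c (n + 1 - m))
    (by rw [map_mul, constCoeff_pc c m hc, constCoeff_pc c _ hc]; norm_num)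
  have key : gb c (n+1) m * pc c m * pc c (n + 1 - m) = pc c (n+1) := gb_mul c (n+1) m hc
  rw [← mul_assoc, key, ← hE]
  have e1 : pc c (n + 1 - m) = pc c (n - m) * (1 - (X : PS) ^ (c * (n - m) + c)) := by
    rw [show n + 1 - m = (n - m) + 1 by omega, pc_succ]
  have e2 : pc c m = pc c (m - 1) * (1 - (X : PS) ^ (c * m)) := by
    nth_rewrite 1 [show m = (m - 1) + 1 by omega]
    rw [pc_succ, hEm]
  have k1 : gb c n m * pc c m * pc c (n - m) = pc c n := gb_mul c n m hc
  have k2 : gb c n (m-1) * pc c (m-1) * pc c (n + 1 - m) = pc c n := by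
    have := gb_mul c n (m-1) hc
    rwa [show n - (m-1) = n + 1 - m by omega] at this
  have hpc : pc c (n+1) = pc c n * (1 - (X : PS) ^ (c * n + c)) := pc_succ c n
  have hx : (X : PS) ^ (c * n + c)
      = (X : PS) ^ (c * (n - m) + c) * (X : PS) ^ (c * m) := by
    rw [← pow_add, hEn]
  rw [e1] at k2 ⊢
  rw [e2] at k1 ⊢
  rw [hx] at hpc
  linear_combination hpc - (1 - (X:PS) ^ (c * (n - m) + c)) * k1
    - (X:PS) ^ (c * (n - m) + c) * (1 - (X:PS) ^ (c * m)) * k2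

/-- Pascal rule 2 for `1 ≤ m ≤ n`. -/
lemma gb_pascal2 (c n m : ℕ) (hc : c ≠ 0) (h1 : 1 ≤ m) (h2 : m ≤ n) :
    gb c (n+1) m = gb c n (m-1) + (X : PS) ^ (c * m) * gb c n m := by
  have hE : c * (n - m) + c = c * (n + 1 - m) := by
    rw [show n + 1 - m = (n - m) + 1 by omega, Nat.mul_succ]
  have hEm : c * (m - 1) + c = c * m := by
    rw [show m = (m - 1) + 1 by omega, Nat.mul_succ, show m - 1 + 1 - 1 = m - 1 by omega]
  have hEn : c * n + c = (c * (n - m) + c) + c * m := by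
    rw [show (c*(n-m)+c)+c*m = c*((n-m)+1+m) by ring, show (n-m)+1+m = n+1 by omega,
      Nat.mul_succ]
  apply cancel (u := pc c m * pc c (n + 1 - m))
    (by rw [map_mul, constCoeff_pc c m hc, constCoeff_pc c _ hc]; norm_num)
  have key : gb c (n+1) m * pc c m * pc c (n + 1 - m) = pc c (n+1) := gb_mul c (n+1) m hc
  rw [← mul_assoc, key]
  have e1 : pc c (n + 1 - m) = pc c (n - m) * (1 - (X : PS) ^ (c * (n - m) + c)) := by
    rw [show n + 1 - m = (n - m) + 1 by omega, pc_succ]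
  have e2 : pc c m = pc c (m - 1) * (1 - (X : PS) ^ (c * m)) := by
    nth_rewrite 1 [show m = (m - 1) + 1 by omega]
    rw [pc_succ, hEm]
  have k1 : gb c n m * pc c m * pc c (n - m) = pc c n := gb_mul c n m hc
  have k2 : gb c n (m-1) * pc c (m-1) * pc c (n + 1 - m) = pc c n := by
    have := gb_mul c n (m-1) hc
    rwa [show n - (m-1) = n + 1 - m by omega] at this
  have hpc : pc c (n+1) = pc c n * (1 - (X : PS) ^ (c * n + c)) := pc_succ c n
  have hx : (X : PS) ^ (c * n + c)
      = (X : PS) ^ (c * (n - m) + c) * (X : PS) ^ (c * m) := by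
    rw [← pow_add, hEn]
  rw [e1] at k2 ⊢
  rw [e2] at k1 ⊢
  rw [hx] at hpc
  linear_combination hpc - (1 - (X:PS) ^ (c * m)) * k2
    - (X:PS) ^ (c * m) * (1 - (X:PS) ^ (c * (n - m) + c)) * k1


/-- ℤ-indexed Gaussian binomial. -/
noncomputable def Bz (c n : ℕ) (m : ℤ) : PS :=
  if 0 ≤ m ∧ m ≤ n then gb c n m.toNat else 0

lemma Bz_eq_zero {c n : ℕ} {m : ℤ} (h : ¬ (0 ≤ m ∧ m ≤ n)) : Bz c n m = 0 := if_neg h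

lemma Bz_of_mem {c n : ℕ} {m : ℤ} (h0 : 0 ≤ m) (h1 : m ≤ n) :
    Bz c n m = gb c n m.toNat := if_pos ⟨h0, h1⟩

lemma Bz_zero_left (c n : ℕ) (hc : c ≠ 0) : Bz c n 0 = 1 := by
  rw [Bz_of_mem le_rfl (by exact_mod_cast Nat.zero_le n)]
  simpa using gb_zero c n hc

lemma Bz_self (c n : ℕ) (hc : c ≠ 0) : Bz c n n = 1 := by
  rw [Bz_of_mem (by positivity) le_rfl]
  simpa using gb_self c n hc

lemma Bz_symm (c n : ℕ) (m : ℤ) : Bz c n (n - m) = Bz c n m := by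
  by_cases h : 0 ≤ m ∧ m ≤ n
  · rw [Bz_of_mem h.1 h.2, Bz_of_mem (by omega) (by omega)]
    have : ((n : ℤ) - m).toNat = n - m.toNat := by omega
    rw [this]
    exact gb_symm c n m.toNat (by omega)
  · rw [Bz_eq_zero h, Bz_eq_zero (by omega)]

/-- Pascal rule 1, ℤ-indexed, valid for all `m`. -/
lemma Bz_pascal1 (c n : ℕ) (hc : c ≠ 0) (m : ℤ) :
    Bz c (n+1) m = Bz c n m + (X : PS) ^ (c * ((n:ℤ) + 1 - m).toNat) * Bz c n (m-1) := by
  rcases lt_trichotomy m 0 with hm | hm | hm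
  · rw [Bz_eq_zero (by omega), Bz_eq_zero (by omega), Bz_eq_zero (by omega)]
    ring
  · subst hm
    rw [Bz_zero_left c (n+1) hc, Bz_zero_left c n hc, Bz_eq_zero (by omega)]
    ring
  · rcases lt_trichotomy m (n+1) with hm2 | hm2 | hm2
    · -- 1 ≤ m ≤ n
      have h1 : 1 ≤ m.toNat := by omega
      have h2 : m.toNat ≤ n := by omega
      rw [Bz_of_mem (by omega) (by omega), Bz_of_mem (by omega) (by omega),
        Bz_of_mem (by omega) (by omega)]
      have := gb_pascal1 c n m.toNat hc h1 h2
      rw [show ((n:ℤ) + 1 - m).toNat = n + 1 - m.toNat by omega,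
        show (m - 1).toNat = m.toNat - 1 by omega]
      exact this
    · rw [hm2]
      have h1 : Bz c (n+1) ((n:ℤ)+1) = 1 := by
        rw [show ((n:ℤ)+1) = ((n+1:ℕ):ℤ) by push_cast; ring]
        exact Bz_self c (n+1) hc
      have h2 : Bz c n ((n:ℤ)+1) = 0 := Bz_eq_zero (by omega)
      have h3 : Bz c n ((n:ℤ)+1-1) = 1 := by
        rw [show (n:ℤ)+1-1 = (n:ℤ) by ring]
        exact Bz_self c n hc
      rw [h1, h2, h3, show ((n:ℤ) + 1 - ((n:ℤ)+1)) = 0 by ring]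
      norm_num
    · rw [Bz_eq_zero (by omega), Bz_eq_zero (by omega), Bz_eq_zero (by omega)]
      ring

/-- Pascal rule 2, ℤ-indexed, valid for all `m`. -/
lemma Bz_pascal2 (c n : ℕ) (hc : c ≠ 0) (m : ℤ) :
    Bz c (n+1) m = Bz c n (m-1) + (X : PS) ^ (c * m.toNat) * Bz c n m := by
  rcases lt_trichotomy m 0 with hm | hm | hm
  · rw [Bz_eq_zero (by omega), Bz_eq_zero (by omega), Bz_eq_zero (by omega)]
    ring
  · subst hm
    rw [Bz_zero_left c (n+1) hc, Bz_zero_left c n hc, Bz_eq_zero (by omega)]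
    norm_num
  · rcases lt_trichotomy m (n+1) with hm2 | hm2 | hm2
    · have h1 : 1 ≤ m.toNat := by omega
      have h2 : m.toNat ≤ n := by omega
      rw [Bz_of_mem (by omega) (by omega), Bz_of_mem (by omega) (by omega),
        Bz_of_mem (by omega) (by omega)]
      have := gb_pascal2 c n m.toNat hc h1 h2
      rw [show (m - 1).toNat = m.toNat - 1 by omega]
      exact this
    · rw [hm2]
      have h1 : Bz c (n+1) ((n:ℤ)+1) = 1 := by
        rw [show ((n:ℤ)+1) = ((n+1:ℕ):ℤ) by push_cast; ring]
        exact Bz_self c (n+1) hc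
      have h2 : Bz c n ((n:ℤ)+1) = 0 := Bz_eq_zero (by omega)
      have h3 : Bz c n ((n:ℤ)+1-1) = 1 := by
        rw [show (n:ℤ)+1-1 = (n:ℤ) by ring]
        exact Bz_self c n hc
      rw [h1, h2, h3]
      ring
    · rw [Bz_eq_zero (by omega), Bz_eq_zero (by omega), Bz_eq_zero (by omega)]
      ring

/-- sign `(-1)^j` for `j : ℤ`. -/
noncomputable def sg (j : ℤ) : PS := if Even j then 1 else -1

lemma sg_neg (j : ℤ) : sg (-j) = sg j := by simp [sg]

lemma sg_add_one (j : ℤ) : sg (j + 1) = -sg j := by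
  by_cases h : Even j
  · have : ¬ Even (j+1) := by simp [Int.even_add_one, h]
    simp [sg, h, this]
  · have : Even (j+1) := Int.even_add_one.mpr h
    simp [sg, h, this]

lemma sg_negsub (j : ℤ) : sg (-j - 1) = -sg j := by
  rw [show -j - 1 = -(j+1) by ring, sg_neg, sg_add_one]

lemma sg_sub_one (j : ℤ) : sg (j - 1) = -sg j := by
  have := sg_add_one (j-1)
  rw [sub_add_cancel] at this
  rw [← neg_eq_iff_eq_neg] at this
  rw [← this]

/-- index window `[-C, C] ⊆ ℤ`. -/
noncomputable def IZ (C : ℕ) : Finset ℤ := Finset.Icc (-(C:ℤ)) C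

lemma mem_IZ {C : ℕ} {j : ℤ} : j ∈ IZ C ↔ -(C:ℤ) ≤ j ∧ j ≤ C := Finset.mem_Icc

/-- shrink/expand a sum to the support window -/
lemma sum_of_supp {f : ℤ → PS} {s t : Finset ℤ} (hts : t ⊆ s)
    (hv : ∀ j, f j ≠ 0 → j ∈ t) : ∑ j ∈ s, f j = ∑ j ∈ t, f j := by
  symm
  apply Finset.sum_subset hts
  intro x _ hx
  by_contra h
  exact hx (hv x h)

lemma IZ_subset {C C' : ℕ} (h : C ≤ C') : IZ C ⊆ IZ C' := by
  apply Finset.Icc_subset_Icc <;> omega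

/-- sum vanishing by the involution `j ↦ -j-1`. -/
lemma sum_invol {f : ℤ → PS} {C : ℕ} (hv : ∀ j, f j ≠ 0 → j ∈ IZ C)
    (h : ∀ j, f (-j - 1) = -f j) : ∑ j ∈ IZ C, f j = 0 := by
  have hsub : IZ C ⊆ Finset.Icc (-(C:ℤ) - 1) C := by
    apply Finset.Icc_subset_Icc <;> omega
  rw [← sum_of_supp hsub hv]
  refine Finset.sum_involution (fun a _ => -a - 1) ?_ ?_ ?_ ?_
  · intro a _
    rw [h a]; ring
  · intro a _ _ hEq
    omega
  · intro a ha
    simp only [Finset.mem_Icc] at ha ⊢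
    omega
  · intro a _
    ring

/-- reindex `j ↦ -j`. -/
lemma sum_neg_reindex (f : ℤ → PS) (C : ℕ) :
    ∑ j ∈ IZ C, f (-j) = ∑ j ∈ IZ C, f j := by
  apply Finset.sum_nbij' (i := fun j => -j) (j := fun j => -j) <;>
    intros <;> simp_all [mem_IZ] <;> omega

/-- reindex `j ↦ j + d` with window change. -/
lemma sum_shift_reindex (f : ℤ → PS) (d : ℤ) (C C' : ℕ) (hC : C + d.natAbs ≤ C')
    (hv : ∀ j, f j ≠ 0 → j ∈ IZ C) :
    ∑ j ∈ IZ C', f (j + d) = ∑ j ∈ IZ C, f j := by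
  have h1 : ∑ j ∈ IZ C', f (j + d) = ∑ k ∈ Finset.Icc (-(C':ℤ) + d) ((C':ℤ) + d), f k := by
    apply Finset.sum_nbij' (i := fun j => j + d) (j := fun k => k - d) <;>
      intros <;> simp_all [mem_IZ, Finset.mem_Icc] <;> omega
  rw [h1]
  apply sum_of_supp _ hv
  intro x hx
  simp only [mem_IZ, Finset.mem_Icc] at hx ⊢
  omega

/- exponent functions -/
def E1 (j : ℤ) : ℕ := (j * (3*j + 1) / 2).toNat
def E3 (j : ℤ) : ℕ := (j * (3*j + 3) / 2).toNat
def E5 (a : ℕ) (j : ℤ) : ℕ := (j * (5*j + 2*a + 1) / 2).toNat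

lemma Epar (u v : ℤ) (h : Odd v) : ∃ t : ℤ, u * (u + v + u) = 2 * t ∧ 0 ≤ t ∨ True := ⟨0, by tauto⟩

lemma e1_def (j : ℤ) : ∃ t : ℤ, j * (3*j+1) = 2 * t ∧ (E1 j : ℤ) = t ∧ 0 ≤ t := by
  have h2 : 2 ∣ j * (3*j+1) := by
    rcases Int.even_or_odd j with he | ho
    · obtain ⟨k, hk⟩ := he
      exact ⟨k * (3*j+1), by rw [hk]; ring⟩
    · obtain ⟨k, hk⟩ := ho
      exact ⟨j * (3*k+2), by rw [hk]; ring⟩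
  obtain ⟨t, ht⟩ := h2
  have hnn : 0 ≤ t := by nlinarith [sq_nonneg (6*j+1)]
  refine ⟨t, ht, ?_, hnn⟩
  rw [E1, ht]
  omega

lemma e3_def (j : ℤ) : ∃ t : ℤ, j * (3*j+3) = 2 * t ∧ (E3 j : ℤ) = t ∧ 0 ≤ t := by
  have h2 : 2 ∣ j * (3*j+3) := by
    rcases Int.even_or_odd j with he | ho
    · obtain ⟨k, hk⟩ := he
      exact ⟨k * (3*j+3), by rw [hk]; ring⟩
    · obtain ⟨k, hk⟩ := ho
      exact ⟨j * (3*k+3), by rw [hk]; ring⟩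
  obtain ⟨t, ht⟩ := h2
  have hnn : 0 ≤ t := by nlinarith [sq_nonneg (2*j+1)]
  refine ⟨t, ht, ?_, hnn⟩
  rw [E3, ht]
  omega

lemma e5_def (a : ℕ) (ha : a ≤ 2) (j : ℤ) :
    ∃ t : ℤ, j * (5*j+2*a+1) = 2 * t ∧ (E5 a j : ℤ) = t ∧ 0 ≤ t := by
  have h2 : 2 ∣ j * (5*j+2*a+1) := by
    rcases Int.even_or_odd j with he | ho
    · obtain ⟨k, hk⟩ := he
      exact ⟨k * (5*j+2*a+1), by rw [hk]; ring⟩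
    · obtain ⟨k, hk⟩ := ho
      exact ⟨j * (5*k+a+3), by rw [hk]; push_cast; ring⟩
  obtain ⟨t, ht⟩ := h2
  have hnn : 0 ≤ t := by
    rcases le_or_gt 0 j with h | h
    · nlinarith
    · nlinarith [mul_nonneg (show (0:ℤ) ≤ -j by omega)
        (show (0:ℤ) ≤ 5*(-j) - (2*(a:ℤ)+1) by omega)]
  refine ⟨t, ht, ?_, hnn⟩
  rw [E5, ht]
  omega

/- ### specialized Pascal rules (base q) -/

lemma P1 (n : ℕ) (m : ℤ) :
    Bz 1 (n+1) m = Bz 1 n m + (X : PS) ^ (((n:ℤ) + 1 - m).toNat) * Bz 1 n (m-1) := by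
  simpa using Bz_pascal1 1 n one_ne_zero m

lemma P2 (n : ℕ) (m : ℤ) :
    Bz 1 (n+1) m = Bz 1 n (m-1) + (X : PS) ^ (m.toNat) * Bz 1 n m := by
  simpa using Bz_pascal2 1 n one_ne_zero m

lemma Bz_bounds {c n : ℕ} {m : ℤ} (h : Bz c n m ≠ 0) : 0 ≤ m ∧ m ≤ n := by
  by_contra hh
  exact h (Bz_eq_zero hh)

/- ### the inner identities -/

/-- inner identity (I): `∑_j (-1)^j q^{j(3j+1)/2} B(n,w-j)B(n,w+j) = B(n,w)` -/
def StmtI (n : ℕ) : Prop := ∀ w : ℤ,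
  ∑ j ∈ IZ n, sg j * (X:PS) ^ (E1 j) * (Bz 1 n (w-j) * Bz 1 n (w+j)) = Bz 1 n w

lemma suppI (n : ℕ) (w : ℤ) :
    ∀ j, sg j * (X:PS) ^ (E1 j) * (Bz 1 n (w-j) * Bz 1 n (w+j)) ≠ 0 → j ∈ IZ n := by
  intro j hne
  have h1 : Bz 1 n (w-j) ≠ 0 := fun h => hne (by rw [h]; ring)
  have h2 : Bz 1 n (w+j) ≠ 0 := fun h => hne (by rw [h]; ring)
  have b1 := Bz_bounds h1
  have b2 := Bz_bounds h2
  rw [mem_IZ]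
  omega

/-- inner identity (Q): `∑_j (-1)^j q^{j(3j+1)/2} B(n,w-j)B(n+1,w+j+1) = B(n,w)` -/
lemma innerQ (n : ℕ) (hI : StmtI n) (w : ℤ) :
    ∑ j ∈ IZ (n+1), sg j * (X:PS) ^ (E1 j) * (Bz 1 n (w-j) * Bz 1 (n+1) (w+j+1))
      = Bz 1 n w := by
  have hsplit : ∀ j : ℤ, sg j * (X:PS) ^ (E1 j) * (Bz 1 n (w-j) * Bz 1 (n+1) (w+j+1))
      = sg j * (X:PS) ^ (E1 j) * (Bz 1 n (w-j) * Bz 1 n (w+j))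
        + sg j * (X:PS) ^ (E1 j) * (X:PS) ^ ((w+j+1).toNat) * (Bz 1 n (w-j) * Bz 1 n (w+j+1)) := by
    intro j
    rw [P2 n (w+j+1), show w+j+1-1 = w+j by ring]
    ring
  rw [Finset.sum_congr rfl (fun j _ => hsplit j), Finset.sum_add_distrib]
  have hA : ∑ j ∈ IZ (n+1), sg j * (X:PS) ^ (E1 j) * (Bz 1 n (w-j) * Bz 1 n (w+j))
      = Bz 1 n w := by
    rw [sum_of_supp (IZ_subset (Nat.le_succ n)) (suppI n w)]
    exact hI w
  have hB : ∑ j ∈ IZ (n+1),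
      sg j * (X:PS) ^ (E1 j) * (X:PS) ^ ((w+j+1).toNat) * (Bz 1 n (w-j) * Bz 1 n (w+j+1)) = 0 := by
    apply sum_invol (C := n+1)
    · intro j hne
      have h1 : Bz 1 n (w-j) ≠ 0 := fun h => hne (by rw [h]; ring)
      have h2 : Bz 1 n (w+j+1) ≠ 0 := fun h => hne (by rw [h]; ring)
      have b1 := Bz_bounds h1
      have b2 := Bz_bounds h2
      rw [mem_IZ]
      omega
    · intro j
      rcases eq_or_ne (Bz 1 n (w-j) * Bz 1 n (w+j+1)) 0 with h0 | h0
      · have e1 : w - (-j-1) = w+j+1 := by ring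
        have e2 : w + (-j-1) + 1 = w-j := by ring
        rw [e1, e2]
        rcases mul_eq_zero.mp h0 with h | h <;> rw [h] <;> ring_nf <;> simp [h0]
      · have h1 : Bz 1 n (w-j) ≠ 0 := fun h => h0 (by rw [h]; ring)
        have h2 : Bz 1 n (w+j+1) ≠ 0 := fun h => h0 (by rw [h]; ring)
        have b1 := Bz_bounds h1
        have b2 := Bz_bounds h2
        have e1 : w - (-j-1) = w+j+1 := by ring
        have e2 : w + (-j-1) + 1 = w-j := by ring
        rw [e1, e2, sg_negsub]
        obtain ⟨t, ht, het, htp⟩ := e1_def j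
        obtain ⟨t', ht', het', htp'⟩ := e1_def (-j-1)
        have hrel : 2*t' = 2*t + 4*j + 2 := by linear_combination ht - ht'
        have hexp : E1 (-j-1) + (w-j).toNat = E1 j + (w+j+1).toNat := by omega
        calc -sg j * (X:PS) ^ (E1 (-j-1)) * (X:PS) ^ ((w-j).toNat)
              * (Bz 1 n (w+j+1) * Bz 1 n (w-j))
            = -(sg j * ((X:PS) ^ (E1 (-j-1) + (w-j).toNat))
                * (Bz 1 n (w-j) * Bz 1 n (w+j+1))) := by rw [pow_add]; ring
          _ = -(sg j * (X:PS) ^ (E1 j) * (X:PS) ^ ((w+j+1).toNat)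
                * (Bz 1 n (w-j) * Bz 1 n (w+j+1))) := by rw [hexp, pow_add]; ring
  rw [hA, hB, add_zero]

/-- inner identity (II): `∑_j (-1)^j q^{j(3j+1)/2} B(n+1,w-j)B(n,w+j) = B(n,w)` -/
lemma innerII (n : ℕ) (hI : StmtI n) (w : ℤ) :
    ∑ j ∈ IZ (n+1), sg j * (X:PS) ^ (E1 j) * (Bz 1 (n+1) (w-j) * Bz 1 n (w+j))
      = Bz 1 n w := by
  have hsplit : ∀ j : ℤ, sg j * (X:PS) ^ (E1 j) * (Bz 1 (n+1) (w-j) * Bz 1 n (w+j))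
      = sg j * (X:PS) ^ (E1 j) * (Bz 1 n (w-j) * Bz 1 n (w+j))
        + sg j * (X:PS) ^ (E1 j) * (X:PS) ^ (((n:ℤ)+1-w+j).toNat) * (Bz 1 n (w-j-1) * Bz 1 n (w+j)) := by
    intro j
    rw [P1 n (w-j), show (n:ℤ)+1-(w-j) = (n:ℤ)+1-w+j by ring]
    ring
  rw [Finset.sum_congr rfl (fun j _ => hsplit j), Finset.sum_add_distrib]
  have hA : ∑ j ∈ IZ (n+1), sg j * (X:PS) ^ (E1 j) * (Bz 1 n (w-j) * Bz 1 n (w+j))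
      = Bz 1 n w := by
    rw [sum_of_supp (IZ_subset (Nat.le_succ n)) (suppI n w)]
    exact hI w
  have hB : ∑ j ∈ IZ (n+1),
      sg j * (X:PS) ^ (E1 j) * (X:PS) ^ (((n:ℤ)+1-w+j).toNat)
        * (Bz 1 n (w-j-1) * Bz 1 n (w+j)) = 0 := by
    apply sum_invol (C := n+1)
    · intro j hne
      have h1 : Bz 1 n (w-j-1) ≠ 0 := fun h => hne (by rw [h]; ring)
      have h2 : Bz 1 n (w+j) ≠ 0 := fun h => hne (by rw [h]; ring)
      have b1 := Bz_bounds h1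
      have b2 := Bz_bounds h2
      rw [mem_IZ]
      omega
    · intro j
      have e1 : w - (-j-1) - 1 = w+j := by ring
      have e2 : w + (-j-1) = w-j-1 := by ring
      rcases eq_or_ne (Bz 1 n (w-j-1) * Bz 1 n (w+j)) 0 with h0 | h0
      · rw [e1, e2]
        rcases mul_eq_zero.mp h0 with h | h <;> rw [h] <;> ring_nf <;> simp [h0]
      · have h1 : Bz 1 n (w-j-1) ≠ 0 := fun h => h0 (by rw [h]; ring)
        have h2 : Bz 1 n (w+j) ≠ 0 := fun h => h0 (by rw [h]; ring)
        have b1 := Bz_bounds h1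
        have b2 := Bz_bounds h2
        have e3 : (n:ℤ)+1-w+(-j-1) = (n:ℤ)-w-j := by ring
        rw [e1, e2, e3, sg_negsub]
        obtain ⟨t, ht, het, htp⟩ := e1_def j
        obtain ⟨t', ht', het', htp'⟩ := e1_def (-j-1)
        have hrel : 2*t' = 2*t + 4*j + 2 := by linear_combination ht - ht'
        have hexp : E1 (-j-1) + ((n:ℤ)-w-j).toNat = E1 j + ((n:ℤ)+1-w+j).toNat := by omega
        calc -sg j * (X:PS) ^ (E1 (-j-1)) * (X:PS) ^ (((n:ℤ)-w-j).toNat)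
              * (Bz 1 n (w+j) * Bz 1 n (w-j-1))
            = -(sg j * ((X:PS) ^ (E1 (-j-1) + ((n:ℤ)-w-j).toNat))
                * (Bz 1 n (w-j-1) * Bz 1 n (w+j))) := by rw [pow_add]; ring
          _ = -(sg j * (X:PS) ^ (E1 j) * (X:PS) ^ (((n:ℤ)+1-w+j).toNat)
                * (Bz 1 n (w-j-1) * Bz 1 n (w+j))) := by rw [hexp, pow_add]; ring
  rw [hA, hB, add_zero]

/-- The inner identity (I), by induction. -/
lemma innerI : ∀ n : ℕ, StmtI n := by
  intro n
  induction n with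
  | zero =>
    intro w
    have : IZ 0 = {0} := by
      rw [IZ]
      norm_num
    rw [this, Finset.sum_singleton]
    simp only [sub_zero, add_zero]
    rcases eq_or_ne w 0 with hw | hw
    · subst hw
      rw [Bz_zero_left 1 0 one_ne_zero]
      simp [sg, E1]
    · rw [Bz_eq_zero (by simp; omega)]
      ring
  | succ n ih =>
    intro w
    have hsplit : ∀ j : ℤ, sg j * (X:PS) ^ (E1 j) * (Bz 1 (n+1) (w-j) * Bz 1 (n+1) (w+j))
        = sg j * (X:PS) ^ (E1 j) * (Bz 1 (n+1) (w-j) * Bz 1 n (w+j))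
          + sg j * (X:PS) ^ (E1 j) * (X:PS) ^ (((n:ℤ)+1-w-j).toNat)
            * (Bz 1 (n+1) (w-j) * Bz 1 n (w+j-1)) := by
      intro j
      nth_rewrite 1 [P1 n (w+j)]
      rw [show (n:ℤ)+1-(w+j) = (n:ℤ)+1-w-j by ring]
      ring
    rw [Finset.sum_congr rfl (fun j _ => hsplit j), Finset.sum_add_distrib]
    have hA : ∑ j ∈ IZ (n+1), sg j * (X:PS) ^ (E1 j) * (Bz 1 (n+1) (w-j) * Bz 1 n (w+j))
        = Bz 1 n w := innerII n ih w
    have hB : ∑ j ∈ IZ (n+1),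
        sg j * (X:PS) ^ (E1 j) * (X:PS) ^ (((n:ℤ)+1-w-j).toNat)
          * (Bz 1 (n+1) (w-j) * Bz 1 n (w+j-1))
        = (X:PS) ^ (((n:ℤ)+1-w).toNat) * Bz 1 n (w-1) := by
      rw [← sum_neg_reindex (fun j => sg j * (X:PS) ^ (E1 j) * (X:PS) ^ (((n:ℤ)+1-w-j).toNat)
          * (Bz 1 (n+1) (w-j) * Bz 1 n (w+j-1))) (n+1)]
      have hterm : ∀ j : ℤ,
          sg (-j) * (X:PS) ^ (E1 (-j)) * (X:PS) ^ (((n:ℤ)+1-w-(-j)).toNat)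
            * (Bz 1 (n+1) (w-(-j)) * Bz 1 n (w+(-j)-1))
          = (X:PS) ^ (((n:ℤ)+1-w).toNat)
            * (sg j * (X:PS) ^ (E1 j) * (Bz 1 n ((w-1)-j) * Bz 1 (n+1) ((w-1)+j+1))) := by
        intro j
        have e1 : w - -j = w + j := by ring
        have e2 : w + -j - 1 = (w-1)-j := by ring
        have e3 : (w-1)+j+1 = w + j := by ring
        have e4 : (n:ℤ)+1-w-(-j) = (n:ℤ)+1-w+j := by ring
        rw [e1, e2, e3, e4, sg_neg]
        rcases eq_or_ne (Bz 1 (n+1) (w+j) * Bz 1 n ((w-1)-j)) 0 with h0 | h0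
        · rcases mul_eq_zero.mp h0 with h | h <;> rw [h] <;> ring
        · have h1 : Bz 1 (n+1) (w+j) ≠ 0 := fun h => h0 (by rw [h]; ring)
          have h2 : Bz 1 n ((w-1)-j) ≠ 0 := fun h => h0 (by rw [h]; ring)
          have b1 := Bz_bounds h1
          have b2 := Bz_bounds h2
          obtain ⟨t, ht, het, htp⟩ := e1_def j
          obtain ⟨t', ht', het', htp'⟩ := e1_def (-j)
          have hrel : 2*t' = 2*t - 2*j := by linear_combination ht - ht'
          have hexp : E1 (-j) + ((n:ℤ)+1-w+j).toNat
              = ((n:ℤ)+1-w).toNat + E1 j := by omega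
          calc sg j * (X:PS) ^ (E1 (-j)) * (X:PS) ^ (((n:ℤ)+1-w+j).toNat)
                * (Bz 1 (n+1) (w+j) * Bz 1 n ((w-1)-j))
              = sg j * (X:PS) ^ (E1 (-j) + ((n:ℤ)+1-w+j).toNat)
                * (Bz 1 (n+1) (w+j) * Bz 1 n ((w-1)-j)) := by rw [pow_add]; ring
            _ = (X:PS) ^ (((n:ℤ)+1-w).toNat)
                * (sg j * (X:PS) ^ (E1 j) * (Bz 1 n ((w-1)-j) * Bz 1 (n+1) (w+j))) := by
                rw [hexp, pow_add]; ring
      rw [Finset.sum_congr rfl (fun j _ => hterm j), ← Finset.mul_sum]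
      congr 1
      exact innerQ n ih (w-1)
    rw [hA, hB]
    have := P1 n w
    rw [this]
/- ### q-Vandermonde -/

lemma vand (m : ℕ) : ∀ (p : ℕ) (r : ℤ), Bz 1 (m + p) r
    = ∑ k ∈ IZ m, (X:PS) ^ ((((m:ℤ)-k)*(r-k)).toNat) * (Bz 1 m k * Bz 1 p (r-k)) := by
  intro p
  induction p with
  | zero =>
    intro r
    rcases Classical.em (0 ≤ r ∧ r ≤ (m:ℤ)) with hr | hr
    · rw [Finset.sum_eq_single_of_mem r (by rw [mem_IZ]; omega)]
      · rw [sub_self, mul_zero, Int.toNat_zero, pow_zero, one_mul,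
          Bz_zero_left 1 0 one_ne_zero, mul_one, Nat.add_zero]
      · intro k _ hkr
        rw [Bz_eq_zero (c := 1) (n := 0) (m := r - k) (by simp; omega)]
        ring
    · rw [Bz_eq_zero (c := 1) (n := m + 0) (m := r) (by push_cast; omega)]
      symm
      apply Finset.sum_eq_zero
      intro k hk
      rw [mem_IZ] at hk
      rcases Classical.em (0 ≤ k ∧ k ≤ (m:ℤ)) with hk2 | hk2
      · rw [Bz_eq_zero (c := 1) (n := 0) (m := r - k) (by simp; omega)]
        ring
      · rw [Bz_eq_zero (c := 1) (n := m) (m := k) hk2]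
        ring
  | succ p ih =>
    intro r
    have hL : Bz 1 (m + (p+1)) r
        = Bz 1 (m+p) r + (X:PS) ^ (((m:ℤ)+p+1-r).toNat) * Bz 1 (m+p) (r-1) := by
      rw [show m + (p+1) = (m+p) + 1 by ring]
      rw [P1 (m+p) r]
      norm_num
    rw [hL, ih r, ih (r-1), Finset.mul_sum, ← Finset.sum_add_distrib]
    apply Finset.sum_congr rfl
    intro k _
    rw [P1 p (r-k), show r - k - 1 = r-1-k by ring]
    rcases eq_or_ne (Bz 1 m k) 0 with h0 | h0
    · rw [h0]; ring
    · have b1 := Bz_bounds h0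
      rcases eq_or_ne (Bz 1 p (r-1-k)) 0 with h2 | h2
      · rw [h2]; ring
      · have b2 := Bz_bounds h2
        have hexp : (((m:ℤ)+p+1-r)).toNat + (((m:ℤ)-k)*(r-1-k)).toNat
            = (((m:ℤ)-k)*(r-k)).toNat + (((p:ℤ)+1-(r-k))).toNat := by
          have hA0 : (0:ℤ) ≤ ((m:ℤ)-k)*(r-1-k) := mul_nonneg (by omega) (by omega)
          rw [show ((m:ℤ)-k)*(r-k) = ((m:ℤ)-k)*(r-1-k) + ((m:ℤ)-k) by ring]
          generalize hg : ((m:ℤ)-k)*(r-1-k) = A at hA0 ⊢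
          omega
        have hX : (X:PS) ^ (((m:ℤ)+p+1-r).toNat) * (X:PS) ^ ((((m:ℤ)-k)*(r-1-k)).toNat)
            = (X:PS) ^ ((((m:ℤ)-k)*(r-k)).toNat) * (X:PS) ^ ((((p:ℤ)+1-(r-k))).toNat) := by
          rw [← pow_add, ← pow_add, hexp]
        calc (X:PS) ^ ((((m:ℤ)-k)*(r-k)).toNat) * (Bz 1 m k * Bz 1 p (r-k))
              + (X:PS) ^ (((m:ℤ)+p+1-r).toNat)
              * ((X:PS) ^ ((((m:ℤ)-k)*(r-1-k)).toNat) * (Bz 1 m k * Bz 1 p (r-1-k)))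
            = (X:PS) ^ ((((m:ℤ)-k)*(r-k)).toNat) * (Bz 1 m k * Bz 1 p (r-k))
              + ((X:PS) ^ (((m:ℤ)+p+1-r).toNat) * (X:PS) ^ ((((m:ℤ)-k)*(r-1-k)).toNat))
              * (Bz 1 m k * Bz 1 p (r-1-k)) := by ring
          _ = (X:PS) ^ ((((m:ℤ)-k)*(r-k)).toNat) * (Bz 1 m k * Bz 1 p (r-k))
              + ((X:PS) ^ ((((m:ℤ)-k)*(r-k)).toNat) * (X:PS) ^ ((((p:ℤ)+1-(r-k))).toNat))
              * (Bz 1 m k * Bz 1 p (r-1-k)) := by rw [hX]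
          _ = (X:PS) ^ ((((m:ℤ)-k)*(r-k)).toNat)
              * (Bz 1 m k * (Bz 1 p (r-k)
                + (X:PS) ^ (((p:ℤ)+1-(r-k)).toNat) * Bz 1 p (r-1-k))) := by ring

/- ### inner identity (III) -/

lemma innerIII (n : ℕ) (hI : StmtI n) (w : ℤ) :
    ∑ j ∈ IZ (n+1), sg j * (X:PS) ^ (E3 j) * (Bz 1 (n+1) (w-j) * Bz 1 n (w+j))
      = (X:PS) ^ (w.toNat) * Bz 1 n w := by
  have hsplit : ∀ j : ℤ, sg j * (X:PS) ^ (E3 j) * (Bz 1 (n+1) (w-j) * Bz 1 n (w+j))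
      = sg j * (X:PS) ^ (E3 j) * (Bz 1 n (w-j-1) * Bz 1 n (w+j))
        + sg j * (X:PS) ^ (E3 j) * (X:PS) ^ ((w-j).toNat) * (Bz 1 n (w-j) * Bz 1 n (w+j)) := by
    intro j
    rw [P2 n (w-j)]
    ring
  rw [Finset.sum_congr rfl (fun j _ => hsplit j), Finset.sum_add_distrib]
  have hA : ∑ j ∈ IZ (n+1),
      sg j * (X:PS) ^ (E3 j) * (Bz 1 n (w-j-1) * Bz 1 n (w+j)) = 0 := by
    apply sum_invol (C := n+1)
    · intro j hne
      have h1 : Bz 1 n (w-j-1) ≠ 0 := fun h => hne (by rw [h]; ring)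
      have h2 : Bz 1 n (w+j) ≠ 0 := fun h => hne (by rw [h]; ring)
      have b1 := Bz_bounds h1
      have b2 := Bz_bounds h2
      rw [mem_IZ]
      omega
    · intro j
      have e1 : w - (-j-1) - 1 = w + j := by ring
      have e2 : w + (-j-1) = w - j - 1 := by ring
      rw [e1, e2, sg_negsub]
      obtain ⟨t, ht, het, htp⟩ := e3_def j
      obtain ⟨t', ht', het', htp'⟩ := e3_def (-j-1)
      have hrel : 2*t' = 2*t := by linear_combination ht - ht'
      have hexp : E3 (-j-1) = E3 j := by omega
      rw [hexp]
      ring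
  have hB : ∑ j ∈ IZ (n+1),
      sg j * (X:PS) ^ (E3 j) * (X:PS) ^ ((w-j).toNat) * (Bz 1 n (w-j) * Bz 1 n (w+j))
      = (X:PS) ^ (w.toNat) * Bz 1 n w := by
    have hterm : ∀ j : ℤ,
        sg j * (X:PS) ^ (E3 j) * (X:PS) ^ ((w-j).toNat) * (Bz 1 n (w-j) * Bz 1 n (w+j))
        = (X:PS) ^ (w.toNat) * (sg j * (X:PS) ^ (E1 j) * (Bz 1 n (w-j) * Bz 1 n (w+j))) := by
      intro j
      rcases eq_or_ne (Bz 1 n (w-j) * Bz 1 n (w+j)) 0 with h0 | h0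
      · rcases mul_eq_zero.mp h0 with h | h <;> rw [h] <;> ring
      · have h1 : Bz 1 n (w-j) ≠ 0 := fun h => h0 (by rw [h]; ring)
        have h2 : Bz 1 n (w+j) ≠ 0 := fun h => h0 (by rw [h]; ring)
        have b1 := Bz_bounds h1
        have b2 := Bz_bounds h2
        obtain ⟨t, ht, het, htp⟩ := e3_def j
        obtain ⟨t', ht', het', htp'⟩ := e1_def j
        have hrel : 2*t = 2*t' + 2*j := by linear_combination ht' - ht
        have hexp : E3 j + (w-j).toNat = w.toNat + E1 j := by omega
        calc sg j * (X:PS) ^ (E3 j) * (X:PS) ^ ((w-j).toNat) * (Bz 1 n (w-j) * Bz 1 n (w+j))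
            = sg j * (X:PS) ^ (E3 j + (w-j).toNat) * (Bz 1 n (w-j) * Bz 1 n (w+j)) := by
              rw [pow_add]; ring
          _ = sg j * (X:PS) ^ (w.toNat + E1 j) * (Bz 1 n (w-j) * Bz 1 n (w+j)) := by rw [hexp]
          _ = (X:PS) ^ (w.toNat) * (sg j * (X:PS) ^ (E1 j) * (Bz 1 n (w-j) * Bz 1 n (w+j))) := by
              rw [pow_add]; ring
    rw [Finset.sum_congr rfl (fun j _ => hterm j), ← Finset.mul_sum,
      sum_of_supp (IZ_subset (Nat.le_succ n)) (suppI n w), hI w]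
  rw [hA, hB, zero_add]

/- ### bijection helper for double sums -/

lemma sum_bij_of_ne {α β : Type} [DecidableEq α] [DecidableEq β]
    (s : Finset α) (t : Finset β) (F : α → PS) (G : β → PS) (φ : α → β) (ψ : β → α)
    (hψφ : ∀ a, F a ≠ 0 → ψ (φ a) = a) (hφψ : ∀ b, G b ≠ 0 → φ (ψ b) = b)
    (hmem1 : ∀ a ∈ s, F a ≠ 0 → φ a ∈ t) (hmem2 : ∀ b ∈ t, G b ≠ 0 → ψ b ∈ s)
    (h1 : ∀ a ∈ s, F a ≠ 0 → F a = G (φ a)) (h2 : ∀ b ∈ t, G b ≠ 0 → G b = F (ψ b)) :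
    ∑ a ∈ s, F a = ∑ b ∈ t, G b := by
  classical
  rw [← Finset.sum_filter_ne_zero s, ← Finset.sum_filter_ne_zero t]
  apply Finset.sum_nbij' (i := φ) (j := ψ)
  · intro a ha
    rw [Finset.mem_filter] at ha ⊢
    exact ⟨hmem1 a ha.1 ha.2, by rw [← h1 a ha.1 ha.2]; exact ha.2⟩
  · intro b hb
    rw [Finset.mem_filter] at hb ⊢
    exact ⟨hmem2 b hb.1 hb.2, by rw [← h2 b hb.1 hb.2]; exact hb.2⟩
  · intro a ha
    rw [Finset.mem_filter] at ha
    exact hψφ a ha.2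
  · intro b hb
    rw [Finset.mem_filter] at hb
    exact hφψ b hb.2
  · intro a ha
    rw [Finset.mem_filter] at ha
    exact h1 a ha.1 ha.2
/- ### outer identities -/

noncomputable def F0 (n : ℕ) (p : ℤ × ℤ) : PS :=
  sg p.1 * (X:PS)^(E5 0 p.1) * ((X:PS) ^ ((((n:ℤ)-p.2)*((n:ℤ)+2*p.1-p.2)).toNat)
    * (Bz 1 n p.2 * Bz 1 n ((n:ℤ)+2*p.1-p.2)))

noncomputable def G0 (n : ℕ) (p : ℤ × ℤ) : PS :=
  (X:PS)^((p.1*p.1).toNat) * (sg p.2 * (X:PS)^(E1 p.2)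
    * (Bz 1 n (p.1-p.2) * Bz 1 n (p.1+p.2)))

lemma key0 (n : ℕ) (j k : ℤ) (hb1 : 0 ≤ k) (hb1' : k ≤ (n:ℤ))
    (hb2 : 0 ≤ (n:ℤ)+2*j-k) (hb2' : (n:ℤ)+2*j-k ≤ (n:ℤ)) :
    F0 n (j, k) = G0 n ((n:ℤ)+j-k, j) := by
  have hs : Bz 1 n ((n:ℤ)+j-k-j) = Bz 1 n k := by
    rw [show (n:ℤ)+j-k-j = (n:ℤ)-k by ring]
    exact Bz_symm 1 n k
  have ha2 : (n:ℤ)+j-k+j = (n:ℤ)+2*j-k := by ring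
  have hexp : E5 0 j + (((n:ℤ)-k)*((n:ℤ)+2*j-k)).toNat
      = (((n:ℤ)+j-k)*((n:ℤ)+j-k)).toNat + E1 j := by
    have hA0 : (0:ℤ) ≤ ((n:ℤ)-k)*((n:ℤ)+2*j-k) := mul_nonneg (by omega) (by omega)
    have hW0 : (0:ℤ) ≤ ((n:ℤ)+j-k)*((n:ℤ)+j-k) := mul_self_nonneg _
    have hrel : ((n:ℤ)-k)*((n:ℤ)+2*j-k) = ((n:ℤ)+j-k)*((n:ℤ)+j-k) - j*j := by ring
    obtain ⟨t5, ht5, he5, ht5p⟩ := e5_def 0 (by norm_num) j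
    obtain ⟨t1, ht1, he1, ht1p⟩ := e1_def j
    have h5 : 2*t5 = 5*(j*j) + j := by push_cast at ht5; linear_combination -ht5
    have h1 : 2*t1 = 3*(j*j) + j := by linear_combination -ht1
    rw [hrel] at hA0 ⊢
    generalize hW : ((n:ℤ)+j-k)*((n:ℤ)+j-k) = W at hA0 hW0 ⊢
    generalize hJ : j*j = J at hA0 h5 h1 ⊢
    omega
  simp only [F0, G0]
  rw [hs, ha2]
  calc sg j * (X:PS)^(E5 0 j) * ((X:PS) ^ ((((n:ℤ)-k)*((n:ℤ)+2*j-k)).toNat)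
        * (Bz 1 n k * Bz 1 n ((n:ℤ)+2*j-k)))
      = (X:PS)^(E5 0 j + (((n:ℤ)-k)*((n:ℤ)+2*j-k)).toNat)
        * (sg j * (Bz 1 n k * Bz 1 n ((n:ℤ)+2*j-k))) := by rw [pow_add]; ring
    _ = (X:PS)^((((n:ℤ)+j-k)*((n:ℤ)+j-k)).toNat + E1 j)
        * (sg j * (Bz 1 n k * Bz 1 n ((n:ℤ)+2*j-k))) := by rw [hexp]
    _ = (X:PS)^((((n:ℤ)+j-k)*((n:ℤ)+j-k)).toNat) * (sg j * (X:PS)^(E1 j)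
        * (Bz 1 n k * Bz 1 n ((n:ℤ)+2*j-k))) := by rw [pow_add]; ring

lemma outer0 (n : ℕ) :
    ∑ j ∈ IZ n, sg j * (X:PS)^(E5 0 j) * Bz 1 (2*n) ((n:ℤ)+2*j)
      = ∑ w ∈ IZ n, (X:PS)^((w*w).toNat) * Bz 1 n w := by
  have step1 : ∀ j : ℤ, sg j * (X:PS)^(E5 0 j) * Bz 1 (2*n) ((n:ℤ)+2*j)
      = ∑ k ∈ IZ n, F0 n (j, k) := by
    intro j
    rw [show 2*n = n + n by ring, vand n n ((n:ℤ)+2*j), Finset.mul_sum]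
    apply Finset.sum_congr rfl
    intro k _
    simp only [F0]
  rw [Finset.sum_congr rfl (fun j _ => step1 j), ← Finset.sum_product]
  have step3 : ∑ p ∈ IZ n ×ˢ IZ n, F0 n p = ∑ p ∈ IZ n ×ˢ IZ n, G0 n p := by
    apply sum_bij_of_ne _ _ _ _ (fun p => ((n:ℤ)+p.1-p.2, p.1)) (fun p => (p.2, (n:ℤ)+p.2-p.1))
    · rintro ⟨j, k⟩ _
      show ((j : ℤ), (n:ℤ)+j-((n:ℤ)+j-k)) = (j, k)
      rw [show (n:ℤ)+j-((n:ℤ)+j-k) = k by ring]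
    · rintro ⟨w, i⟩ _
      show (((n:ℤ)+i-((n:ℤ)+i-w), (i:ℤ))) = (w, i)
      rw [show (n:ℤ)+i-((n:ℤ)+i-w) = w by ring]
    · rintro ⟨j, k⟩ hm hne
      have h1 : Bz 1 n k ≠ 0 := fun h => hne (by simp only [F0]; rw [h]; ring)
      have h2 : Bz 1 n ((n:ℤ)+2*j-k) ≠ 0 := fun h => hne (by simp only [F0]; rw [h]; ring)
      have b1 := Bz_bounds h1
      have b2 := Bz_bounds h2
      simp only [Finset.mem_product, mem_IZ] at hm ⊢
      omega
    · rintro ⟨w, i⟩ hm hne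
      have h1 : Bz 1 n (w-i) ≠ 0 := fun h => hne (by simp only [G0]; rw [h]; ring)
      have h2 : Bz 1 n (w+i) ≠ 0 := fun h => hne (by simp only [G0]; rw [h]; ring)
      have b1 := Bz_bounds h1
      have b2 := Bz_bounds h2
      simp only [Finset.mem_product, mem_IZ] at hm ⊢
      omega
    · rintro ⟨j, k⟩ _ hne
      have h1 : Bz 1 n k ≠ 0 := fun h => hne (by simp only [F0]; rw [h]; ring)
      have h2 : Bz 1 n ((n:ℤ)+2*j-k) ≠ 0 := fun h => hne (by simp only [F0]; rw [h]; ring)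
      have b1 := Bz_bounds h1
      have b2 := Bz_bounds h2
      exact key0 n j k b1.1 b1.2 b2.1 b2.2
    · rintro ⟨w, i⟩ _ hne
      have h1 : Bz 1 n (w-i) ≠ 0 := fun h => hne (by simp only [G0]; rw [h]; ring)
      have h2 : Bz 1 n (w+i) ≠ 0 := fun h => hne (by simp only [G0]; rw [h]; ring)
      have b1 := Bz_bounds h1
      have b2 := Bz_bounds h2
      have hk := key0 n i ((n:ℤ)+i-w) (by omega) (by omega) (by omega) (by omega)
      rw [show (n:ℤ)+i-((n:ℤ)+i-w) = w by ring] at hk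
      exact hk.symm
  rw [step3, Finset.sum_product]
  apply Finset.sum_congr rfl
  intro w _
  have hunf : ∀ i : ℤ, G0 n (w, i)
      = (X:PS)^((w*w).toNat) * (sg i * (X:PS)^(E1 i) * (Bz 1 n (w-i) * Bz 1 n (w+i))) :=
    fun i => rfl
  rw [Finset.sum_congr rfl (fun i _ => hunf i), ← Finset.mul_sum, innerI n w]

noncomputable def F1 (n : ℕ) (p : ℤ × ℤ) : PS :=
  sg p.1 * (X:PS)^(E5 1 p.1) * ((X:PS) ^ ((((n:ℤ)+1-p.2)*((n:ℤ)+1+2*p.1-p.2)).toNat)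
    * (Bz 1 (n+1) p.2 * Bz 1 n ((n:ℤ)+1+2*p.1-p.2)))

noncomputable def G1 (n : ℕ) (p : ℤ × ℤ) : PS :=
  (X:PS)^((p.1*p.1).toNat) * (sg p.2 * (X:PS)^(E3 p.2)
    * (Bz 1 (n+1) (p.1-p.2) * Bz 1 n (p.1+p.2)))

lemma key1 (n : ℕ) (j k : ℤ) (hb1 : 0 ≤ k) (hb1' : k ≤ (n:ℤ)+1)
    (hb2 : 0 ≤ (n:ℤ)+1+2*j-k) (hb2' : (n:ℤ)+1+2*j-k ≤ (n:ℤ)) :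
    F1 n (j, k) = G1 n ((n:ℤ)+1+j-k, j) := by
  have hs : Bz 1 (n+1) ((n:ℤ)+1+j-k-j) = Bz 1 (n+1) k := by
    rw [show (n:ℤ)+1+j-k-j = ((n+1:ℕ):ℤ)-k by push_cast; ring]
    exact Bz_symm 1 (n+1) k
  have ha2 : (n:ℤ)+1+j-k+j = (n:ℤ)+1+2*j-k := by ring
  have hexp : E5 1 j + (((n:ℤ)+1-k)*((n:ℤ)+1+2*j-k)).toNat
      = ((((n:ℤ)+1+j-k)*((n:ℤ)+1+j-k)).toNat) + E3 j := by
    have hA0 : (0:ℤ) ≤ ((n:ℤ)+1-k)*((n:ℤ)+1+2*j-k) := mul_nonneg (by omega) (by omega)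
    have hW0 : (0:ℤ) ≤ ((n:ℤ)+1+j-k)*((n:ℤ)+1+j-k) := mul_self_nonneg _
    have hrel : ((n:ℤ)+1-k)*((n:ℤ)+1+2*j-k) = ((n:ℤ)+1+j-k)*((n:ℤ)+1+j-k) - j*j := by ring
    obtain ⟨t5, ht5, he5, ht5p⟩ := e5_def 1 (by norm_num) j
    obtain ⟨t3, ht3, he3, ht3p⟩ := e3_def j
    have h5 : 2*t5 = 5*(j*j) + 3*j := by push_cast at ht5; linear_combination -ht5
    have h3 : 2*t3 = 3*(j*j) + 3*j := by linear_combination -ht3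
    rw [hrel] at hA0 ⊢
    generalize hW : ((n:ℤ)+1+j-k)*((n:ℤ)+1+j-k) = W at hA0 hW0 ⊢
    generalize hJ : j*j = J at hA0 h5 h3 ⊢
    omega
  simp only [F1, G1]
  rw [hs, ha2]
  calc sg j * (X:PS)^(E5 1 j) * ((X:PS) ^ ((((n:ℤ)+1-k)*((n:ℤ)+1+2*j-k)).toNat)
        * (Bz 1 (n+1) k * Bz 1 n ((n:ℤ)+1+2*j-k)))
      = (X:PS)^(E5 1 j + (((n:ℤ)+1-k)*((n:ℤ)+1+2*j-k)).toNat)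
        * (sg j * (Bz 1 (n+1) k * Bz 1 n ((n:ℤ)+1+2*j-k))) := by rw [pow_add]; ring
    _ = (X:PS)^((((n:ℤ)+1+j-k)*((n:ℤ)+1+j-k)).toNat + E3 j)
        * (sg j * (Bz 1 (n+1) k * Bz 1 n ((n:ℤ)+1+2*j-k))) := by rw [hexp]
    _ = (X:PS)^((((n:ℤ)+1+j-k)*((n:ℤ)+1+j-k)).toNat) * (sg j * (X:PS)^(E3 j)
        * (Bz 1 (n+1) k * Bz 1 n ((n:ℤ)+1+2*j-k))) := by rw [pow_add]; ring

lemma outer1 (n : ℕ) :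
    ∑ j ∈ IZ (n+1), sg j * (X:PS)^(E5 1 j) * Bz 1 (2*n+1) ((n:ℤ)+1+2*j)
      = ∑ w ∈ IZ (n+1), (X:PS)^((w*(w+1)).toNat) * Bz 1 n w := by
  have step1 : ∀ j : ℤ, sg j * (X:PS)^(E5 1 j) * Bz 1 (2*n+1) ((n:ℤ)+1+2*j)
      = ∑ k ∈ IZ (n+1), F1 n (j, k) := by
    intro j
    rw [show 2*n+1 = (n+1) + n by ring, vand (n+1) n ((n:ℤ)+1+2*j), Finset.mul_sum]
    apply Finset.sum_congr rfl
    intro k _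
    simp only [F1]
    rw [show ((n+1:ℕ):ℤ) = (n:ℤ)+1 by push_cast; ring]
  rw [Finset.sum_congr rfl (fun j _ => step1 j), ← Finset.sum_product]
  have step3 : ∑ p ∈ IZ (n+1) ×ˢ IZ (n+1), F1 n p = ∑ p ∈ IZ (n+1) ×ˢ IZ (n+1), G1 n p := by
    apply sum_bij_of_ne _ _ _ _ (fun p => ((n:ℤ)+1+p.1-p.2, p.1)) (fun p => (p.2, (n:ℤ)+1+p.2-p.1))
    · rintro ⟨j, k⟩ _
      show ((j : ℤ), (n:ℤ)+1+j-((n:ℤ)+1+j-k)) = (j, k)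
      rw [show (n:ℤ)+1+j-((n:ℤ)+1+j-k) = k by ring]
    · rintro ⟨w, i⟩ _
      show (((n:ℤ)+1+i-((n:ℤ)+1+i-w), (i:ℤ))) = (w, i)
      rw [show (n:ℤ)+1+i-((n:ℤ)+1+i-w) = w by ring]
    · rintro ⟨j, k⟩ hm hne
      have h1 : Bz 1 (n+1) k ≠ 0 := fun h => hne (by simp only [F1]; rw [h]; ring)
      have h2 : Bz 1 n ((n:ℤ)+1+2*j-k) ≠ 0 := fun h => hne (by simp only [F1]; rw [h]; ring)
      have b1 := Bz_bounds h1
      have b2 := Bz_bounds h2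
      simp only [Finset.mem_product, mem_IZ] at hm ⊢
      push_cast at b1 b2 ⊢
      omega
    · rintro ⟨w, i⟩ hm hne
      have h1 : Bz 1 (n+1) (w-i) ≠ 0 := fun h => hne (by simp only [G1]; rw [h]; ring)
      have h2 : Bz 1 n (w+i) ≠ 0 := fun h => hne (by simp only [G1]; rw [h]; ring)
      have b1 := Bz_bounds h1
      have b2 := Bz_bounds h2
      simp only [Finset.mem_product, mem_IZ] at hm ⊢
      push_cast at b1 b2 ⊢
      omega
    · rintro ⟨j, k⟩ _ hne
      have h1 : Bz 1 (n+1) k ≠ 0 := fun h => hne (by simp only [F1]; rw [h]; ring)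
      have h2 : Bz 1 n ((n:ℤ)+1+2*j-k) ≠ 0 := fun h => hne (by simp only [F1]; rw [h]; ring)
      have b1 := Bz_bounds h1
      have b2 := Bz_bounds h2
      push_cast at b1
      exact key1 n j k b1.1 b1.2 b2.1 b2.2
    · rintro ⟨w, i⟩ _ hne
      have h1 : Bz 1 (n+1) (w-i) ≠ 0 := fun h => hne (by simp only [G1]; rw [h]; ring)
      have h2 : Bz 1 n (w+i) ≠ 0 := fun h => hne (by simp only [G1]; rw [h]; ring)
      have b1 := Bz_bounds h1
      have b2 := Bz_bounds h2
      push_cast at b1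
      have hk := key1 n i ((n:ℤ)+1+i-w) (by omega) (by omega) (by omega) (by omega)
      rw [show (n:ℤ)+1+i-((n:ℤ)+1+i-w) = w by ring] at hk
      exact hk.symm
  rw [step3, Finset.sum_product]
  apply Finset.sum_congr rfl
  intro w _
  have hunf : ∀ i : ℤ, G1 n (w, i)
      = (X:PS)^((w*w).toNat) * (sg i * (X:PS)^(E3 i) * (Bz 1 (n+1) (w-i) * Bz 1 n (w+i))) :=
    fun i => rfl
  rw [Finset.sum_congr rfl (fun i _ => hunf i), ← Finset.mul_sum,
    innerIII n (innerI n) w]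
  rcases eq_or_ne (Bz 1 n w) 0 with h0 | h0
  · rw [h0]; ring
  · have b := Bz_bounds h0
    have hexp : (w*w).toNat + w.toNat = (w*(w+1)).toNat := by
      have hW0 : (0:ℤ) ≤ w*w := mul_self_nonneg _
      have hrel : w*(w+1) = w*w + w := by ring
      rw [hrel]
      generalize hW : w*w = W at hW0 ⊢
      omega
    calc (X:PS)^((w*w).toNat) * ((X:PS)^(w.toNat) * Bz 1 n w)
        = (X:PS)^((w*w).toNat + w.toNat) * Bz 1 n w := by rw [pow_add]; ring
      _ = (X:PS)^((w*(w+1)).toNat) * Bz 1 n w := by rw [hexp]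
/- ### parity/sign extras -/

lemma sg_add (u v : ℤ) : sg (u+v) = sg u * sg v := by
  by_cases hu : Even u <;> by_cases hv : Even v <;>
    simp [sg, Int.even_add, hu, hv]

lemma negone_pow_eq_sg (n : ℕ) : ((-1 : PS))^n = sg (n : ℤ) := by
  induction n with
  | zero => simp [sg]
  | succ n ih =>
    rw [pow_succ, ih, show ((n+1:ℕ):ℤ) = (n:ℤ)+1 by push_cast; ring, sg_add]
    simp [sg]

/- ### triangular numbers -/

def T2 (m : ℤ) : ℕ := (m*(m-1)/2).toNat

lemma t2_def (m : ℤ) : ∃ t : ℤ, m * (m-1) = 2 * t ∧ (T2 m : ℤ) = t ∧ 0 ≤ t := by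
  have h2 : 2 ∣ m * (m-1) := by
    rcases Int.even_or_odd m with he | ho
    · obtain ⟨k, hk⟩ := he
      exact ⟨k * (m-1), by rw [hk]; ring⟩
    · obtain ⟨k, hk⟩ := ho
      exact ⟨m * k, by rw [hk]; ring⟩
  obtain ⟨t, ht⟩ := h2
  have hnn : 0 ≤ t := by nlinarith [sq_nonneg (2*m - 1)]
  refine ⟨t, ht, ?_, hnn⟩
  rw [T2, ht]
  omega

lemma sum_id_z (N : ℕ) : 2 * (∑ i ∈ Finset.range N, (i:ℤ)) = (N:ℤ)*N - N := by
  induction N with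
  | zero => simp
  | succ n ih =>
    rw [Finset.sum_range_succ, mul_add, ih]
    push_cast
    ring

/- ### homogeneous Gauss binomial theorem, base q^5 -/

lemma gauss5 (x y : PS) : ∀ M : ℕ,
    ∏ k ∈ Finset.range M, (y + x * (X:PS)^(5*k))
      = ∑ m ∈ IZ M, (X:PS)^(5*T2 m) * Bz 5 M m * x^(m.toNat) * y^(((M:ℤ)-m).toNat) := by
  intro M
  induction M with
  | zero =>
    rw [Finset.range_zero, Finset.prod_empty]
    rw [show IZ 0 = {0} by rw [IZ]; norm_num, Finset.sum_singleton]
    rw [Bz_zero_left 5 0 (by norm_num), show T2 0 = 0 by rw [T2]; norm_num]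
    norm_num
  | succ M ih =>
    rw [Finset.prod_range_succ, ih]
    have hsplit : ∀ m : ℤ,
        (X:PS)^(5*T2 m) * Bz 5 (M+1) m * x^(m.toNat) * y^((((M:ℕ):ℤ)+1-m).toNat)
        = (X:PS)^(5*T2 m) * Bz 5 M m * x^(m.toNat) * y^((((M:ℕ):ℤ)+1-m).toNat)
          + (X:PS)^(5*T2 m) * ((X:PS)^(5*(((M:ℤ)+1-m).toNat)) * Bz 5 M (m-1))
            * x^(m.toNat) * y^((((M:ℕ):ℤ)+1-m).toNat) := by
      intro m
      rw [Bz_pascal1 5 M (by norm_num) m]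
      ring
    have hM1 : ∀ m : ℤ, ((M+1:ℕ):ℤ) - m = ((M:ℕ):ℤ)+1-m := by intro m; push_cast; ring
    rw [show (∑ m ∈ IZ (M+1), (X:PS)^(5*T2 m) * Bz 5 (M+1) m * x^(m.toNat)
        * y^((((M+1:ℕ):ℤ)-m).toNat))
      = ∑ m ∈ IZ (M+1), ((X:PS)^(5*T2 m) * Bz 5 M m * x^(m.toNat) * y^((((M:ℕ):ℤ)+1-m).toNat)
          + (X:PS)^(5*T2 m) * ((X:PS)^(5*(((M:ℤ)+1-m).toNat)) * Bz 5 M (m-1))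
            * x^(m.toNat) * y^((((M:ℕ):ℤ)+1-m).toNat))
      from Finset.sum_congr rfl (fun m _ => by rw [hM1 m]; exact hsplit m)]
    rw [Finset.sum_add_distrib]
    have suppT : ∀ m : ℤ, (X:PS)^(5*T2 m) * Bz 5 M m * x^(m.toNat)
        * y^((((M:ℕ):ℤ)-m).toNat) ≠ 0 → m ∈ IZ M := by
      intro m hne
      have h1 : Bz 5 M m ≠ 0 := fun h => hne (by rw [h]; ring)
      have b := Bz_bounds h1
      rw [mem_IZ]
      omega
    have hA : ∑ m ∈ IZ (M+1), (X:PS)^(5*T2 m) * Bz 5 M m * x^(m.toNat)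
        * y^((((M:ℕ):ℤ)+1-m).toNat)
        = y * ∑ m ∈ IZ M, (X:PS)^(5*T2 m) * Bz 5 M m * x^(m.toNat)
          * y^((((M:ℕ):ℤ)-m).toNat) := by
      rw [Finset.mul_sum]
      have hterm : ∀ m : ℤ, (X:PS)^(5*T2 m) * Bz 5 M m * x^(m.toNat)
          * y^((((M:ℕ):ℤ)+1-m).toNat)
          = y * ((X:PS)^(5*T2 m) * Bz 5 M m * x^(m.toNat) * y^((((M:ℕ):ℤ)-m).toNat)) := by
        intro m
        rcases eq_or_ne (Bz 5 M m) 0 with h0 | h0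
        · rw [h0]; ring
        · have b := Bz_bounds h0
          rw [show (((M:ℕ):ℤ)+1-m).toNat = (((M:ℕ):ℤ)-m).toNat + 1 by omega, pow_succ]
          ring
      rw [Finset.sum_congr rfl (fun m _ => hterm m)]
      apply sum_of_supp (IZ_subset (Nat.le_succ M))
      intro m hne
      apply suppT
      intro h
      exact hne (by rw [h]; ring)
    have hB : ∑ m ∈ IZ (M+1), (X:PS)^(5*T2 m)
          * ((X:PS)^(5*(((M:ℤ)+1-m).toNat)) * Bz 5 M (m-1))
          * x^(m.toNat) * y^((((M:ℕ):ℤ)+1-m).toNat)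
        = (x * (X:PS)^(5*M)) * ∑ m ∈ IZ M, (X:PS)^(5*T2 m) * Bz 5 M m * x^(m.toNat)
          * y^((((M:ℕ):ℤ)-m).toNat) := by
      set f : ℤ → PS := fun m => (X:PS)^(5*T2 m)
          * ((X:PS)^(5*(((M:ℤ)+1-m).toNat)) * Bz 5 M (m-1))
          * x^(m.toNat) * y^((((M:ℕ):ℤ)+1-m).toNat) with hf
      have hsupp : ∀ m, f m ≠ 0 → m ∈ IZ (M+1) := by
        intro m hne
        have h1 : Bz 5 M (m-1) ≠ 0 := fun h => hne (by rw [hf]; simp only; rw [h]; ring)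
        have b := Bz_bounds h1
        rw [mem_IZ]
        omega
      rw [← sum_shift_reindex f 1 (M+1) (M+2) (by omega) hsupp]
      rw [Finset.mul_sum]
      have hterm : ∀ m : ℤ, f (m + 1)
          = x * (X:PS)^(5*M) * ((X:PS)^(5*T2 m) * Bz 5 M m * x^(m.toNat)
            * y^((((M:ℕ):ℤ)-m).toNat)) := by
        intro m
        rcases eq_or_ne (Bz 5 M m) 0 with h0 | h0
        · rw [hf]
          simp only
          rw [show m+1-1 = m by ring, h0]
          ring
        · have b := Bz_bounds h0
          rw [hf]
          simp only
          rw [show m+1-1 = m by ring]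
          obtain ⟨t, ht, het, htp⟩ := t2_def m
          obtain ⟨t', ht', het', htp'⟩ := t2_def (m+1)
          have hrel : 2*t' = 2*t + 2*m := by linear_combination ht - ht'
          have hx1 : (m+1).toNat = m.toNat + 1 := by omega
          have hy1 : (((M:ℕ):ℤ)+1-(m+1)).toNat = (((M:ℕ):ℤ)-m).toNat := by omega
          have hq : 5*T2 (m+1) + 5*(((M:ℤ)+1-(m+1)).toNat) = 5*M + 5*T2 m := by
            have h1 : (((M:ℤ)+1-(m+1))).toNat = ((M:ℤ) - m).toNat := by omega
            rw [h1]
            omega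
          calc (X:PS)^(5*T2 (m+1)) * ((X:PS)^(5*(((M:ℤ)+1-(m+1)).toNat)) * Bz 5 M m)
                * x^((m+1).toNat) * y^((((M:ℕ):ℤ)+1-(m+1)).toNat)
              = (X:PS)^(5*T2 (m+1) + 5*(((M:ℤ)+1-(m+1)).toNat)) * Bz 5 M m
                * x^(m.toNat+1) * y^((((M:ℕ):ℤ)-m).toNat) := by
                rw [pow_add, hx1, hy1]; ring
            _ = (X:PS)^(5*M + 5*T2 m) * Bz 5 M m
                * x^(m.toNat+1) * y^((((M:ℕ):ℤ)-m).toNat) := by rw [hq]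
            _ = x * (X:PS)^(5*M) * ((X:PS)^(5*T2 m) * Bz 5 M m * x^(m.toNat)
                * y^((((M:ℕ):ℤ)-m).toNat)) := by rw [pow_add, pow_succ]; ring
      rw [Finset.sum_congr rfl (fun m _ => hterm m)]
      apply sum_of_supp (IZ_subset (by omega))
      intro m hne
      apply suppT
      intro h
      exact hne (by rw [h]; ring)
    rw [hA, hB]
    ring
/- ### the finite Jacobi-triple-product specialization -/

lemma starId (a N : ℕ) (ha : a ≤ 1) :
    ∑ j ∈ IZ N, sg j * (X:PS)^(E5 a j) * Bz 5 (2*N) ((N:ℤ)+j)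
      = ∏ n ∈ Finset.range N, ((1 - (X:PS)^(5*n+(2-a))) * (1 - (X:PS)^(5*n+(3+a)))) := by
  set SN : ℕ := ∑ i ∈ Finset.range N, i with hSN
  set EN : ℕ := 5*SN + (3+a)*N + 5*(N*N) with hEN
  have hSNz : 2 * (SN:ℤ) = (N:ℤ)*N - N := by
    rw [hSN]
    push_cast
    exact sum_id_z N
  -- Evaluation 1 : factorwise
  have eval1 : ∏ k ∈ Finset.range (2*N), ((X:PS)^(5*N) + (-(X:PS)^(3+a)) * (X:PS)^(5*k))
      = ((-1:PS))^N * (X:PS)^EN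
        * ∏ n ∈ Finset.range N, ((1 - (X:PS)^(5*n+(2-a))) * (1 - (X:PS)^(5*n+(3+a)))) := by
    rw [show 2*N = N + N by ring, Finset.prod_range_add]
    have h1 : ∏ k ∈ Finset.range N, ((X:PS)^(5*N) + (-(X:PS)^(3+a)) * (X:PS)^(5*k))
        = ((-1:PS))^N * (X:PS)^(5*SN + (3+a)*N)
          * ∏ n ∈ Finset.range N, (1 - (X:PS)^(5*n+(2-a))) := by
      have hfac : ∀ k ∈ Finset.range N,
          ((X:PS)^(5*N) + (-(X:PS)^(3+a)) * (X:PS)^(5*k))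
          = ((-1:PS) * (X:PS)^(5*k+(3+a))) * (1 - (X:PS)^(5*(N-1-k)+(2-a))) := by
        intro k hk
        rw [Finset.mem_range] at hk
        have he : (5*k+(3+a)) + (5*(N-1-k)+(2-a)) = 5*N := by omega
        calc (X:PS)^(5*N) + (-(X:PS)^(3+a)) * (X:PS)^(5*k)
            = (X:PS)^((5*k+(3+a)) + (5*(N-1-k)+(2-a))) - (X:PS)^(5*k+(3+a)) := by
              rw [he, pow_add]; ring
          _ = ((-1:PS) * (X:PS)^(5*k+(3+a))) * (1 - (X:PS)^(5*(N-1-k)+(2-a))) := by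
              rw [pow_add]; ring
      rw [Finset.prod_congr rfl hfac, Finset.prod_mul_distrib, Finset.prod_mul_distrib,
        Finset.prod_const, Finset.prod_pow_eq_pow_sum,
        Finset.prod_range_reflect (fun k => 1 - (X:PS)^(5*k+(2-a))) N]
      have hsum : ∑ k ∈ Finset.range N, (5*k+(3+a)) = 5*SN + (3+a)*N := by
        rw [Finset.sum_add_distrib, Finset.sum_const, Finset.card_range, ← Finset.mul_sum,
          hSN, smul_eq_mul]
        ring
      rw [hsum, Finset.card_range]
    have h2 : ∏ k ∈ Finset.range N, ((X:PS)^(5*N) + (-(X:PS)^(3+a)) * (X:PS)^(5*(N+k)))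
        = (X:PS)^(5*(N*N)) * ∏ n ∈ Finset.range N, (1 - (X:PS)^(5*n+(3+a))) := by
      have hfac : ∀ k ∈ Finset.range N,
          ((X:PS)^(5*N) + (-(X:PS)^(3+a)) * (X:PS)^(5*(N+k)))
          = (X:PS)^(5*N) * (1 - (X:PS)^(5*k+(3+a))) := by
        intro k _
        have he : 5*(N+k) + (3+a) = 5*N + (5*k+(3+a)) := by ring
        calc (X:PS)^(5*N) + (-(X:PS)^(3+a)) * (X:PS)^(5*(N+k))
            = (X:PS)^(5*N) - (X:PS)^(5*(N+k)+(3+a)) := by rw [pow_add]; ring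
          _ = (X:PS)^(5*N) * (1 - (X:PS)^(5*k+(3+a))) := by rw [he, pow_add]; ring
      rw [Finset.prod_congr rfl hfac, Finset.prod_mul_distrib, Finset.prod_const,
        Finset.card_range, ← pow_mul, show 5*N*N = 5*(N*N) from by ring]
    rw [h1, h2, hEN, Finset.prod_mul_distrib]
    rw [pow_add, pow_add]
    ring
  -- Evaluation 2 : Gauss
  have eval2 : ∏ k ∈ Finset.range (2*N), ((X:PS)^(5*N) + (-(X:PS)^(3+a)) * (X:PS)^(5*k))
      = ((-1:PS))^N * (X:PS)^EN
        * ∑ j ∈ IZ N, sg j * (X:PS)^(E5 a j) * Bz 5 (2*N) ((N:ℤ)+j) := by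
    rw [gauss5 (-(X:PS)^(3+a)) ((X:PS)^(5*N)) (2*N)]
    set f : ℤ → PS := fun m => (X:PS)^(5*T2 m) * Bz 5 (2*N) m * (-(X:PS)^(3+a))^(m.toNat)
        * ((X:PS)^(5*N))^((((2*N:ℕ):ℤ)-m).toNat) with hf
    have hsupp : ∀ m, f m ≠ 0 → m ∈ IZ (2*N) := by
      intro m hne
      have h1 : Bz 5 (2*N) m ≠ 0 := fun h => hne (by rw [hf]; simp only; rw [h]; ring)
      have b := Bz_bounds h1
      rw [mem_IZ]
      omega
    rw [← sum_shift_reindex f (N:ℤ) (2*N) (3*N) (by omega) hsupp]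
    have hterm : ∀ j : ℤ, f (j + (N:ℤ))
        = ((-1:PS))^N * (X:PS)^EN * (sg j * (X:PS)^(E5 a j) * Bz 5 (2*N) ((N:ℤ)+j)) := by
      intro j
      rcases eq_or_ne (Bz 5 (2*N) ((N:ℤ)+j)) 0 with h0 | h0
      · rw [hf]
        simp only
        rw [show j + (N:ℤ) = (N:ℤ)+j by ring, h0]
        ring
      · have b := Bz_bounds h0
        rw [hf]
        simp only
        rw [show j + (N:ℤ) = (N:ℤ)+j by ring]
        obtain ⟨t2v, ht2, het2, _⟩ := t2_def ((N:ℤ)+j)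
        obtain ⟨t5, ht5, het5, _⟩ := e5_def a (by omega) j
        have hja : (((N:ℤ)+j).toNat : ℤ) = (N:ℤ)+j := Int.toNat_of_nonneg (by omega)
        have hjb : ((((N:ℤ)-j).toNat) : ℤ) = (N:ℤ)-j := by push_cast; omega
        -- sign
        have hsgn : (-(X:PS)^(3+a))^(((N:ℤ)+j).toNat)
            = ((-1:PS))^N * sg j * (X:PS)^((3+a)*(((N:ℤ)+j).toNat)) := by
          rw [neg_pow, negone_pow_eq_sg (((N:ℤ)+j).toNat), hja, sg_add, ← pow_mul]
          rw [show sg (N:ℤ) = ((-1:PS))^N from (negone_pow_eq_sg N).symm]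
        have hexp : 5*T2 ((N:ℤ)+j) + ((3+a)*(((N:ℤ)+j).toNat)
            + 5*N*((((2*N:ℕ):ℤ)-((N:ℤ)+j)).toNat)) = EN + E5 a j := by
          have hT2 : ((N:ℤ)+j) * (((N:ℤ)+j)-1)
              = (N:ℤ)*N + 2*((N:ℤ)*j) + j*j - N - j := by ring
          rw [hT2] at ht2
          have h5 : 2*t5 = 5*(j*j) + 2*(a:ℤ)*j + j := by linear_combination -ht5
          have hENz : (EN:ℤ) = 5*SN + (3+(a:ℤ))*N + 5*((N:ℤ)*N) := by
            rw [hEN]; push_cast; ring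
          have hcast : (((2*N:ℕ):ℤ)-((N:ℤ)+j)).toNat = ((N:ℤ)-j).toNat := by
            push_cast
            omega
          rw [hcast]
          have goalZ : 5*((T2 ((N:ℤ)+j) : ℕ) : ℤ) + (3+(a:ℤ))*((N:ℤ)+j)
              + 5*(N:ℤ)*((N:ℤ)-j) = ((EN:ℕ):ℤ) + ((E5 a j : ℕ):ℤ) := by
            rw [het2, het5, hENz]
            refine mul_left_cancel₀ (a := (2:ℤ)) (by norm_num) ?_
            linear_combination (-5)*ht2 - 5*hSNz - h5
          have hcg : ((5*T2 ((N:ℤ)+j) + ((3+a)*(((N:ℤ)+j).toNat)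
              + 5*N*(((N:ℤ)-j).toNat)) : ℕ) : ℤ) = ((EN + E5 a j : ℕ) : ℤ) := by
            push_cast [hja, hjb]
            linear_combination goalZ
          exact_mod_cast hcg
        rw [hsgn, ← pow_mul,
          show ((-1:PS))^N * (X:PS)^EN * (sg j * (X:PS)^(E5 a j) * Bz 5 (2*N) ((N:ℤ)+j))
            = (X:PS)^(EN + E5 a j) * (Bz 5 (2*N) ((N:ℤ)+j) * ((-1:PS))^N * sg j) from by
            rw [pow_add]; ring,
          ← hexp, pow_add, pow_add]
        ring
    rw [Finset.sum_congr rfl (fun j _ => hterm j), ← Finset.mul_sum]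
    congr 1
    apply sum_of_supp (IZ_subset (by omega))
    intro j hne
    have h1 : Bz 5 (2*N) ((N:ℤ)+j) ≠ 0 := fun h => hne (by rw [h]; ring)
    have b := Bz_bounds h1
    rw [mem_IZ]
    omega
  have hne : ((-1:PS))^N * (X:PS)^EN ≠ 0 := by
    apply mul_ne_zero
    · exact pow_ne_zero _ (by norm_num)
    · exact pow_ne_zero _ PowerSeries.X_ne_zero
  have := eval1.symm.trans eval2
  exact (mul_left_cancel₀ hne this).symm
/- ### limit machinery -/

lemma coeff_eq_of_dvd {f g : PS} {n N : ℕ} (h : (X:PS)^N ∣ f - g) (hn : n < N) :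
    (coeff n) f = (coeff n) g := by
  have h2 := X_pow_dvd_iff.mp h n hn
  rw [map_sub, sub_eq_zero] at h2
  exact h2

noncomputable def plim (F : ℕ → PS) : PS := PowerSeries.mk fun n => (coeff n) (F (n+1))

def PSCauchyX (F : ℕ → PS) : Prop := ∀ N M : ℕ, N ≤ M → (X:PS)^N ∣ F M - F N

/-- statement copied from the target theorem -/
def PSTendstoQ' (F : ℕ → PowerSeries ℚ) (L : PowerSeries ℚ) : Prop :=
  ∀ n : ℕ, ∀ᶠ N in Filter.atTop, PowerSeries.coeff n (F N) = PowerSeries.coeff n L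

lemma tendsto_plim {F : ℕ → PS} (h : PSCauchyX F) : PSTendstoQ' F (plim F) := by
  intro n
  filter_upwards [Filter.eventually_ge_atTop (n+1)] with N hN
  rw [plim, coeff_mk]
  exact coeff_eq_of_dvd (h (n+1) N hN) (Nat.lt_succ_self n)

lemma tendsto_unique {F : ℕ → PS} {L L' : PS} (h1 : PSTendstoQ' F L) (h2 : PSTendstoQ' F L') :
    L = L' := by
  ext n
  obtain ⟨N, hN1, hN2⟩ := ((h1 n).and (h2 n)).exists
  rw [← hN1, hN2]

lemma tendsto_const (c : PS) : PSTendstoQ' (fun _ => c) c := fun _ => Filter.Eventually.of_forall (fun _ => rfl)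

lemma tendsto_mul {F G : ℕ → PS} {L M : PS} (hF : PSTendstoQ' F L) (hG : PSTendstoQ' G M) :
    PSTendstoQ' (fun N => F N * G N) (L * M) := by
  intro n
  have hall : ∀ᶠ N in Filter.atTop, ∀ p ∈ Finset.HasAntidiagonal.antidiagonal n,
      (coeff p.1) (F N) = (coeff p.1) L ∧ (coeff p.2) (G N) = (coeff p.2) M := by
    rw [Filter.eventually_all_finset]
    intro p _
    exact (hF p.1).and (hG p.2)
  filter_upwards [hall] with N hN
  rw [coeff_mul, coeff_mul]
  apply Finset.sum_congr rfl
  intro p hp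
  rw [(hN p hp).1, (hN p hp).2]

lemma tendsto_congr {F G : ℕ → PS} {L : PS}
    (h : ∀ᶠ N in Filter.atTop, (X:PS)^N ∣ F N - G N) (hG : PSTendstoQ' G L) :
    PSTendstoQ' F L := by
  intro n
  filter_upwards [h, hG n, Filter.eventually_ge_atTop (n+1)] with N h1 h2 h3
  rw [← h2]
  exact coeff_eq_of_dvd h1 (by omega)

lemma tendsto_comp {F : ℕ → PS} {L : PS} (h : PSTendstoQ' F L) (g : ℕ → ℕ)
    (hg : Filter.Tendsto g Filter.atTop Filter.atTop) : PSTendstoQ' (fun N => F (g N)) L :=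
  fun n => hg.eventually (h n)

/- ### divisibility lemmas -/

lemma prod_sub_one_dvd {s : Finset ℕ} {G : ℕ → PS} {N : ℕ}
    (h : ∀ n ∈ s, (X:PS)^N ∣ G n - 1) : (X:PS)^N ∣ (∏ n ∈ s, G n) - 1 := by
  classical
  induction s using Finset.induction with
  | empty => simp
  | @insert a s' hnotmem ih =>
    rw [Finset.prod_insert hnotmem]
    have ha := h a (Finset.mem_insert_self a s')
    have hs := ih (fun n hn => h n (Finset.mem_insert_of_mem hn))
    have : G a * (∏ n ∈ s', G n) - 1
        = G a * ((∏ n ∈ s', G n) - 1) + (G a - 1) := by ring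
    rw [this]
    exact dvd_add (Dvd.dvd.mul_left hs _) ha

lemma pc_sub_dvd (c : ℕ) (hc : c ≠ 0) {u v : ℕ} (huv : u ≤ v) :
    (X:PS)^(c*u+c) ∣ pc c v - pc c u := by
  have hsplit : pc c v = pc c u * ∏ i ∈ Finset.Ico u v, (1 - (X:PS)^(c*i+c)) := by
    rw [pc, pc, ← Finset.prod_range_mul_prod_Ico _ huv]
  rw [hsplit, show pc c u * ∏ i ∈ Finset.Ico u v, (1 - (X:PS)^(c*i+c)) - pc c u
    = pc c u * ((∏ i ∈ Finset.Ico u v, (1 - (X:PS)^(c*i+c))) - 1) by ring]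
  apply Dvd.dvd.mul_left
  apply prod_sub_one_dvd
  intro n hn
  rw [Finset.mem_Ico] at hn
  rw [show (1:PS) - (X:PS)^(c*n+c) - 1 = -((X:PS)^(c*n+c)) by ring, dvd_neg]
  apply pow_dvd_pow
  have h1 : u ≤ n := hn.1
  have h2 : 1 ≤ c := Nat.one_le_iff_ne_zero.mpr hc
  nlinarith

/-- `X^(c(u+1)) ∣ pc c v * (pc c u)⁻¹ - 1` for `u ≤ v`. -/
lemma pc_ratio_dvd (c : ℕ) (hc : c ≠ 0) {u v : ℕ} (huv : u ≤ v) :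
    (X:PS)^(c*u+c) ∣ pc c v * (pc c u)⁻¹ - 1 := by
  have h1 := pc_sub_dvd c hc huv
  have h2 : pc c v * (pc c u)⁻¹ - 1 = (pc c v - pc c u) * (pc c u)⁻¹ := by
    rw [sub_mul, mul_comm (pc c u) ((pc c u)⁻¹), ← mul_comm (pc c u)]
    rw [pc_mul_inv c u hc]
  rw [h2]
  exact Dvd.dvd.mul_right h1 _
/- ### specific sequences -/

noncomputable def Sseq (a : ℕ) (N : ℕ) : PS :=
  ∑ n ∈ Finset.range N, (X : PS) ^ (n ^ 2 + a * n) * (qPoch n)⁻¹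

noncomputable def Pseq (a : ℕ) (N : ℕ) : PS :=
  ∏ n ∈ Finset.range N, ((1 - (X : PS) ^ (5 * n + a + 1)) * (1 - (X : PS) ^ (5 * n + 4 - a)))

noncomputable def Cseq (a : ℕ) (N : ℕ) : PS :=
  ∏ n ∈ Finset.range N,
    ((1 - (X : PS) ^ (5 * n + (2 - a))) * (1 - (X : PS) ^ (5 * n + (3 + a)))
      * (1 - (X : PS) ^ (5 * n + 5)))

noncomputable def Tseq (a : ℕ) (N : ℕ) : PS := ∑ j ∈ IZ N, sg j * (X : PS) ^ (E5 a j)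

noncomputable def Useq (N : ℕ) : PS := (qPoch N)⁻¹

lemma qPoch_constCoeff (n : ℕ) : constantCoeff (qPoch n) ≠ 0 := by
  rw [← pc_one_eq]
  exact pc_ne_zero 1 n one_ne_zero

lemma qPoch_mul_inv (n : ℕ) : qPoch n * (qPoch n)⁻¹ = 1 :=
  PowerSeries.mul_inv_cancel _ (qPoch_constCoeff n)

lemma mul_sub_one_dvd {A B : PS} {N : ℕ} (hA : (X:PS)^N ∣ A - 1) (hB : (X:PS)^N ∣ B - 1) :
    (X:PS)^N ∣ A * B - 1 := by
  have : A * B - 1 = A * (B - 1) + (A - 1) := by ring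
  rw [this]
  exact dvd_add (Dvd.dvd.mul_left hB _) hA

lemma one_sub_pow_dvd {N e : ℕ} (h : N ≤ e) : (X:PS)^N ∣ (1 - (X:PS)^e) - 1 := by
  rw [show (1:PS) - (X:PS)^e - 1 = -((X:PS)^e) by ring, dvd_neg]
  exact pow_dvd_pow _ h

lemma cauchy_prod {G : ℕ → PS} (h : ∀ N n : ℕ, N ≤ n → (X:PS)^N ∣ G n - 1) :
    PSCauchyX (fun N => ∏ n ∈ Finset.range N, G n) := by
  intro N M hNM
  show (X:PS)^N ∣ (∏ n ∈ Finset.range M, G n) - ∏ n ∈ Finset.range N, G n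
  rw [← Finset.prod_range_mul_prod_Ico G hNM,
    show (∏ n ∈ Finset.range N, G n) * (∏ n ∈ Finset.Ico N M, G n) - ∏ n ∈ Finset.range N, G n
      = (∏ n ∈ Finset.range N, G n) * ((∏ n ∈ Finset.Ico N M, G n) - 1) by ring]
  apply Dvd.dvd.mul_left
  apply prod_sub_one_dvd
  intro n hn
  rw [Finset.mem_Ico] at hn
  exact h N n hn.1

lemma cauchy_S (a : ℕ) : PSCauchyX (Sseq a) := by
  intro N M hNM
  rw [Sseq, Sseq, ← Finset.sum_Ico_eq_sub _ hNM]
  apply Finset.dvd_sum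
  intro n hn
  rw [Finset.mem_Ico] at hn
  apply Dvd.dvd.mul_right
  apply pow_dvd_pow
  have h1 : n ≤ n^2 := Nat.le_self_pow (by norm_num) n
  omega

lemma cauchy_P (a : ℕ) (ha : a ≤ 1) : PSCauchyX (Pseq a) := by
  apply cauchy_prod
  intro N n hn
  apply mul_sub_one_dvd <;> apply one_sub_pow_dvd <;> omega

lemma cauchy_C (a : ℕ) (ha : a ≤ 1) : PSCauchyX (Cseq a) := by
  apply cauchy_prod
  intro N n hn
  apply mul_sub_one_dvd
  apply mul_sub_one_dvd
  all_goals apply one_sub_pow_dvd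
  all_goals omega

lemma cauchy_F : PSCauchyX (fun N => qPoch N) := by
  intro N M hNM
  show (X:PS)^N ∣ qPoch M - qPoch N
  rw [← pc_one_eq, ← pc_one_eq]
  have := pc_sub_dvd 1 one_ne_zero hNM
  apply dvd_trans _ this
  apply pow_dvd_pow
  omega

lemma cauchy_U : PSCauchyX Useq := by
  intro N M hNM
  have key : Useq M - Useq N = (qPoch N - qPoch M) * ((qPoch M)⁻¹ * (qPoch N)⁻¹) := by
    rw [Useq, Useq, sub_mul]
    have h1 : qPoch N * ((qPoch M)⁻¹ * (qPoch N)⁻¹) = (qPoch M)⁻¹ := by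
      rw [show qPoch N * ((qPoch M)⁻¹ * (qPoch N)⁻¹)
        = (qPoch N * (qPoch N)⁻¹) * (qPoch M)⁻¹ by ring, qPoch_mul_inv, one_mul]
    have h2 : qPoch M * ((qPoch M)⁻¹ * (qPoch N)⁻¹) = (qPoch N)⁻¹ := by
      rw [show qPoch M * ((qPoch M)⁻¹ * (qPoch N)⁻¹)
        = (qPoch M * (qPoch M)⁻¹) * (qPoch N)⁻¹ by ring, qPoch_mul_inv, one_mul]
    rw [h1, h2]
  rw [key]
  apply Dvd.dvd.mul_right
  rw [show qPoch N - qPoch M = -(qPoch M - qPoch N) by ring, dvd_neg]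
  exact cauchy_F N M hNM

lemma e5_natAbs_le (a : ℕ) (ha : a ≤ 1) (j : ℤ) : 2 * j.natAbs ≤ E5 a j + 1 := by
  obtain ⟨t, ht, het, htp⟩ := e5_def a (by omega) j
  rcases lt_trichotomy j 0 with hj | hj | hj
  · have hk : (j.natAbs : ℤ) = -j := by omega
    have h2 : 4*(-j) ≤ 2*t + 2 := by nlinarith
    omega
  · subst hj
    simp
  · have hk : (j.natAbs : ℤ) = j := by omega
    have h2 : 4*j ≤ 2*t + 2 := by nlinarith
    omega

lemma e5_sq_le (a : ℕ) (ha : a ≤ 1) (j : ℤ) : j.natAbs * j.natAbs ≤ E5 a j := by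
  obtain ⟨t, ht, het, htp⟩ := e5_def a (by omega) j
  rcases lt_trichotomy j 0 with hj | hj | hj
  · have hk : (j.natAbs : ℤ) = -j := by omega
    have h2 : 2*(j*j) ≤ 2*t := by nlinarith
    have h3 : ((j.natAbs * j.natAbs : ℕ) : ℤ) = j * j := Int.natAbs_mul_self
    omega
  · subst hj
    simp [E5]
  · have hk : (j.natAbs : ℤ) = j := by omega
    have h2 : 2*(j*j) ≤ 2*t := by nlinarith
    have h3 : ((j.natAbs * j.natAbs : ℕ) : ℤ) = j * j := Int.natAbs_mul_self
    omega

lemma cauchy_T (a : ℕ) (ha : a ≤ 1) : PSCauchyX (Tseq a) := by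
  intro N M hNM
  rw [Tseq, Tseq, ← Finset.sum_sdiff_eq_sub (IZ_subset hNM)]
  apply Finset.dvd_sum
  intro j hj
  rw [Finset.mem_sdiff, mem_IZ, mem_IZ] at hj
  apply Dvd.dvd.mul_left
  apply pow_dvd_pow
  have h1 := e5_sq_le a ha j
  have h2 : N + 1 ≤ j.natAbs := by omega
  have h3 : 1 * j.natAbs ≤ j.natAbs * j.natAbs := Nat.mul_le_mul_right _ (by omega)
  omega
/- ### (α) : P · C = F -/

lemma Pseq_succ (a N : ℕ) : Pseq a (N+1)
    = Pseq a N * ((1 - (X:PS)^(5*N+a+1)) * (1 - (X:PS)^(5*N+4-a))) :=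
  Finset.prod_range_succ _ _

lemma Cseq_succ (a N : ℕ) : Cseq a (N+1)
    = Cseq a N * ((1 - (X:PS)^(5*N+(2-a))) * (1 - (X:PS)^(5*N+(3+a))) * (1 - (X:PS)^(5*N+5))) :=
  Finset.prod_range_succ _ _

lemma pc_split5 (u : ℕ) : pc 1 (u+5) = pc 1 u * ((1-(X:PS)^(u+1))*(1-(X:PS)^(u+2))
    *(1-(X:PS)^(u+3))*(1-(X:PS)^(u+4))*(1-(X:PS)^(u+5))) := by
  rw [show u+5 = u+1+1+1+1+1 by ring, pc_succ, pc_succ, pc_succ, pc_succ, pc_succ]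
  simp only [one_mul]
  ring

lemma PC_eq (a : ℕ) (ha : a ≤ 1) : ∀ N, Pseq a N * Cseq a N = pc 1 (5*N) := by
  obtain rfl | rfl : a = 0 ∨ a = 1 := by omega
  · intro N
    induction N with
    | zero => simp [Pseq, Cseq, pc]
    | succ N ih =>
      rw [Pseq_succ, Cseq_succ, show 5*(N+1) = 5*N+5 by ring, pc_split5, ← ih]
      norm_num
      ring
  · intro N
    induction N with
    | zero => simp [Pseq, Cseq, pc]
    | succ N ih =>
      rw [Pseq_succ, Cseq_succ, show 5*(N+1) = 5*N+5 by ring, pc_split5, ← ih]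
      rw [show 5*N+4-1 = 5*N+3 by omega, show (2-1:ℕ) = 1 from rfl]
      norm_num
      ring

lemma PCF (a : ℕ) (ha : a ≤ 1) :
    plim (Pseq a) * plim (Cseq a) = plim (fun N => qPoch N) := by
  apply tendsto_unique (F := fun N => Pseq a N * Cseq a N)
  · exact tendsto_mul (tendsto_plim (cauchy_P a ha)) (tendsto_plim (cauchy_C a ha))
  · have heq : (fun N => Pseq a N * Cseq a N) = fun N => qPoch (5*N) := by
      funext N
      rw [PC_eq a ha N, pc_one_eq]
    rw [heq]
    exact tendsto_comp (tendsto_plim cauchy_F) (fun N => 5*N)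
      (Filter.tendsto_atTop_mono (fun n => by simp only [id_eq]; omega) Filter.tendsto_id)

/- ### (β) : C = T -/

lemma gbpc_dvd (N m : ℕ) (hm : m ≤ N) :
    (X:PS)^(5*m+5) ∣ gb 5 (2*N) m * pc 5 N - 1 := by
  have hg := gb_mul 5 (2*N) m (by norm_num)
  have hkey : (gb 5 (2*N) m * pc 5 N - 1) * (pc 5 m * pc 5 (2*N - m))
      = pc 5 N * pc 5 (2*N) - pc 5 m * pc 5 (2*N-m) := by
    linear_combination pc 5 N * hg
  have hdvd : (X:PS)^(5*m+5) ∣ (pc 5 N * pc 5 (2*N) - pc 5 m * pc 5 (2*N-m)) := by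
    rw [show pc 5 N * pc 5 (2*N) - pc 5 m * pc 5 (2*N-m)
        = pc 5 N * (pc 5 (2*N) - pc 5 (2*N-m)) + pc 5 (2*N-m) * (pc 5 N - pc 5 m) by ring]
    apply dvd_add
    · apply Dvd.dvd.mul_left
      apply dvd_trans _ (pc_sub_dvd 5 (by norm_num) (show 2*N-m ≤ 2*N by omega))
      apply pow_dvd_pow
      omega
    · exact Dvd.dvd.mul_left (pc_sub_dvd 5 (by norm_num) hm) _
  have huw : (pc 5 m * pc 5 (2*N - m)) * ((pc 5 m)⁻¹ * (pc 5 (2*N-m))⁻¹) = 1 := by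
    rw [show (pc 5 m * pc 5 (2*N - m)) * ((pc 5 m)⁻¹ * (pc 5 (2*N-m))⁻¹)
      = (pc 5 m * (pc 5 m)⁻¹) * (pc 5 (2*N-m) * (pc 5 (2*N-m))⁻¹) by ring,
      pc_mul_inv 5 m (by norm_num), pc_mul_inv 5 (2*N-m) (by norm_num), one_mul]
  have hA : gb 5 (2*N) m * pc 5 N - 1
      = ((gb 5 (2*N) m * pc 5 N - 1) * (pc 5 m * pc 5 (2*N - m)))
        * ((pc 5 m)⁻¹ * (pc 5 (2*N-m))⁻¹) := by
    rw [mul_assoc, huw, mul_one]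
  rw [hA, hkey]
  exact Dvd.dvd.mul_right hdvd _

lemma CT_dvd (a : ℕ) (ha : a ≤ 1) (N : ℕ) : (X:PS)^(N+1) ∣ Cseq a N - Tseq a N := by
  have hCsplit : Cseq a N
      = (∑ j ∈ IZ N, sg j * (X:PS)^(E5 a j) * Bz 5 (2*N) ((N:ℤ)+j)) * pc 5 N := by
    rw [Cseq, Finset.prod_mul_distrib, starId a N ha]
    rfl
  rw [hCsplit, Tseq, Finset.sum_mul, ← Finset.sum_sub_distrib]
  apply Finset.dvd_sum
  intro j hj
  rw [mem_IZ] at hj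
  have hmem : (0:ℤ) ≤ (N:ℤ)+j ∧ (N:ℤ)+j ≤ ((2*N:ℕ):ℤ) := by push_cast; omega
  rw [Bz_of_mem hmem.1 hmem.2]
  rw [show sg j * (X:PS)^(E5 a j) * gb 5 (2*N) (((N:ℤ)+j).toNat) * pc 5 N
      - sg j * (X:PS)^(E5 a j)
    = sg j * ((X:PS)^(E5 a j) * (gb 5 (2*N) (((N:ℤ)+j).toNat) * pc 5 N - 1)) by ring]
  apply Dvd.dvd.mul_left
  set m0 := (((N:ℤ)+j).toNat) with hm0
  have hm02 : m0 ≤ 2*N := by omega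
  have habs := e5_natAbs_le a ha j
  rcases le_or_gt m0 N with hc | hc
  · -- m0 ≤ N : direct
    have hD := gbpc_dvd N m0 hc
    have : (X:PS)^(E5 a j + (5*m0+5)) ∣ (X:PS)^(E5 a j) * (gb 5 (2*N) m0 * pc 5 N - 1) := by
      rw [pow_add]
      exact mul_dvd_mul_left _ hD
    apply dvd_trans _ this
    apply pow_dvd_pow
    have : j.natAbs = N - m0 := by omega
    omega
  · -- m0 > N : use symmetry
    rw [← gb_symm 5 (2*N) m0 hm02]
    have hD := gbpc_dvd N (2*N - m0) (by omega)
    have : (X:PS)^(E5 a j + (5*(2*N-m0)+5))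
        ∣ (X:PS)^(E5 a j) * (gb 5 (2*N) (2*N - m0) * pc 5 N - 1) := by
      rw [pow_add]
      exact mul_dvd_mul_left _ hD
    apply dvd_trans _ this
    apply pow_dvd_pow
    have : j.natAbs = m0 - N := by omega
    omega

lemma C_eq_T (a : ℕ) (ha : a ≤ 1) : plim (Cseq a) = plim (Tseq a) := by
  apply tendsto_unique (F := Cseq a) (tendsto_plim (cauchy_C a ha))
  apply tendsto_congr _ (tendsto_plim (cauchy_T a ha))
  filter_upwards with N
  exact dvd_trans (pow_dvd_pow _ (Nat.le_succ N)) (CT_dvd a ha N)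
/- ### (γ) : S = T · U -/

lemma sum_IZ_to_range (f : ℤ → PS) (C n : ℕ) (hC : n ≤ C)
    (hsupp : ∀ j, f j ≠ 0 → 0 ≤ j ∧ j ≤ (n:ℤ)) :
    ∑ j ∈ IZ C, f j = ∑ k ∈ Finset.range (n+1), f (k:ℤ) := by
  rw [sum_of_supp (t := Finset.Icc (0:ℤ) (n:ℤ))
    (by intro x hx; rw [Finset.mem_Icc] at hx; rw [mem_IZ]; omega)
    (fun j hj => Finset.mem_Icc.mpr (hsupp j hj))]
  apply Finset.sum_nbij' (i := Int.toNat) (j := (Nat.cast : ℕ → ℤ))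
  · intro a haa
    rw [Finset.mem_Icc] at haa
    rw [Finset.mem_range]
    omega
  · intro a haa
    rw [Finset.mem_range] at haa
    rw [Finset.mem_Icc]
    omega
  · intro a haa
    rw [Finset.mem_Icc] at haa
    omega
  · intro a _
    simp
  · intro a haa
    rw [Finset.mem_Icc] at haa
    rw [Int.toNat_of_nonneg haa.1]

noncomputable def LHSA (a n : ℕ) : PS :=
  ∑ j ∈ IZ (n+a), sg j * (X:PS)^(E5 a j) * Bz 1 (2*n+a) ((n:ℤ)+(a:ℤ)+2*j)

noncomputable def RHSA (a n : ℕ) : PS :=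
  ∑ w ∈ IZ (n+a), (X:PS)^((w*(w+(a:ℤ))).toNat) * Bz 1 n w

lemma outerA (a n : ℕ) (ha : a ≤ 1) : LHSA a n = RHSA a n := by
  obtain rfl | rfl : a = 0 ∨ a = 1 := by omega
  · rw [LHSA, RHSA]
    have h0 := outer0 n
    simp only [Nat.cast_zero, add_zero, Nat.add_zero]
    exact h0
  · rw [LHSA, RHSA]
    have h1 := outer1 n
    simp only [Nat.cast_one]
    exact h1

lemma gb_inv_small_dvd (nn m : ℕ) (hm : 2*m ≤ nn) :
    (X:PS)^(m+1) ∣ gb 1 nn m - (pc 1 nn)⁻¹ := by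
  have hmn : m ≤ nn := by omega
  have hg := gb_mul 1 nn m one_ne_zero
  have hkey : (gb 1 nn m - (pc 1 nn)⁻¹) * (pc 1 m * pc 1 (nn - m) * pc 1 nn)
      = pc 1 nn * pc 1 nn - pc 1 m * pc 1 (nn-m) := by
    have hinv := pc_mul_inv 1 nn one_ne_zero
    calc (gb 1 nn m - (pc 1 nn)⁻¹) * (pc 1 m * pc 1 (nn - m) * pc 1 nn)
        = (gb 1 nn m * pc 1 m * pc 1 (nn-m)) * pc 1 nn
          - (pc 1 nn * (pc 1 nn)⁻¹) * (pc 1 m * pc 1 (nn-m)) := by ring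
      _ = pc 1 nn * pc 1 nn - pc 1 m * pc 1 (nn-m) := by rw [hg, hinv]; ring
  have hdvd : (X:PS)^(m+1) ∣ pc 1 nn * pc 1 nn - pc 1 m * pc 1 (nn-m) := by
    rw [show pc 1 nn * pc 1 nn - pc 1 m * pc 1 (nn-m)
        = pc 1 nn * (pc 1 nn - pc 1 (nn-m)) + pc 1 (nn-m) * (pc 1 nn - pc 1 m) by ring]
    apply dvd_add
    · apply Dvd.dvd.mul_left
      apply dvd_trans _ (pc_sub_dvd 1 one_ne_zero (show nn-m ≤ nn by omega))
      apply pow_dvd_pow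
      omega
    · apply Dvd.dvd.mul_left
      apply dvd_trans _ (pc_sub_dvd 1 one_ne_zero hmn)
      apply pow_dvd_pow
      omega
  have huw : (pc 1 m * pc 1 (nn - m) * pc 1 nn)
      * ((pc 1 m)⁻¹ * (pc 1 (nn-m))⁻¹ * (pc 1 nn)⁻¹) = 1 := by
    rw [show (pc 1 m * pc 1 (nn - m) * pc 1 nn)
        * ((pc 1 m)⁻¹ * (pc 1 (nn-m))⁻¹ * (pc 1 nn)⁻¹)
      = (pc 1 m * (pc 1 m)⁻¹) * ((pc 1 (nn-m)) * (pc 1 (nn-m))⁻¹)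
        * ((pc 1 nn) * (pc 1 nn)⁻¹) by ring,
      pc_mul_inv 1 m one_ne_zero, pc_mul_inv 1 (nn-m) one_ne_zero,
      pc_mul_inv 1 nn one_ne_zero]
    norm_num
  have hA : gb 1 nn m - (pc 1 nn)⁻¹
      = ((gb 1 nn m - (pc 1 nn)⁻¹) * (pc 1 m * pc 1 (nn - m) * pc 1 nn))
        * ((pc 1 m)⁻¹ * (pc 1 (nn-m))⁻¹ * (pc 1 nn)⁻¹) := by
    rw [mul_assoc, huw, mul_one]
  rw [hA, hkey]
  exact Dvd.dvd.mul_right hdvd _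

lemma gb_inv_dvd (nn m : ℕ) (hm : m ≤ nn) :
    (X:PS)^(min m (nn-m) + 1) ∣ gb 1 nn m - (pc 1 nn)⁻¹ := by
  rcases le_total (2*m) nn with hc | hc
  · rw [Nat.min_eq_left (by omega)]
    exact gb_inv_small_dvd nn m hc
  · rw [Nat.min_eq_right (by omega), ← gb_symm 1 nn m hm]
    exact gb_inv_small_dvd nn (nn - m) (by omega)

lemma RHSA_dvd (a : ℕ) (ha : a ≤ 1) (n : ℕ) :
    (X:PS)^(n+1) ∣ RHSA a n - Sseq a (n+1) := by
  have hconv : RHSA a n = ∑ k ∈ Finset.range (n+1),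
      (X:PS)^(((k:ℤ)*((k:ℤ)+(a:ℤ))).toNat) * Bz 1 n (k:ℤ) := by
    rw [RHSA]
    apply sum_IZ_to_range _ _ _ (by omega)
    intro j hj
    have h1 : Bz 1 n j ≠ 0 := fun h => hj (by rw [h]; ring)
    exact Bz_bounds h1
  rw [hconv, Sseq, ← Finset.sum_sub_distrib]
  apply Finset.dvd_sum
  intro k hk
  rw [Finset.mem_range] at hk
  have hexp : (((k:ℤ)*((k:ℤ)+(a:ℤ))).toNat) = k^2+a*k := by
    have h1 : (k:ℤ)*((k:ℤ)+(a:ℤ)) = ((k^2+a*k : ℕ) : ℤ) := by push_cast; ring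
    rw [h1, Int.toNat_natCast]
  have hBz : Bz 1 n (k:ℤ) = gb 1 n k := by
    rw [Bz_of_mem (by positivity) (by exact_mod_cast Nat.lt_succ_iff.mp hk), Int.toNat_natCast]
  rw [hexp, hBz]
  have hd : (X:PS)^(n-k+1) ∣ gb 1 n k - (qPoch k)⁻¹ := by
    rw [← pc_one_eq]
    have heq : gb 1 n k - (pc 1 k)⁻¹
        = (pc 1 k)⁻¹ * (pc 1 n * (pc 1 (n-k))⁻¹ - 1) := by
      rw [gb]
      ring
    rw [heq]
    apply Dvd.dvd.mul_left
    have := pc_ratio_dvd 1 one_ne_zero (show n-k ≤ n by omega)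
    apply dvd_trans _ this
    apply pow_dvd_pow
    omega
  rw [show (X:PS)^(k^2+a*k) * gb 1 n k - (X:PS)^(k^2+a*k) * (qPoch k)⁻¹
    = (X:PS)^(k^2+a*k) * (gb 1 n k - (qPoch k)⁻¹) by ring]
  have : (X:PS)^((k^2+a*k) + (n-k+1)) ∣ (X:PS)^(k^2+a*k) * (gb 1 n k - (qPoch k)⁻¹) := by
    rw [pow_add]
    exact mul_dvd_mul_left _ hd
  apply dvd_trans _ this
  apply pow_dvd_pow
  have h1 : k ≤ k^2 := Nat.le_self_pow (by norm_num) k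
  omega

lemma LHSA_dvd (a : ℕ) (ha : a ≤ 1) (n : ℕ) (hn : 6 ≤ n) :
    (X:PS)^n ∣ LHSA a n - Tseq a (n+a) * Useq (2*n+a) := by
  rw [LHSA, Tseq, Finset.sum_mul, ← Finset.sum_sub_distrib]
  apply Finset.dvd_sum
  intro j hj
  rw [mem_IZ] at hj
  rw [show sg j * (X:PS)^(E5 a j) * Bz 1 (2*n+a) ((n:ℤ)+(a:ℤ)+2*j)
      - sg j * (X:PS)^(E5 a j) * Useq (2*n+a)
    = sg j * ((X:PS)^(E5 a j) * (Bz 1 (2*n+a) ((n:ℤ)+(a:ℤ)+2*j) - Useq (2*n+a))) by ring]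
  apply Dvd.dvd.mul_left
  have habs := e5_natAbs_le a ha j
  have hsq := e5_sq_le a ha j
  rcases Classical.em (0 ≤ (n:ℤ)+(a:ℤ)+2*j ∧ (n:ℤ)+(a:ℤ)+2*j ≤ ((2*n+a:ℕ):ℤ)) with hb | hb
  · -- in range
    rw [Bz_of_mem hb.1 hb.2]
    set m0 := ((n:ℤ)+(a:ℤ)+2*j).toNat with hm0def
    have hm0 : m0 ≤ 2*n+a := by omega
    have hd : (X:PS)^(min m0 (2*n+a-m0) + 1)
        ∣ gb 1 (2*n+a) m0 - Useq (2*n+a) := by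
      rw [Useq, ← pc_one_eq]
      exact gb_inv_dvd (2*n+a) m0 hm0
    have : (X:PS)^(E5 a j + (min m0 (2*n+a-m0) + 1))
        ∣ (X:PS)^(E5 a j) * (gb 1 (2*n+a) m0 - Useq (2*n+a)) := by
      rw [pow_add]
      exact mul_dvd_mul_left _ hd
    apply dvd_trans _ this
    apply pow_dvd_pow
    omega
  · -- out of range : Bz = 0
    rw [Bz_eq_zero hb, zero_sub, mul_neg, dvd_neg]
    apply Dvd.dvd.mul_right
    apply pow_dvd_pow
    have hA : 2 * j.natAbs ≥ n + 1 := by omega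
    have h3A : 3 * j.natAbs ≤ j.natAbs * j.natAbs :=
      Nat.mul_le_mul_right _ (by omega)
    generalize hg : j.natAbs * j.natAbs = B at hsq h3A
    omega

lemma tendsto_addconst (c : ℕ) : Filter.Tendsto (fun n : ℕ => n + c) Filter.atTop Filter.atTop :=
  Filter.tendsto_atTop_mono (fun n => by simp only [id_eq]; omega) Filter.tendsto_id

lemma S_eq_TU (a : ℕ) (ha : a ≤ 1) :
    plim (Sseq a) = plim (Tseq a) * plim Useq := by
  have h1 : PSTendstoQ' (RHSA a) (plim (Sseq a)) := by
    apply tendsto_congr _ (tendsto_comp (tendsto_plim (cauchy_S a)) (fun n => n+1)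
      (tendsto_addconst 1))
    filter_upwards with n
    exact dvd_trans (pow_dvd_pow _ (Nat.le_succ n)) (RHSA_dvd a ha n)
  have h2 : PSTendstoQ' (RHSA a) (plim (Tseq a) * plim Useq) := by
    have heq : RHSA a = LHSA a := by
      funext n
      exact (outerA a n ha).symm
    rw [heq]
    apply tendsto_congr _
      (tendsto_mul
        (tendsto_comp (tendsto_plim (cauchy_T a ha)) (fun n => n+a) (tendsto_addconst a))
        (tendsto_comp (tendsto_plim cauchy_U) (fun n => 2*n+a)
          (Filter.tendsto_atTop_mono (fun n => by simp only [id_eq]; omega)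
            Filter.tendsto_id)))
    filter_upwards [Filter.eventually_ge_atTop 6] with n hn
    exact LHSA_dvd a ha n hn
  exact tendsto_unique h1 h2

lemma UF_eq_one : plim Useq * plim (fun N => qPoch N) = 1 := by
  apply tendsto_unique (F := fun N => Useq N * qPoch N)
  · exact tendsto_mul (tendsto_plim cauchy_U) (tendsto_plim cauchy_F)
  · have heq : (fun N => Useq N * qPoch N) = fun _ => (1:PS) := by
      funext N
      rw [Useq, mul_comm]
      exact qPoch_mul_inv N
    rw [heq]
    exact tendsto_const 1

lemma constCoeff_Cseq (a : ℕ) (ha : a ≤ 1) (N : ℕ) : constantCoeff (Cseq a N) = 1 := by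
  rw [Cseq, map_prod]
  apply Finset.prod_eq_one
  intro n _
  rw [map_mul, map_mul, map_sub, map_sub, map_sub, map_one, map_pow, map_pow, map_pow,
    constantCoeff_X]
  rw [zero_pow (by omega), zero_pow (by omega), zero_pow (by omega)]
  norm_num

lemma C_ne_zero (a : ℕ) (ha : a ≤ 1) : plim (Cseq a) ≠ 0 := by
  intro h
  have h0 : (coeff 0) (plim (Cseq a)) = 1 := by
    rw [plim, coeff_mk, coeff_zero_eq_constantCoeff]
    exact constCoeff_Cseq a ha 1
  rw [h, map_zero] at h0
  exact one_ne_zero h0.symm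

/- ### final assembly -/

lemma main (a : ℕ) (ha : a ≤ 1) :
    ∃ S P : PS, PSTendstoQ' (Sseq a) S ∧ PSTendstoQ' (Pseq a) P ∧ S * P = 1 := by
  refine ⟨plim (Sseq a), plim (Pseq a), tendsto_plim (cauchy_S a),
    tendsto_plim (cauchy_P a ha), ?_⟩
  set S := plim (Sseq a)
  set P := plim (Pseq a)
  set C := plim (Cseq a)
  set T := plim (Tseq a)
  set U := plim Useq
  set F := plim (fun N => qPoch N)
  have hSTU : S = T * U := S_eq_TU a ha
  have hUF : U * F = 1 := UF_eq_one
  have hPCF : P * C = F := PCF a ha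
  have hCT : C = T := C_eq_T a ha
  have key : (S * P) * C = 1 * C := by
    calc (S * P) * C = S * (P * C) := by ring
      _ = S * F := by rw [hPCF]
      _ = (T * U) * F := by rw [hSTU]
      _ = T * (U * F) := by ring
      _ = T := by rw [hUF, mul_one]
      _ = C := hCT.symm
      _ = 1 * C := (one_mul C).symm
  exact mul_right_cancel₀ (C_ne_zero a ha) key
end RR

/-- The Rogers–Ramanujan identities (`a = 0, 1`):
`∑_{n≥0} q^{n²+an}/(q;q)_n = ∏_{n≥0} 1/((1 − q^{5n+a+1})(1 − q^{5n+4−a}))`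
in `ℚ⟦q⟧`; equivalently, the sum times `∏_{n≥0} (1 − q^{5n+a+1})(1 − q^{5n+4−a})`
equals `1`, the infinite sum and product being `q`-adic limits of the finite
partial sums and products. -/
theorem rogers_ramanujan (a : ℕ) (ha : a = 0 ∨ a = 1) :
    ∃ S P : PowerSeries ℚ,
      PSTendstoQ (fun N => ∑ n ∈ Finset.range N,
        (X : PowerSeries ℚ) ^ (n ^ 2 + a * n) * (qPoch n)⁻¹) S ∧
      PSTendstoQ (fun N => ∏ n ∈ Finset.range N,
        ((1 - (X : PowerSeries ℚ) ^ (5 * n + a + 1)) *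
          (1 - (X : PowerSeries ℚ) ^ (5 * n + 4 - a)))) P ∧
      S * P = 1 := by
  have ha' : a ≤ 1 := by omega
  obtain ⟨S, P, hS, hP, hSP⟩ := RR.main a ha'
  exact ⟨S, P, hS, hP, hSP⟩
end
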